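/- arXiv:2404.10184 — 4 statements merged into one kernel-verified Lean document; each statement's English description precedes it below -/
import Mathlib

section
/- Let G be a group and let Y be a G-tree that is non-trivial (no vertex of Y is fixed by every element of G), locally finite, and all of whose vertex stabilizers are finitely generated. Let X be a cocompact G-tree and let f be a G-equivariant simplicial map from the vertices of X onto the vertices of Y (f is surjective, and adjacent vertices of X are sent to equal or adjacent vertices of Y). Then X and Y have the same elliptic subgroups: a subgroup H ≤ G fixes a vertex of X if and only if it fixes a vertex of Y (i.e., X and Y lie in the same deformation space). -/
set_option linter.unusedSectionVars false
set_option maxHeartbeats 1000000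

/-- A `G`-tree: a simple graph `T` on vertex set `V` that is a tree (connected and acyclic),
together with an action of `G` on `V` by automorphisms of `T` (adjacency is preserved)
and without inversions. -/
structure IsGTree (G : Type*) [Group G] {V : Type*} [MulAction G V] (T : SimpleGraph V) :
    Prop where
  isTree : T.IsTree
  adj_smul : ∀ (g : G) (u v : V), T.Adj u v → T.Adj (g • u) (g • v)
  no_inversions : ∀ (g : G) (u v : V), T.Adj u v → ¬(g • u = v ∧ g • v = u)

namespace DefSp

open SimpleGraph

variable {V : Type*} {T : SimpleGraph V}

/-- `m` lies between `a` and `b` (on the geodesic). -/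
def Btw (T : SimpleGraph V) (a m b : V) : Prop :=
  T.dist a m + T.dist m b = T.dist a b

/-- Convexity of a set of vertices. -/
def Conv (T : SimpleGraph V) (S : Set V) : Prop :=
  ∀ ⦃a⦄, a ∈ S → ∀ ⦃b⦄, b ∈ S → ∀ ⦃m⦄, Btw T a m b → m ∈ S

lemma btw_self_left (a b : V) : Btw T a a b := by
  simp [Btw, SimpleGraph.dist_self]

lemma btw_comm {a m b : V} (h : Btw T a m b) : Btw T b m a := by
  unfold Btw at *
  rw [SimpleGraph.dist_comm (u := b) (v := m), SimpleGraph.dist_comm (u := m) (v := a),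
    SimpleGraph.dist_comm (u := b) (v := a)]
  omega

section Tree

variable (hT : T.IsTree)
include hT

lemma tri (a b c : V) : T.dist a c ≤ T.dist a b + T.dist b c :=
  hT.isConnected.dist_triangle

lemma dist_zero {a b : V} (h : T.dist a b = 0) : a = b :=
  (hT.isConnected.dist_eq_zero_iff).mp h

lemma dist_adj {a b : V} (h : T.Adj a b) : T.dist a b = 1 :=
  (dist_eq_one_iff_adj (G := T)).mpr h

lemma adj_of_dist_one {a b : V} (h : T.dist a b = 1) : T.Adj a b :=
  (dist_eq_one_iff_adj (G := T)).mp h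

lemma path_len {a b : V} (p : T.Walk a b) (hp : p.IsPath) : p.length = T.dist a b := by
  obtain ⟨q, hq, hql⟩ := hT.isConnected.exists_path_of_dist a b
  have : (⟨p, hp⟩ : T.Path a b) = ⟨q, hq⟩ := hT.IsAcyclic.path_unique _ _
  have := congrArg (fun r : T.Path a b => r.1.length) this
  simpa [hql] using this

lemma dist_start_getVert {a b : V} (p : T.Walk a b) : ∀ i : ℕ, T.dist a (p.getVert i) ≤ i := by
  induction p with
  | nil => intro i; simp [SimpleGraph.Walk.getVert, SimpleGraph.dist_self]
  | @cons u c d h q ih =>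
    intro i
    cases i with
    | zero => simp [SimpleGraph.Walk.getVert, SimpleGraph.dist_self]
    | succ n =>
      have h1 : T.dist u c = 1 := dist_adj hT h
      have h2 := SimpleGraph.Walk.getVert_cons_succ q h (n := n)
      have h3 : T.dist u ((q.cons h).getVert (n+1)) ≤ T.dist u c + T.dist c (q.getVert n) := by
        rw [h2]; exact tri hT _ _ _
      have := ih n
      omega

lemma dist_getVert_getVert_le {a b : V} (p : T.Walk a b) :
    ∀ i j : ℕ, i ≤ j → T.dist (p.getVert i) (p.getVert j) ≤ j - i := by
  induction p with
  | nil => intro i j _; simp [SimpleGraph.Walk.getVert, SimpleGraph.dist_self]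
  | @cons u c d h q ih =>
    intro i j hij
    cases i with
    | zero =>
      simp only [SimpleGraph.Walk.getVert_zero]
      have := dist_start_getVert hT (q.cons h) j
      omega
    | succ n =>
      cases j with
      | zero => omega
      | succ m =>
        rw [SimpleGraph.Walk.getVert_cons_succ, SimpleGraph.Walk.getVert_cons_succ]
        have := ih n m (by omega)
        omega

/-- On a path in a tree, the vertex at index `i` is at distance `i` from the start. -/
lemma path_getVert_dist {a b : V} (p : T.Walk a b) (hp : p.IsPath) {i : ℕ}
    (hi : i ≤ p.length) : T.dist a (p.getVert i) = i ∧ T.dist (p.getVert i) b = p.length - i := by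
  have h1 : T.dist a (p.getVert i) ≤ i := dist_start_getVert hT p i
  have h2 : T.dist (p.getVert i) b ≤ p.length - i := by
    have := dist_getVert_getVert_le hT p i p.length hi
    rwa [SimpleGraph.Walk.getVert_length] at this
  have h3 : p.length = T.dist a b := path_len hT p hp
  have h4 : T.dist a b ≤ T.dist a (p.getVert i) + T.dist (p.getVert i) b := tri hT _ _ _
  omega

lemma path_getVert_pair_dist {a b : V} (p : T.Walk a b) (hp : p.IsPath) {i j : ℕ}
    (hij : i ≤ j) (hj : j ≤ p.length) : T.dist (p.getVert i) (p.getVert j) = j - i := by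
  have h1 := dist_getVert_getVert_le hT p i j hij
  have h2 := (path_getVert_dist hT p hp (le_trans hij hj)).1
  have h3 := (path_getVert_dist hT p hp hj).1
  have h4 : T.dist a (p.getVert j) ≤ T.dist a (p.getVert i) +
      T.dist (p.getVert i) (p.getVert j) := tri hT _ _ _
  omega

lemma path_btw_getVert {a b : V} (p : T.Walk a b) (hp : p.IsPath) {i : ℕ}
    (hi : i ≤ p.length) : Btw T a (p.getVert i) b := by
  obtain ⟨h1, h2⟩ := path_getVert_dist hT p hp hi
  have h3 : p.length = T.dist a b := path_len hT p hp
  unfold Btw; omega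

/-- A vertex on a path is between the endpoints, and is the `getVert` at its distance. -/
lemma mem_support_btw {a b m : V} (p : T.Walk a b) (hp : p.IsPath) (hm : m ∈ p.support) :
    Btw T a m b ∧ p.getVert (T.dist a m) = m := by
  classical
  have hsplit := p.take_spec hm
  have hlen : (p.takeUntil m hm).length + (p.dropUntil m hm).length = p.length := by
    have := congrArg SimpleGraph.Walk.length hsplit
    rwa [SimpleGraph.Walk.length_append] at this
  have hp1 : (p.takeUntil m hm).IsPath := hp.takeUntil hm
  have hp2 : (p.dropUntil m hm).IsPath := hp.dropUntil hm
  have hl1 : (p.takeUntil m hm).length = T.dist a m := path_len hT _ hp1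
  have hl2 : (p.dropUntil m hm).length = T.dist m b := path_len hT _ hp2
  have hl : p.length = T.dist a b := path_len hT p hp
  constructor
  · unfold Btw; omega
  · have h5 : p.getVert (T.dist a m) = ((p.takeUntil m hm).append (p.dropUntil m hm)).getVert
        (T.dist a m) := by rw [hsplit]
    rw [h5, SimpleGraph.Walk.getVert_append]
    simp [hl1, SimpleGraph.Walk.getVert_zero]

omit hT in
/-- Appending two paths meeting only at the junction gives a path. -/
lemma append_isPath {a b c : V} {p : T.Walk a b} {q : T.Walk b c} (hp : p.IsPath)
    (hq : q.IsPath) (hmeet : ∀ x, x ∈ p.support → x ∈ q.support → x = b) :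
    (p.append q).IsPath := by
  rw [SimpleGraph.Walk.isPath_def, SimpleGraph.Walk.support_append]
  apply List.Nodup.append hp.support_nodup
  · have h1 : q.support = b :: q.support.tail := q.support_eq_cons
    have hnd := hq.support_nodup
    rw [h1] at hnd
    exact (List.nodup_cons.mp hnd).2
  · intro x hx hx'
    have hxq : x ∈ q.support := List.tail_subset _ hx'
    have hxb : x = b := hmeet x hx hxq
    subst hxb
    have h1 : q.support = x :: q.support.tail := q.support_eq_cons
    have hnd := hq.support_nodup
    rw [h1] at hnd
    exact (List.nodup_cons.mp hnd).1 hx'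

/-- If `m` is between `a` and `b` then it lies on any path from `a` to `b`. -/
lemma btw_mem_support {a b m : V} (hbtw : Btw T a m b) (p : T.Walk a b) (hp : p.IsPath) :
    m ∈ p.support := by
  obtain ⟨pa, hpa, hpal⟩ := hT.isConnected.exists_path_of_dist a m
  obtain ⟨pb, hpb, hpbl⟩ := hT.isConnected.exists_path_of_dist m b
  have happ : (pa.append pb).IsPath := by
    apply append_isPath hpa hpb
    intro x hxa hxb
    have h1 := (mem_support_btw hT pa hpa hxa).1
    have h2 := (mem_support_btw hT pb hpb hxb).1
    unfold Btw at h1 h2 hbtw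
    have h3 : T.dist a b ≤ T.dist a x + T.dist x b := tri hT _ _ _
    have h4 : T.dist x m = 0 := by
      have h5 : T.dist a x + T.dist x b ≤ T.dist a x + (T.dist x m + T.dist m b) := by
        have := tri hT x m b; omega
      have h6 : T.dist m x = T.dist x m := SimpleGraph.dist_comm (u := m)
      omega
    exact dist_zero hT h4
  have huniq : (⟨p, hp⟩ : T.Path a b) = ⟨pa.append pb, happ⟩ := hT.IsAcyclic.path_unique _ _
  have : m ∈ (pa.append pb).support := by
    rw [SimpleGraph.Walk.mem_support_append_iff]
    left; exact pa.end_mem_support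
  have hsup := congrArg (fun r : T.Path a b => r.1.support) huniq
  simp only at hsup
  rw [hsup]; exact this

/-- Two points between `a` and `b` at the same distance from `a` agree. -/
lemma btw_unique {a b m m' : V} (h1 : Btw T a m b) (h2 : Btw T a m' b)
    (hd : T.dist a m = T.dist a m') : m = m' := by
  obtain ⟨p, hp, hpl⟩ := hT.isConnected.exists_path_of_dist a b
  have hm := (mem_support_btw hT p hp (btw_mem_support hT h1 p hp)).2
  have hm' := (mem_support_btw hT p hp (btw_mem_support hT h2 p hp)).2
  rw [← hm, ← hm', hd]

/-- Distance between two points lying between `a` and `b`. -/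
lemma btw_pair_dist {a b v v' : V} (h1 : Btw T a v b) (h2 : Btw T a v' b)
    (hle : T.dist a v ≤ T.dist a v') : T.dist v v' = T.dist a v' - T.dist a v := by
  obtain ⟨p, hp, hpl⟩ := hT.isConnected.exists_path_of_dist a b
  set i := T.dist a v with hi
  set j := T.dist a v' with hj
  have hv : p.getVert i = v := (mem_support_btw hT p hp (btw_mem_support hT h1 p hp)).2
  have hv' : p.getVert j = v' := (mem_support_btw hT p hp (btw_mem_support hT h2 p hp)).2
  have hjlen : j ≤ p.length := by
    unfold Btw at h2; omega
  rw [← hv, ← hv']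
  exact path_getVert_pair_dist hT p hp hle hjlen

lemma btw_trans {a b x m : V} (h1 : Btw T a x m) (h2 : Btw T a m b) : Btw T a x b := by
  unfold Btw at *
  have h3 : T.dist a b ≤ T.dist a x + T.dist x b := tri hT _ _ _
  have h4 : T.dist x b ≤ T.dist x m + T.dist m b := tri hT _ _ _
  omega

lemma btw_trans' {a b x m : V} (h1 : Btw T a x m) (h2 : Btw T a m b) : Btw T x m b := by
  have h3 := btw_trans hT h1 h2
  unfold Btw at *
  have h4 : T.dist x b ≤ T.dist x m + T.dist m b := tri hT _ _ _
  omega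

/-- Median: for any three points there is a point between each pair (in suitable order). -/
lemma exists_median (a b c : V) :
    ∃ m, Btw T a m b ∧ Btw T c m a ∧ Btw T c m b := by
  obtain ⟨p, hp, hpl⟩ := hT.isConnected.exists_path_of_dist a b
  have hne : {n : ℕ | ∃ x ∈ p.support, T.dist c x = n}.Nonempty :=
    ⟨T.dist c a, a, p.start_mem_support, rfl⟩
  obtain ⟨m, hmmem, hmval⟩ : ∃ m ∈ p.support,
      T.dist c m = sInf {n : ℕ | ∃ x ∈ p.support, T.dist c x = n} := by
    have := Nat.sInf_mem hne
    obtain ⟨x, hx, hxv⟩ := this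
    exact ⟨x, hx, hxv⟩
  have hmin : ∀ x ∈ p.support, T.dist c m ≤ T.dist c x := by
    intro x hx
    rw [hmval]
    exact Nat.sInf_le ⟨x, hx, rfl⟩
  have hbtw : Btw T a m b := (mem_support_btw hT p hp hmmem).1
  refine ⟨m, hbtw, ?_, ?_⟩
  · -- Btw c m a
    obtain ⟨q, hq, hql⟩ := hT.isConnected.exists_path_of_dist c m
    obtain ⟨r, hr, hrl⟩ := hT.isConnected.exists_path_of_dist m a
    have hrsub : ∀ x ∈ r.support, x ∈ p.support := by
      intro x hx
      have h1 := (mem_support_btw hT r hr hx).1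
      have h2 : Btw T a x m := btw_comm h1
      exact btw_mem_support hT (btw_trans hT h2 hbtw) p hp
    have happ : (q.append r).IsPath := by
      apply append_isPath hq hr
      intro x hxq hxr
      have h1 := (mem_support_btw hT q hq hxq).1
      have h2 := hmin x (hrsub x hxr)
      unfold Btw at h1
      have : T.dist x m = 0 := by omega
      exact dist_zero hT this
    have := path_len hT _ happ
    rw [SimpleGraph.Walk.length_append, hql, hrl] at this
    unfold Btw
    exact this
  · -- Btw c m b
    obtain ⟨q, hq, hql⟩ := hT.isConnected.exists_path_of_dist c m
    obtain ⟨r, hr, hrl⟩ := hT.isConnected.exists_path_of_dist m b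
    have hrsub : ∀ x ∈ r.support, x ∈ p.support := by
      intro x hx
      have h1 := (mem_support_btw hT r hr hx).1
      have h2 : Btw T b x m := btw_comm h1
      exact btw_mem_support hT (btw_comm (btw_trans hT h2 (btw_comm hbtw))) p hp
    have happ : (q.append r).IsPath := by
      apply append_isPath hq hr
      intro x hxq hxr
      have h1 := (mem_support_btw hT q hq hxq).1
      have h2 := hmin x (hrsub x hxr)
      unfold Btw at h1
      have : T.dist x m = 0 := by omega
      exact dist_zero hT this
    have := path_len hT _ happ
    rw [SimpleGraph.Walk.length_append, hql, hrl] at this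
    unfold Btw
    exact this

/-- Gate property: projection to a convex set. -/
lemma exists_gate {S : Set V} (hconv : Conv T S) (hne : S.Nonempty) (u : V) :
    ∃ r ∈ S, ∀ x ∈ S, T.dist u x = T.dist u r + T.dist r x := by
  have hvne : {n : ℕ | ∃ x ∈ S, T.dist u x = n}.Nonempty := by
    obtain ⟨x, hx⟩ := hne; exact ⟨T.dist u x, x, hx, rfl⟩
  obtain ⟨r, hrS, hrval⟩ : ∃ r ∈ S, T.dist u r = sInf {n : ℕ | ∃ x ∈ S, T.dist u x = n} := by
    have := Nat.sInf_mem hvne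
    obtain ⟨x, hx, hxv⟩ := this
    exact ⟨x, hx, hxv⟩
  have hmin : ∀ x ∈ S, T.dist u r ≤ T.dist u x := by
    intro x hx; rw [hrval]; exact Nat.sInf_le ⟨x, hx, rfl⟩
  refine ⟨r, hrS, fun x hx => ?_⟩
  obtain ⟨m, h1, h2, h3⟩ := exists_median hT r x u
  -- h1 : Btw r m x, h2 : Btw u m r, h3 : Btw u m x
  have hmS : m ∈ S := hconv hrS hx h1
  have h4 := hmin m hmS
  unfold Btw at h1 h2 h3
  have h5 : T.dist m r = 0 := by omega
  have h6 : m = r := dist_zero hT h5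
  subst h6
  unfold Btw at *
  omega

end Tree

section Action

variable {G : Type*} [Group G] [MulAction G V] (hGT : IsGTree G T)
include hGT

/-- The action of `g` as a graph homomorphism. -/
def actHom (g : G) : T →g T :=
  ⟨fun v => g • v, fun {u v} h => hGT.adj_smul g u v h⟩

lemma dist_smul_le (g : G) (u v : V) : T.dist (g • u) (g • v) ≤ T.dist u v := by
  obtain ⟨p, hp, hpl⟩ := hGT.isTree.isConnected.exists_path_of_dist u v
  have := SimpleGraph.dist_le (p.map (actHom hGT g))
  rwa [SimpleGraph.Walk.length_map, hpl] at this

lemma dist_smul (g : G) (u v : V) : T.dist (g • u) (g • v) = T.dist u v := by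
  refine le_antisymm (dist_smul_le hGT g u v) ?_
  have := dist_smul_le hGT g⁻¹ (g • u) (g • v)
  simpa [inv_smul_smul] using this

lemma btw_smul {g : G} {a m b : V} (h : Btw T a m b) : Btw T (g • a) (g • m) (g • b) := by
  unfold Btw at *
  rw [dist_smul hGT, dist_smul hGT, dist_smul hGT]
  exact h

/-- The center lemma: a group acting with a bounded invariant set fixes a vertex. -/
lemma exists_fixed_of_bounded (S : Set V) (hne : S.Nonempty) (D0 : ℕ)
    (hbdd : ∀ a ∈ S, ∀ b ∈ S, T.dist a b ≤ D0)
    (hinv : ∀ (g : G), ∀ x ∈ S, g • x ∈ S) :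
    ∃ v : V, ∀ g : G, g • v = v := by
  have hT := hGT.isTree
  set Dset : Set ℕ := {n | ∃ a ∈ S, ∃ b ∈ S, T.dist a b = n} with hDset
  have hDne : Dset.Nonempty := by
    obtain ⟨a, ha⟩ := hne
    exact ⟨T.dist a a, a, ha, a, ha, rfl⟩
  have hDbdd : BddAbove Dset := by
    refine ⟨D0, fun n hn => ?_⟩
    obtain ⟨a, ha, b, hb, hab⟩ := hn
    rw [← hab]; exact hbdd a ha b hb
  set DS := sSup Dset with hDS
  obtain ⟨a, ha, b, hb, hab⟩ : ∃ a ∈ S, ∃ b ∈ S, T.dist a b = DS := Nat.sSup_mem hDne hDbdd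
  have hle : ∀ x ∈ S, ∀ y ∈ S, T.dist x y ≤ DS := by
    intro x hx y hy
    exact le_csSup hDbdd ⟨x, hx, y, hy, rfl⟩
  rcases Nat.eq_zero_or_pos DS with h0 | hpos
  · refine ⟨a, fun g => ?_⟩
    have : T.dist a (g • a) ≤ DS := hle a ha _ (hinv g a ha)
    rw [h0] at this
    exact (dist_zero hT (Nat.le_zero.mp this)).symm
  · set R := (DS + 1) / 2 with hR
    have hR1 : R ≤ DS := by omega
    have hR2 : DS ≤ 2 * R := by omega
    have hR3 : 2 * R ≤ DS + 1 := by omega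
    obtain ⟨p, hp, hpl⟩ := hT.isConnected.exists_path_of_dist a b
    have hplen : p.length = DS := by rw [hpl, hab]
    set m := p.getVert R with hm
    have hdam : T.dist a m = R := by
      have := (path_getVert_dist hT p hp (i := R) (by omega)).1
      rwa [← hm] at this
    have hbtwm : Btw T a m b := path_btw_getVert hT p hp (by omega)
    -- every point of S is within R of m
    have hCm : ∀ u ∈ S, T.dist u m ≤ R := by
      intro u hu
      obtain ⟨m', h1, h2, h3⟩ := exists_median hT a b u
      set α := T.dist a m' with hα
      have hαDS : α ≤ DS := by unfold Btw at h1; omega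
      have hm'v : p.getVert α = m' := by
        have := mem_support_btw hT p hp (btw_mem_support hT h1 p hp)
        exact this.2
      set t := T.dist u m' with ht
      have hua : t + α = T.dist u a := by
        unfold Btw at h2
        rw [SimpleGraph.dist_comm (u := m') (v := a)] at h2
        omega
      have hub : t + (DS - α) = T.dist u b := by
        unfold Btw at h1 h3
        omega
      have huaS : T.dist u a ≤ DS := hle u hu a ha
      have hubS : T.dist u b ≤ DS := hle u hu b hb
      have htri : T.dist u m ≤ t + T.dist m' m := by
        have := tri hT u m' m; omega
      rcases le_or_gt α R with hc | hc
      · have : T.dist m' m = R - α := by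
          rw [← hm'v, hm]
          exact path_getVert_pair_dist hT p hp hc (by omega)
        omega
      · have : T.dist m' m = α - R := by
          rw [← hm'v, hm, SimpleGraph.dist_comm]
          exact path_getVert_pair_dist hT p hp (le_of_lt hc) (by omega)
        omega
    -- any center point lies on the geodesic with constrained index
    have hC_on : ∀ v : V, (∀ u ∈ S, T.dist u v ≤ R) →
        Btw T a v b ∧ T.dist a v ≤ R ∧ DS - R ≤ T.dist a v := by
      intro v hv
      obtain ⟨m', h1, h2, h3⟩ := exists_median hT a b v
      have hva : T.dist a v ≤ R := hv a ha
      have hvb : T.dist b v ≤ R := hv b hb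
      have e1 : T.dist v a = T.dist a v := SimpleGraph.dist_comm (u := v) (v := a)
      have e2 : T.dist v b = T.dist b v := SimpleGraph.dist_comm (u := v) (v := b)
      have e3 : T.dist m' a = T.dist a m' := SimpleGraph.dist_comm (u := m') (v := a)
      set t := T.dist v m' with ht
      unfold Btw at h1 h2 h3
      have ht0 : t = 0 := by omega
      have hveq : v = m' := dist_zero hT ht0
      subst hveq
      refine ⟨by unfold Btw; omega, by omega, by omega⟩
    by_cases hfix : ∀ g : G, g • m = m
    · exact ⟨m, hfix⟩
    · push_neg at hfix
      obtain ⟨g₀, hg₀⟩ := hfix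
      have hCinv : ∀ (g : G) (v : V), (∀ u ∈ S, T.dist u v ≤ R) →
          (∀ u ∈ S, T.dist u (g • v) ≤ R) := by
        intro g v hv u hu
        have : T.dist u (g • v) = T.dist (g⁻¹ • u) v := by
          rw [← dist_smul hGT g (g⁻¹ • u) v, smul_inv_smul]
        rw [this]
        exact hv _ (hinv g⁻¹ u hu)
      set m' := g₀ • m with hm'
      have hCm' : ∀ u ∈ S, T.dist u m' ≤ R := hCinv g₀ m hCm
      obtain ⟨hbtw', hle', hge'⟩ := hC_on m' hCm'
      have hdm' : T.dist a m' = R - 1 := by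
        have h1 : T.dist m m' = R - T.dist a m' ∨ T.dist m m' = T.dist a m' - R := by
          rcases le_or_gt (T.dist a m') R with hc | hc
          · left
            have := btw_pair_dist hT hbtw' hbtwm (by omega)
            rw [SimpleGraph.dist_comm (u := m') (v := m)] at this
            omega
          · right
            have := btw_pair_dist hT hbtwm hbtw' (by omega)
            omega
        have h2 : T.dist m m' ≠ 0 := by
          intro h
          exact hg₀ ((dist_zero hT h).symm)
        omega
      have hadj : T.Adj m m' := by
        apply adj_of_dist_one hT
        have := btw_pair_dist hT hbtw' hbtwm (by omega)
        rw [SimpleGraph.dist_comm (u := m') (v := m)] at this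
        omega
      -- uniqueness of points at index R and R-1
      have huniqR : ∀ v : V, Btw T a v b → T.dist a v = R → v = m :=
        fun v h1 h2 => btw_unique hT h1 hbtwm (by omega)
      have huniqR1 : ∀ v : V, Btw T a v b → T.dist a v = R - 1 → v = m' :=
        fun v h1 h2 => btw_unique hT h1 hbtw' (by omega)
      refine ⟨m, fun g => ?_⟩
      by_contra hgm
      -- then g•m = m' and g•m' = m : an inversion
      have hgmC := hCinv g m hCm
      obtain ⟨hb1, hb2, hb3⟩ := hC_on (g • m) hgmC
      have hgm' : g • m = m' := by
        apply huniqR1 _ hb1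
        have : T.dist a (g • m) ≠ R := fun h => hgm (huniqR _ hb1 h)
        omega
      have hgm'C := hCinv g m' hCm'
      obtain ⟨hc1, hc2, hc3⟩ := hC_on (g • m') hgm'C
      have hgm'm : g • m' = m := by
        apply huniqR _ hc1
        have hne' : g • m' ≠ m' := by
          intro h
          rw [← hgm'] at h
          exact hgm (smul_left_cancel g h) |>.elim
        have : T.dist a (g • m') ≠ R - 1 := fun h => hne' (huniqR1 _ hc1 h)
        omega
      exact hGT.no_inversions g m m' hadj ⟨hgm', hgm'm⟩

/-- The set of fixed points of a group element. -/
def FixSet (g : G) : Set V := {x : V | g • x = x}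

lemma fixSet_conv (g : G) : Conv T (FixSet (V := V) g) := by
  intro a ha b hb m hm
  have h1 : Btw T a (g • m) b := by
    have := btw_smul hGT (g := g) hm
    rwa [ha, hb] at this
  have h2 : T.dist a (g • m) = T.dist a m := by
    conv_lhs => rw [← ha]
    exact dist_smul hGT g a m
  exact btw_unique hGT.isTree h1 hm h2

/-- For an elliptic element, the midpoint of `[u, a•u]` is a fixed point. -/
lemma elliptic_gate {aG : G} (hell : ∃ x : V, aG • x = x) (u : V) :
    ∃ r : V, aG • r = r ∧ Btw T u r (aG • u) ∧ T.dist u (aG • u) = 2 * T.dist u r := by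
  have hT := hGT.isTree
  obtain ⟨r, hrF, hgate⟩ := exists_gate hT (fixSet_conv hGT aG) hell u
  obtain ⟨m, h1, h2, h3⟩ := exists_median hT r (aG • u) u
  -- h1 : Btw r m (aG•u), h2 : Btw u m r, h3 : Btw u m (aG•u)
  have hram : T.dist r (aG • m) = T.dist r m := by
    conv_lhs => rw [← hrF]
    exact dist_smul hGT aG r m
  have hmau : Btw T r (aG • m) (aG • u) := by
    have := btw_smul hGT (g := aG) (btw_comm h2)
    rwa [hrF] at this
  have hfixm : aG • m = m := btw_unique hT hmau h1 hram
  have hmF : m ∈ FixSet (V := V) aG := hfixm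
  have h4 := hgate m hmF
  have h5 : T.dist r m = 0 := by
    unfold Btw at h2
    have e1 : T.dist m r = T.dist r m := SimpleGraph.dist_comm (u := m) (v := r)
    omega
  have hmr : r = m := dist_zero hT h5
  rw [← hmr] at h3
  refine ⟨r, hrF, h3, ?_⟩
  have h6 : T.dist r (aG • u) = T.dist u r := by
    conv_lhs => rw [show r = aG • r from hrF.symm]
    rw [dist_smul hGT]
    exact SimpleGraph.dist_comm (u := r) (v := u)
  unfold Btw at h3
  omega

/-- Serre's lemma: if `a`, `b` and `a*b` are all elliptic, then `a`, `b` have a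
common fixed point. -/
lemma fix_inter_of_elliptic_mul {aG bG : G} (ha : ∃ x : V, aG • x = x)
    (hb : ∃ x : V, bG • x = x) (hab : ∃ x : V, (aG * bG) • x = x) :
    ∃ x : V, aG • x = x ∧ bG • x = x := by
  have hT := hGT.isTree
  obtain ⟨x₀, hx₀⟩ := hab
  have hax : aG • (bG • x₀) = x₀ := by rw [← mul_smul]; exact hx₀
  obtain ⟨rb, hrbF, hrbB, hrbd⟩ := elliptic_gate hGT hb x₀
  obtain ⟨ra, hraF, hraB, hrad⟩ := elliptic_gate hGT ha (bG • x₀)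
  rw [hax] at hraB hrad
  -- hraB : Btw (bG•x₀) ra x₀, hrad : dist (bG•x₀) x₀ = 2 * dist (bG•x₀) ra
  have e1 : T.dist (bG • x₀) x₀ = T.dist x₀ (bG • x₀) := SimpleGraph.dist_comm
  have hra' : Btw T x₀ ra (bG • x₀) := btw_comm hraB
  have hda : T.dist x₀ ra = T.dist x₀ (bG • x₀) - T.dist (bG • x₀) ra := by
    unfold Btw at hraB
    have e2 : T.dist ra x₀ = T.dist x₀ ra := SimpleGraph.dist_comm
    omega
  have hdeq : T.dist x₀ ra = T.dist x₀ rb := by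
    unfold Btw at hrbB
    omega
  have : ra = rb := btw_unique hT hra' hrbB hdeq
  subst this
  exact ⟨ra, hraF, hrbF⟩

omit hGT in
lemma conv_inter {S S' : Set V} (h : Conv T S) (h' : Conv T S') : Conv T (S ∩ S') :=
  fun _ ha _ hb _ hm => ⟨h ha.1 hb.1 hm, h' ha.2 hb.2 hm⟩

omit hGT in
/-- Helly property for three convex sets. -/
lemma helly3 (hT : T.IsTree) {S1 S2 S3 : Set V} (h1 : Conv T S1) (h2 : Conv T S2)
    (h3 : Conv T S3) {x y z : V} (hx : x ∈ S1 ∩ S2) (hy : y ∈ S1 ∩ S3) (hz : z ∈ S2 ∩ S3) :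
    ∃ m, m ∈ S1 ∧ m ∈ S2 ∧ m ∈ S3 := by
  obtain ⟨m, hm1, hm2, hm3⟩ := exists_median hT x y z
  exact ⟨m, h1 hx.1 hy.1 hm1, h2 hz.1 hx.2 hm2, h3 hz.2 hy.2 hm3⟩

omit hGT in
/-- Helly property for finitely many convex sets. -/
lemma helly_finset (hT : T.IsTree) {ι : Type*} (s : Finset ι) (C : ι → Set V)
    (hconv : ∀ i ∈ s, Conv T (C i))
    (hpair : ∀ i ∈ s, ∀ j ∈ s, (C i ∩ C j).Nonempty) (hs : s.Nonempty) :
    ∃ x, ∀ i ∈ s, x ∈ C i := by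
  classical
  induction s using Finset.induction generalizing C with
  | empty => exact absurd hs (by simp)
  | @insert a t ha ih =>
    rcases t.eq_empty_or_nonempty with rfl | htne
    · obtain ⟨x, hx, _⟩ := hpair a (by simp) a (by simp)
      exact ⟨x, by simpa using hx⟩
    · have ih' := ih (C := fun i => C i ∩ C a) ?_ ?_ htne
      · obtain ⟨x, hx⟩ := ih'
        obtain ⟨i0, hi0⟩ := htne
        refine ⟨x, ?_⟩
        intro i hi
        rcases Finset.mem_insert.mp hi with rfl | hit
        · exact (hx i0 hi0).2
        · exact (hx i hit).1
      · intro i hi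
        exact conv_inter (hconv i (Finset.mem_insert_of_mem hi)) (hconv a (Finset.mem_insert_self a t))
      · intro i hi j hj
        have hij := hpair i (Finset.mem_insert_of_mem hi) j (Finset.mem_insert_of_mem hj)
        have hia := hpair i (Finset.mem_insert_of_mem hi) a (Finset.mem_insert_self a t)
        have hja := hpair j (Finset.mem_insert_of_mem hj) a (Finset.mem_insert_self a t)
        obtain ⟨u, hu⟩ := hij
        obtain ⟨v, hv⟩ := hia
        obtain ⟨w, hw⟩ := hja
        obtain ⟨m, hm1, hm2, hm3⟩ := helly3 hT (hconv i (Finset.mem_insert_of_mem hi))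
          (hconv j (Finset.mem_insert_of_mem hj)) (hconv a (Finset.mem_insert_self a t))
          hu hv hw
        exact ⟨m, ⟨hm1, hm3⟩, ⟨hm2, hm3⟩⟩

/-- A finitely generated subgroup with no global fixed vertex contains an element
without fixed vertices. -/
lemma exists_hyperbolic (W' : Subgroup G) (hfg : W'.FG)
    (hnofix : ¬ ∃ x : V, ∀ g ∈ W', g • x = x) : ∃ h ∈ W', ∀ x : V, h • x ≠ x := by
  have hT := hGT.isTree
  have hVne : Nonempty V := hT.isConnected.nonempty
  by_contra hcon
  push_neg at hcon
  have hell : ∀ g ∈ W', ∃ x : V, g • x = x := hcon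
  obtain ⟨s, hs⟩ := hfg
  apply hnofix
  rcases s.eq_empty_or_nonempty with rfl | hsne
  · obtain ⟨x⟩ := hVne
    refine ⟨x, fun g hg => ?_⟩
    rw [← hs] at hg
    simp only [Finset.coe_empty, Subgroup.closure_empty, Subgroup.mem_bot] at hg
    rw [hg, one_smul]
  · have hmem : ∀ g ∈ s, g ∈ W' := by
      intro g hg
      rw [← hs]
      exact Subgroup.subset_closure hg
    have hpair : ∀ g ∈ s, ∀ g' ∈ s, (FixSet (V := V) g ∩ FixSet (V := V) g').Nonempty := by
      intro g hg g' hg'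
      obtain ⟨x, hx1, hx2⟩ := fix_inter_of_elliptic_mul hGT (hell g (hmem g hg))
        (hell g' (hmem g' hg')) (hell _ (mul_mem (hmem g hg) (hmem g' hg')))
      exact ⟨x, hx1, hx2⟩
    obtain ⟨x, hx⟩ := helly_finset hT s (fun g => FixSet (V := V) g)
      (fun g _ => fixSet_conv hGT g) hpair hsne
    refine ⟨x, fun g hg => ?_⟩
    rw [← hs] at hg
    induction hg using Subgroup.closure_induction with
    | mem y hy => exact hx y hy
    | one => rw [one_smul]
    | mul y z hy hz hy' hz' => rw [mul_smul, hz', hy']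
    | inv y hy hy' =>
      conv_lhs => rw [← hy']
      rw [inv_smul_smul]

/-- Axis theorem: if `h` has no fixed vertex, there is a vertex `x₀` (on the axis of `h`)
belonging to every nonempty convex set invariant under a positive power of `h`. -/
theorem axis_main (h : G) (hyp : ∀ x : V, h • x ≠ x) :
    ∃ x₀ : V, ∀ (k : ℕ), 1 ≤ k → ∀ W : Set V, Conv T W →
      (∀ x ∈ W, (h ^ k : G) • x ∈ W) → (∀ x ∈ W, (h ^ k : G)⁻¹ • x ∈ W) →
      ∀ z ∈ W, x₀ ∈ W := by
  classical
  have hT := hGT.isTree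
  have hVne : Nonempty V := hT.isConnected.nonempty
  set Dsp : V → ℕ := fun x => T.dist x (h • x) with hDsp
  have hDne : (Set.range Dsp).Nonempty := ⟨Dsp (Classical.arbitrary V), _, rfl⟩
  set L : ℕ := sInf (Set.range Dsp) with hL
  obtain ⟨x₀, hx₀⟩ : ∃ x₀, Dsp x₀ = L := Nat.sInf_mem hDne
  have hmin : ∀ z : V, L ≤ Dsp z := fun z => Nat.sInf_le ⟨z, rfl⟩
  have hLpos : 1 ≤ L := by
    by_contra hc
    have : Dsp x₀ = 0 := by omega
    exact hyp x₀ (dist_zero hT this).symm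
  have hLne : (L : ℤ) ≠ 0 := by
    have := hLpos; omega
  have hLposZ : (0 : ℤ) < L := by exact_mod_cast hLpos
  obtain ⟨P, hP, hPl⟩ := hT.isConnected.exists_path_of_dist x₀ (h • x₀)
  have hPlen : P.length = L := by rw [hPl]; exact hx₀
  have hdX : T.dist x₀ (h • x₀) = L := by rw [← hPl]; exact hPlen
  set c : ℤ → V := fun n => (h ^ (n / (L : ℤ))) • P.getVert (n % (L : ℤ)).toNat with hc
  -- block formula
  have hc_block : ∀ (q : ℤ) (i : ℕ), i ≤ L → c (q * L + i) = (h ^ q) • P.getVert i := by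
    intro q i hi
    rcases lt_or_eq_of_le hi with hilt | hieq
    · have h1 : (q * L + i) / (L : ℤ) = q := by
        rw [add_comm]
        rw [Int.add_mul_ediv_right _ _ hLne]
        rw [Int.ediv_eq_zero_of_lt (by positivity) (by exact_mod_cast hilt)]
        ring
      have h2 : (q * L + i) % (L : ℤ) = i := by
        rw [add_comm, Int.add_mul_emod_self_right]
        exact Int.emod_eq_of_lt (by positivity) (by exact_mod_cast hilt)
      simp only [hc, h1, h2, Int.toNat_natCast]
    · have h0 : (q * L + (i : ℤ)) = 0 + (q + 1) * L := by rw [hieq]; push_cast; ring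
      have h1 : (q * L + (i : ℤ)) / (L : ℤ) = q + 1 := by
        rw [h0, Int.add_mul_ediv_right _ _ hLne, Int.zero_ediv, zero_add]
      have h2 : (q * L + (i : ℤ)) % (L : ℤ) = 0 := by
        rw [h0, Int.add_mul_emod_self_right, Int.zero_emod]
      simp only [hc, h1, h2, Int.toNat_zero, SimpleGraph.Walk.getVert_zero]
      have h3 : P.getVert i = h • x₀ := by rw [hieq, ← hPlen]; exact P.getVert_length
      rw [h3, zpow_add_one, mul_smul]
  have hc0 : c 0 = x₀ := by
    have := hc_block 0 0 (by omega)
    simpa [SimpleGraph.Walk.getVert_zero] using this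
  -- shift formula
  have hc_shift : ∀ (n q : ℤ), c (n + q * L) = (h ^ q) • c n := by
    intro n q
    have h1 : (n + q * L) / (L : ℤ) = n / L + q := Int.add_mul_ediv_right n q hLne
    have h2 : (n + q * L) % (L : ℤ) = n % L := by rw [Int.add_mul_emod_self_right]
    simp only [hc, h1, h2]
    rw [← mul_smul, ← zpow_add, add_comm q (n / (L : ℤ))]
  -- consecutive points are at distance ≤ 1
  have hc_step : ∀ n : ℤ, T.dist (c n) (c (n + 1)) ≤ 1 := by
    intro n
    set q := n / (L : ℤ) with hq
    set i : ℕ := (n % (L : ℤ)).toNat with hi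
    have hin : (i : ℤ) = n % L := Int.toNat_of_nonneg (Int.emod_nonneg n hLne)
    have hiL : i < L := by
      have e2 := Int.emod_lt_of_pos n hLposZ
      rw [← hin] at e2
      omega
    have hn : n = q * L + i := by
      have e0 := Int.mul_ediv_add_emod n (L : ℤ)
      rw [← hq] at e0
      rw [← hin] at e0
      have e1 : q * (L : ℤ) = L * q := mul_comm _ _
      omega
    have e1 : c n = (h ^ q) • P.getVert i := by rw [hn]; exact hc_block q i (le_of_lt hiL)
    have e2 : c (n + 1) = (h ^ q) • P.getVert (i + 1) := by
      have : n + 1 = q * L + (i + 1 : ℕ) := by push_cast; omega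
      rw [this]; exact hc_block q (i + 1) (by omega)
    rw [e1, e2, dist_smul hGT]
    have hadj : T.Adj (P.getVert i) (P.getVert (i + 1)) :=
      P.adj_getVert_succ (by omega)
    rw [dist_adj hT hadj]
  have hc_chain : ∀ (m : ℤ) (k : ℕ), T.dist (c m) (c (m + k)) ≤ k := by
    intro m k
    induction k with
    | zero => simp [SimpleGraph.dist_self]
    | succ j ih =>
      have h1 := hc_step (m + j)
      have h2 := tri hT (c m) (c (m + j)) (c (m + j + 1))
      have h3 : (m + (j + 1 : ℕ) : ℤ) = m + j + 1 := by push_cast; ring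
      rw [h3]
      omega
  -- the core distance formula along the axis
  have hc_theta : ∀ n : ℕ, T.dist x₀ (c n) = n := by
    intro n
    induction n using Nat.strong_induction_on with
    | _ n IH =>
    rcases le_or_gt n L with hnL | hnL
    · have : ((n : ℤ)) = 0 * L + n := by ring
      rw [this, hc_block 0 n hnL]
      simp only [zpow_zero, one_smul]
      exact (path_getVert_dist hT P hP (by omega)).1
    · -- n > L
      obtain ⟨q1, r, hq1, hr1, hrL, hn⟩ :
          ∃ q1 r : ℕ, 1 ≤ q1 ∧ 1 ≤ r ∧ r ≤ L ∧ n = q1 * L + r := by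
        set d := (n - 1) / L with hd
        set m1 := (n - 1) % L with hm1
        have hd1 : 1 ≤ d := by
          rw [hd]
          exact (Nat.one_le_div_iff (by omega)).mpr (by omega)
        have h1 : L * d + m1 = n - 1 := by
          rw [hd, hm1]
          exact Nat.div_add_mod (n - 1) L
        have h2 : m1 < L := by
          rw [hm1]
          exact Nat.mod_lt _ (by omega)
        have h3 : d * L = L * d := mul_comm d L
        exact ⟨d, n - d * L, hd1, by omega, by omega, by omega⟩
      set B := c (q1 * L : ℕ) with hB
      have hxB : T.dist x₀ B = q1 * L := IH (q1 * L) (by omega)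
      have hBjk : ∀ i j : ℕ, i ≤ j → j ≤ L →
          T.dist (c ((q1 * L : ℕ) + i)) (c ((q1 * L : ℕ) + j)) = j - i := by
        intro i j hij hjL
        have e1 : ((q1 * L : ℕ) + i : ℤ) = (q1 : ℤ) * L + i := by push_cast; ring
        have e2 : ((q1 * L : ℕ) + j : ℤ) = (q1 : ℤ) * L + j := by push_cast; ring
        rw [e1, e2, hc_block q1 i (le_trans hij hjL), hc_block q1 j hjL, dist_smul hGT]
        exact path_getVert_pair_dist hT P hP hij (by omega)
      have hBn : T.dist B (c n) = r := by
        have := hBjk 0 r (by omega) hrL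
        simpa [hn, hB] using this
      have hub : T.dist x₀ (c n) ≤ n := by
        have := hc_chain 0 n
        rw [zero_add, hc0] at this
        exact this
      rcases lt_or_eq_of_le hub with hlt | heq
      · exfalso
        obtain ⟨m, hm1, hm2, hm3⟩ := exists_median hT x₀ (c n) B
        -- hm1 : Btw x₀ m (c n), hm2 : Btw B m x₀, hm3 : Btw B m (c n)
        set δ := T.dist B m with hδ
        have hBx : T.dist B x₀ = q1 * L := by
          rw [SimpleGraph.dist_comm]; exact hxB
        have hmx : T.dist m x₀ = q1 * L - δ ∧ δ ≤ q1 * L := by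
          unfold Btw at hm2; omega
        have hmn : T.dist m (c n) = r - δ ∧ δ ≤ r := by
          unfold Btw at hm3
          rw [hBn] at hm3
          omega
        have hdxn : T.dist x₀ (c n) = n - 2 * δ := by
          unfold Btw at hm1
          have e1 : T.dist x₀ m = T.dist m x₀ := SimpleGraph.dist_comm
          omega
        have hδ1 : 1 ≤ δ := by omega
        -- identify m with c (q1*L - δ)
        have hid1 : m = c ((q1 * L - δ : ℕ)) := by
          have hxlo : T.dist x₀ (c ((q1 * L - δ : ℕ))) = q1 * L - δ :=
            IH (q1 * L - δ) (by omega)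
        
          have hloB : T.dist (c ((q1 * L - δ : ℕ))) B = δ := by
            have hch : T.dist (c ((q1 * L - δ : ℕ))) (c (((q1 * L - δ : ℕ) : ℤ) + (δ : ℕ))) ≤ δ :=
              hc_chain _ δ
            have e1 : (((q1 * L - δ : ℕ) : ℤ) + (δ : ℕ)) = ((q1 * L : ℕ) : ℤ) := by
              push_cast; omega
            rw [e1] at hch
            have htri := tri hT x₀ (c ((q1 * L - δ : ℕ))) B
            rw [hxB] at htri
            rw [hxlo] at htri
            change T.dist _ B ≤ _ at hch
            omega
          have hbtw1 : Btw T x₀ (c ((q1 * L - δ : ℕ))) B := by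
            unfold Btw; rw [hxlo, hloB, hxB]; omega
          have hbtw2 : Btw T x₀ m B := btw_comm hm2
          refine btw_unique hT hbtw2 hbtw1 ?_
          rw [hxlo]
          have e1 : T.dist x₀ m = T.dist m x₀ := SimpleGraph.dist_comm
          omega
        -- identify m with c (q1*L + δ)
        have hid2 : m = c ((q1 * L + δ : ℕ)) := by
          have h1 : T.dist B (c ((q1 * L + δ : ℕ))) = δ := by
            have := hBjk 0 δ (by omega) (by omega)
            simpa [hB] using this
          have h2 : T.dist (c ((q1 * L + δ : ℕ))) (c n) = r - δ := by
            have := hBjk δ r (by omega) hrL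
            rw [hn]
            exact this
          have hbtw1 : Btw T B (c ((q1 * L + δ : ℕ))) (c n) := by
            unfold Btw; rw [h1, h2, hBn]; omega
          exact btw_unique hT hm3 hbtw1 (by rw [h1])
        -- key identity
        have hkey : P.getVert (L - δ) = h • P.getVert δ := by
          have e1 : c ((q1 * L - δ : ℕ)) = (h ^ ((q1 : ℤ) - 1)) • P.getVert (L - δ) := by
            have e0 : ((q1 * L - δ : ℕ) : ℤ) = ((q1 : ℤ) - 1) * L + ((L - δ : ℕ) : ℤ) := by
              push_cast [Nat.cast_sub (by omega : δ ≤ q1 * L), Nat.cast_sub (by omega : δ ≤ L)]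
              ring
            rw [e0]
            exact hc_block _ _ (by omega)
          have e2 : c ((q1 * L + δ : ℕ)) = (h ^ (q1 : ℤ)) • P.getVert δ := by
            have e0 : ((q1 * L + δ : ℕ) : ℤ) = (q1 : ℤ) * L + (δ : ℤ) := by push_cast; ring
            rw [e0]
            exact hc_block _ _ (by omega)
          have e3 : (h ^ ((q1 : ℤ) - 1)) • P.getVert (L - δ) = (h ^ (q1 : ℤ)) • P.getVert δ := by
            rw [← e1, ← e2, ← hid1, ← hid2]
          have e4 := congrArg (fun y => (h ^ ((q1 : ℤ) - 1))⁻¹ • y) e3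
          simp only [inv_smul_smul] at e4
          rw [e4, ← mul_smul, ← zpow_neg, ← zpow_add]
          norm_num
        -- contradiction with minimality of L
        rcases lt_or_eq_of_le (hmn.2.trans hrL) with hδL | hδL
        · have hd1 : T.dist (P.getVert δ) (P.getVert (L - δ)) = (L - δ) - δ ∨
              T.dist (P.getVert δ) (P.getVert (L - δ)) = δ - (L - δ) := by
            rcases le_or_gt δ (L - δ) with hc1 | hc1
            · left; exact path_getVert_pair_dist hT P hP hc1 (by omega)
            · right
              rw [SimpleGraph.dist_comm]
              exact path_getVert_pair_dist hT P hP (by omega) (by omega)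
          have hd2 := hmin (P.getVert δ)
          simp only [hDsp] at hd2
          rw [← hkey] at hd2
          have e5 : T.dist (P.getVert δ) (P.getVert (L - δ)) < L := by omega
          omega
        · -- δ = L, so r = L and x₀ = h • (h • x₀)
          have hrLeq : r = L := by omega
          have hgv : P.getVert (L - δ) = P.getVert 0 := by rw [hδL]; simp
          have hx2 : x₀ = h • (h • x₀) := by
            have := hkey
            rw [hgv, SimpleGraph.Walk.getVert_zero] at this
            have hgl : P.getVert δ = h • x₀ := by
              rw [hδL, ← hPlen]; exact P.getVert_length
            rw [hgl] at this
            exact this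
          rcases lt_or_eq_of_le hLpos with hL2 | hL1
          · -- L ≥ 2 : contradiction via the second vertex
            set v := P.getVert 1 with hv
            have hd1 : T.dist x₀ v = 1 := (path_getVert_dist hT P hP (by omega)).1
            have hd2 : T.dist v (h • x₀) = L - 1 := by
              have := (path_getVert_dist hT P hP (i := 1) (by omega)).2
              rw [hPlen] at this
              exact this
            have hd3 : T.dist x₀ (h • v) = L - 1 := by
              conv_lhs => rw [hx2]
              rw [dist_smul hGT]
              rw [SimpleGraph.dist_comm]
              exact hd2
            have hd4 : T.dist (h • v) (h • x₀) = 1 := by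
              rw [dist_smul hGT]
              rw [SimpleGraph.dist_comm]
              exact hd1
            have hbtwv : Btw T x₀ (h • v) (h • x₀) := by
              unfold Btw; rw [hd3, hd4, hdX]; omega
            have hgv1 : h • v = P.getVert (L - 1) := by
              have hb2 : Btw T x₀ (P.getVert (L - 1)) (h • x₀) :=
                path_btw_getVert hT P hP (by omega)
              refine btw_unique hT hbtwv hb2 ?_
              rw [hd3, (path_getVert_dist hT P hP (i := L - 1) (by omega)).1]
            have hd5 : T.dist v (h • v) = L - 2 := by
              rw [hgv1, hv]
              exact path_getVert_pair_dist hT P hP (by omega) (by omega)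
            have := hmin v
            simp only [hDsp] at this
            omega
          · -- L = 1 : inversion
            have hadj : T.Adj x₀ (h • x₀) := by
              apply adj_of_dist_one hT
              omega
            exact hGT.no_inversions h x₀ (h • x₀) hadj ⟨rfl, hx2.symm⟩
      · exact heq
  -- distances along the whole line
  have hc_dist : ∀ m n : ℤ, m ≤ n → (T.dist (c m) (c n) : ℤ) = n - m := by
    intro m n hmn
    set q := m / (L : ℤ) with hq
    set jm := m % (L : ℤ) with hjm
    have e0 : (L : ℤ) * q + jm = m := by
      rw [hq, hjm]; exact Int.mul_ediv_add_emod m (L : ℤ)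
    have e1 : 0 ≤ jm := by rw [hjm]; exact Int.emod_nonneg m hLne
    have e2 : jm < L := by rw [hjm]; exact Int.emod_lt_of_pos m hLposZ
    have e3 : q * (L : ℤ) = L * q := mul_comm _ _
    set a : ℕ := (m - q * L).toNat with ha
    set b : ℕ := (n - q * L).toNat with hb
    have ha' : (a : ℤ) = m - q * L := by rw [ha]; rw [Int.toNat_of_nonneg (by omega)]
    have hb' : (b : ℤ) = n - q * L := by rw [hb]; rw [Int.toNat_of_nonneg (by omega)]
    have hca : c m = (h ^ q) • c a := by
      rw [← hc_shift a q]
      congr 1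
      omega
    have hcb : c n = (h ^ q) • c b := by
      rw [← hc_shift b q]
      congr 1
      omega
    rw [hca, hcb, dist_smul hGT]
    have hab : a ≤ b := by omega
    have h1 : T.dist x₀ (c b) = b := hc_theta b
    have h2 : T.dist x₀ (c a) = a := hc_theta a
    have h3 : T.dist x₀ (c b) ≤ T.dist x₀ (c a) + T.dist (c a) (c b) := tri hT _ _ _
    have h4 : T.dist (c a) (c b) ≤ b - a := by
      have h5 := hc_chain a (b - a)
      have e4 : ((a : ℤ) + ((b - a : ℕ) : ℤ)) = (b : ℤ) := by push_cast; omega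
      rw [e4] at h5
      exact h5
    omega
  -- betweenness along the line
  have hbtw_c : ∀ i j l : ℤ, i ≤ j → j ≤ l → Btw T (c i) (c j) (c l) := by
    intro i j l hij hjl
    unfold Btw
    have h1 := hc_dist i j hij
    have h2 := hc_dist j l hjl
    have h3 := hc_dist i l (le_trans hij hjl)
    omega
  -- points between two line points are on the line
  have hcid : ∀ (i j : ℤ) (x : V), i ≤ j → Btw T (c i) x (c j) →
      x = c (i + T.dist (c i) x) := by
    intro i j x hij hbx
    have h1 := hc_dist i j hij
    have h2 : T.dist (c i) x ≤ T.dist (c i) (c j) := by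
      unfold Btw at hbx; omega
    have h3 : i + (T.dist (c i) x : ℤ) ≤ j := by omega
    have h4 : Btw T (c i) (c (i + T.dist (c i) x)) (c j) := hbtw_c _ _ _ (by omega) h3
    have h5 := hc_dist i (i + T.dist (c i) x) (by omega)
    exact btw_unique hT hbx h4 (by omega)
  -- projection to the line
  have hproj : ∀ z : V, ∃ n₀ : ℤ, ∀ mz : ℤ,
      T.dist z (c mz) = T.dist z (c n₀) + T.dist (c n₀) (c mz) := by
    intro z
    have hAne : {dv : ℕ | ∃ mz : ℤ, T.dist z (c mz) = dv}.Nonempty := ⟨T.dist z (c 0), 0, rfl⟩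
    obtain ⟨n₀, hn₀⟩ : ∃ n₀ : ℤ, T.dist z (c n₀) =
        sInf {dv : ℕ | ∃ mz : ℤ, T.dist z (c mz) = dv} := by
      obtain ⟨mz, hmz⟩ := Nat.sInf_mem hAne
      exact ⟨mz, hmz⟩
    have hminz : ∀ mz : ℤ, T.dist z (c n₀) ≤ T.dist z (c mz) := by
      intro mz
      rw [hn₀]
      exact Nat.sInf_le ⟨mz, rfl⟩
    refine ⟨n₀, fun mz => ?_⟩
    obtain ⟨t, ht1, ht2, ht3⟩ := exists_median hT z (c mz) (c n₀)
    -- ht1 : Btw z t (c mz), ht2 : Btw (c n₀) t z, ht3 : Btw (c n₀) t (c mz)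
    have htline : ∃ kt : ℤ, t = c kt := by
      rcases le_total n₀ mz with ho | ho
      · exact ⟨_, hcid n₀ mz t ho ht3⟩
      · exact ⟨_, hcid mz n₀ t ho (btw_comm ht3)⟩
    obtain ⟨kt, htk⟩ := htline
    have h1 : T.dist z (c n₀) ≤ T.dist t z := by
      have h1a := hminz kt
      rw [← htk] at h1a
      have e := SimpleGraph.dist_comm (G := T) (u := z) (v := t)
      omega
    have h2 : T.dist (c n₀) t = 0 := by
      unfold Btw at ht2
      have e1 : T.dist (c n₀) z = T.dist z (c n₀) := SimpleGraph.dist_comm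
      omega
    have h3 : c n₀ = t := dist_zero hT h2
    unfold Btw at ht1
    rw [← h3] at ht1
    have e1 : T.dist z (c n₀) + T.dist (c n₀) (c mz) = T.dist z (c mz) := ht1
    omega
  -- main conclusion
  refine ⟨x₀, ?_⟩
  intro k hk W hWconv hfwd hbwd z hz
  have hkL1 : (1 : ℤ) ≤ (k : ℤ) * L := by
    have : (1 : ℤ) * 1 ≤ (k : ℤ) * L := by
      apply mul_le_mul (by exact_mod_cast hk) (by exact_mod_cast hLpos) (by omega)
        (by positivity)
    omega
  obtain ⟨n₀, hpr⟩ := hproj z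
  set Dz := T.dist z (c n₀) with hDz
  have hsm : ∀ mz : ℤ, (h ^ k : G) • c mz = c (mz + k * L) := by
    intro mz
    have := hc_shift mz k
    rw [zpow_natCast] at this
    exact this.symm
  have hsm' : ∀ mz : ℤ, (h ^ k : G)⁻¹ • c mz = c (mz - k * L) := by
    intro mz
    rw [inv_smul_eq_iff, hsm, sub_add_cancel]
  have hAz : T.dist z (c (n₀ + k * L)) = Dz + k * L := by
    have h1 := hpr (n₀ + k * L)
    have h2 := hc_dist n₀ (n₀ + k * L) (by omega)
    omega
  have hA2 : T.dist ((h ^ k : G) • z) (c (n₀ + k * L)) = Dz := by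
    rw [← hsm n₀, dist_smul hGT]
  have hA3 : T.dist ((h ^ k : G) • z) (c n₀) = Dz + k * L := by
    have e1 : c n₀ = (h ^ k : G) • c (n₀ - k * L) := by rw [hsm, sub_add_cancel]
    rw [e1, dist_smul hGT]
    have h1 := hpr (n₀ - k * L)
    have h2 := hc_dist (n₀ - k * L) n₀ (by omega)
    have e2 : T.dist (c n₀) (c (n₀ - k * L)) = T.dist (c (n₀ - k * L)) (c n₀) :=
      SimpleGraph.dist_comm
    omega
  have hp : c n₀ ∈ W := by
    rcases Nat.eq_zero_or_pos Dz with hD0 | hD0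
    · have : z = c n₀ := dist_zero hT hD0
      rwa [← this]
    · -- the displacement identity
      have hble : T.dist z ((h ^ k : G) • z) ≤ 2 * Dz + k * L := by
        have h1 := tri hT z (c n₀) ((h ^ k : G) • z)
        have e1 : T.dist (c n₀) ((h ^ k : G) • z) = T.dist ((h ^ k : G) • z) (c n₀) :=
          SimpleGraph.dist_comm
        omega
      have hbig : T.dist z ((h ^ k : G) • z) = 2 * Dz + k * L := by
        rcases lt_or_eq_of_le hble with hlt | heq
        · exfalso
          obtain ⟨t, ht1, ht2, ht3⟩ := exists_median hT z ((h ^ k : G) • z) (c (n₀ + k * L))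
          -- ht1 : Btw z t (h^k z), ht2 : Btw A t z, ht3 : Btw A t (h^k z)
          set A := c (n₀ + k * L) with hA
          set e := T.dist A t with he
          have hd1 : T.dist A z = Dz + k * L := by
            have ecomm := SimpleGraph.dist_comm (G := T) (u := A) (v := z)
            omega
          have hd2 : T.dist A ((h ^ k : G) • z) = Dz := by
            have ecomm := SimpleGraph.dist_comm (G := T) (u := A) (v := (h ^ k : G) • z)
            omega
          have htz : T.dist t z = Dz + k * L - e ∧ e ≤ Dz + k * L := by
            unfold Btw at ht2; omega
          have hth : T.dist t ((h ^ k : G) • z) = Dz - e ∧ e ≤ Dz := by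
            unfold Btw at ht3; omega
          have hsum : T.dist z ((h ^ k : G) • z) = 2 * Dz + k * L - 2 * e := by
            unfold Btw at ht1
            have e1 : T.dist z t = T.dist t z := SimpleGraph.dist_comm
            omega
          have he1 : 1 ≤ e := by omega
          obtain ⟨Q, hQ, hQl⟩ := hT.isConnected.exists_path_of_dist A t
          have hQlen : Q.length = e := by rw [hQl]
          set u1 := Q.getVert 1 with hu1
          have hu1d : T.dist A u1 = 1 := (path_getVert_dist hT Q hQ (by omega)).1
          have hu1b : Btw T A u1 t := path_btw_getVert hT Q hQ (by omega)
          have hu1z : Btw T A u1 z := btw_trans hT hu1b ht2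
          have hu1h : Btw T A u1 ((h ^ k : G) • z) := btw_trans hT hu1b ht3
          -- u1 = c (n₀ + k*L - 1)
          have hclaim1 : u1 = c (n₀ + k * L - 1) := by
            have hcd : T.dist A (c (n₀ + k * L - 1)) = 1 := by
              have := hc_dist (n₀ + k * L - 1) (n₀ + k * L) (by omega)
              have e2 : T.dist A (c (n₀ + k * L - 1)) =
                  T.dist (c (n₀ + k * L - 1)) A := SimpleGraph.dist_comm
              rw [hA] at e2 ⊢
              omega
            have hcz : T.dist (c (n₀ + k * L - 1)) z = Dz + k * L - 1 := by
              have h1 := hpr (n₀ + k * L - 1)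
              have h2 := hc_dist n₀ (n₀ + k * L - 1) (by omega)
              have e2 : T.dist (c (n₀ + k * L - 1)) z =
                  T.dist z (c (n₀ + k * L - 1)) := SimpleGraph.dist_comm
              omega
            have hcb : Btw T A (c (n₀ + k * L - 1)) z := by
              unfold Btw; rw [hcd, hcz, hd1]; omega
            exact btw_unique hT hu1z hcb (by rw [hu1d, hcd])
          -- u1 = h^k • v1
          obtain ⟨R, hR, hRl⟩ := hT.isConnected.exists_path_of_dist (c n₀) z
          have hRlen : R.length = Dz := by rw [hRl, SimpleGraph.dist_comm]
          set v1 := R.getVert 1 with hv1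
          have hv1d : T.dist (c n₀) v1 = 1 := (path_getVert_dist hT R hR (by omega)).1
          have hv1b : Btw T (c n₀) v1 z := path_btw_getVert hT R hR (by omega)
          have hclaim2 : u1 = (h ^ k : G) • v1 := by
            have hb1 : Btw T A ((h ^ k : G) • v1) ((h ^ k : G) • z) := by
              have := btw_smul hGT (g := (h ^ k : G)) hv1b
              rwa [hsm n₀, ← hA] at this
            have hb2 : T.dist A ((h ^ k : G) • v1) = 1 := by
              rw [hA, ← hsm n₀, dist_smul hGT]
              exact hv1d
            exact btw_unique hT hu1h hb1 (by rw [hu1d, hb2])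
          have hveq : v1 = c (n₀ - 1) := by
            have e1 : (h ^ k : G) • v1 = c (n₀ + k * L - 1) := by rw [← hclaim2, hclaim1]
            have e2 : c (n₀ + k * L - 1) = (h ^ k : G) • c (n₀ - 1) := by
              rw [hsm]
              congr 1
              ring
            rw [e2] at e1
            exact smul_left_cancel _ e1
          have hcon1 : T.dist v1 z = Dz - 1 := by
            unfold Btw at hv1b
            omega
          have hcon2 : T.dist z (c (n₀ - 1)) = Dz + 1 := by
            have h1 := hpr (n₀ - 1)
            have h2 := hc_dist (n₀ - 1) n₀ (by omega)
            have e2 : T.dist (c n₀) (c (n₀ - 1)) = T.dist (c (n₀ - 1)) (c n₀) :=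
              SimpleGraph.dist_comm
            omega
          rw [hveq] at hcon1
          have e3 : T.dist (c (n₀ - 1)) z = T.dist z (c (n₀ - 1)) := SimpleGraph.dist_comm
          omega
        · exact heq
      have hbtwp : Btw T z (c n₀) ((h ^ k : G) • z) := by
        unfold Btw
        have e1 : T.dist (c n₀) ((h ^ k : G) • z) = T.dist ((h ^ k : G) • z) (c n₀) :=
          SimpleGraph.dist_comm
        omega
      exact hWconv hz (hfwd z hz) hbtwp
  -- iterate to sweep the whole line inside W
  have hiter : ∀ j : ℕ, ∃ mneg mpos : ℤ, mneg ≤ n₀ - j ∧ n₀ + j ≤ mpos ∧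
      c mneg ∈ W ∧ c mpos ∈ W := by
    intro j
    induction j with
    | zero => exact ⟨n₀, n₀, by omega, by omega, hp, hp⟩
    | succ i ih =>
      obtain ⟨mneg, mpos, hm1, hm2, hw1, hw2⟩ := ih
      refine ⟨mneg - k * L, mpos + k * L, by push_cast; omega, by push_cast; omega, ?_, ?_⟩
      · rw [← hsm']
        exact hbwd _ hw1
      · rw [← hsm]
        exact hfwd _ hw2
  obtain ⟨mneg, mpos, hm1, hm2, hw1, hw2⟩ := hiter n₀.natAbs
  have hj1 : mneg ≤ 0 := by omega
  have hj2 : 0 ≤ mpos := by omega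
  have hbtw0 : Btw T (c mneg) (c 0) (c mpos) := hbtw_c _ _ _ hj1 hj2
  have := hWconv hw1 hw2 hbtw0
  rwa [hc0] at this


end Action

section Aux

variable {VX VY : Type*} {X : SimpleGraph VX} {Y : SimpleGraph VY}

/-- A simplicial map does not increase distances. -/
lemma simplicial_lipschitz (hYc : Y.Connected) (f : VX → VY)
    (hf : ∀ u v : VX, X.Adj u v → f u = f v ∨ Y.Adj (f u) (f v)) {a b : VX}
    (p : X.Walk a b) : Y.dist (f a) (f b) ≤ p.length := by
  induction p with
  | nil => simp [SimpleGraph.dist_self]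
  | @cons u c d h q ih =>
    have h1 : Y.dist (f u) (f c) ≤ 1 := by
      rcases hf u c h with he | ha
      · rw [he, SimpleGraph.dist_self]; omega
      · rw [(dist_eq_one_iff_adj (G := Y)).mpr ha]
    have h2 := hYc.dist_triangle (u := f u) (v := f c) (w := f d)
    simpa using by omega
  
lemma dist_map_le (hXc : X.Connected) (hYc : Y.Connected) (f : VX → VY)
    (hf : ∀ u v : VX, X.Adj u v → f u = f v ∨ Y.Adj (f u) (f v)) (a b : VX) :
    Y.dist (f a) (f b) ≤ X.dist a b := by
  obtain ⟨p, hp, hpl⟩ := hXc.exists_path_of_dist a b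
  have := simplicial_lipschitz hYc f hf p
  omega

/-- Balls in a connected locally finite graph are finite. -/
lemma ball_finite (hYc : Y.Connected) (hlf : ∀ v : VY, (Y.neighborSet v).Finite) (w : VY) :
    ∀ n : ℕ, {y : VY | Y.dist w y ≤ n}.Finite := by
  intro n
  induction n with
  | zero =>
    apply Set.Finite.subset (Set.finite_singleton w)
    intro y hy
    simp only [Set.mem_setOf_eq, Nat.le_zero] at hy
    simp [(hYc.dist_eq_zero_iff.mp hy).symm]
  | succ n ih =>
    apply Set.Finite.subset (ih.union (Set.Finite.biUnion ih (fun y _ => hlf y)))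
    intro y hy
    simp only [Set.mem_setOf_eq] at hy
    rcases le_or_gt (Y.dist w y) n with hle | hgt
    · exact Or.inl hle
    · have heq : Y.dist w y = n + 1 := by omega
      obtain ⟨p, hpl⟩ := (hYc w y).exists_walk_length_eq_dist
      right
      rw [heq] at hpl
      cases hq : p.reverse with
      | nil =>
        exfalso
        have := congrArg SimpleGraph.Walk.length hq
        rw [SimpleGraph.Walk.length_reverse, hpl] at this
        simp at this
      | @cons _ v _ hadj q =>
        have hq' : Y.dist w v ≤ n := by
          have h1 : q.reverse.length = n := by
            have := congrArg SimpleGraph.Walk.length hq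
            rw [SimpleGraph.Walk.length_reverse, hpl] at this
            simp only [SimpleGraph.Walk.length_cons] at this
            rw [SimpleGraph.Walk.length_reverse]
            omega
          have := SimpleGraph.dist_le q.reverse
          omega
        refine Set.mem_biUnion hq' ?_
        exact hadj.symm

variable {G : Type*} [Group G] [MulAction G VY]

/-- A finite invariant set is fixed pointwise by some positive power. -/
lemma pow_fixes_of_finite (B : Set VY) (hB : B.Finite) (g : G)
    (hg : ∀ y ∈ B, g • y ∈ B) : ∃ k : ℕ, 1 ≤ k ∧ ∀ y ∈ B, (g ^ k) • y = y := by
  classical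
  have horb : ∀ (m : ℕ), ∀ y ∈ B, (g ^ m) • y ∈ B := by
    intro m
    induction m with
    | zero => intro y hy; simpa using hy
    | succ i ih =>
      intro y hy
      have : (g ^ (i + 1)) • y = (g ^ i) • (g • y) := by
        rw [← mul_smul, ← pow_succ]
      rw [this]
      exact ih _ (hg y hy)
  have hper : ∀ y ∈ B, ∃ k : ℕ, 1 ≤ k ∧ (g ^ k) • y = y := by
    intro y hy
    have hfin : Finite B := hB
    have key : ∀ m n : ℕ, m < n → (g ^ m) • y = (g ^ n) • y →
        ∃ k : ℕ, 1 ≤ k ∧ (g ^ k) • y = y := by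
      intro m n hlt he
      refine ⟨n - m, by omega, ?_⟩
      have e1 : g ^ n = g ^ m * g ^ (n - m) := by rw [← pow_add]; congr 1; omega
      rw [e1, mul_smul] at he
      exact (smul_left_cancel _ he).symm
    obtain ⟨m, n, hmn, heq⟩ := Finite.exists_ne_map_eq_of_infinite
      (fun m : ℕ => (⟨(g ^ m) • y, horb m y hy⟩ : B))
    have heq' : (g ^ m) • y = (g ^ n) • y := congrArg Subtype.val heq
    rcases lt_or_gt_of_ne hmn with hlt | hgt
    · exact key m n hlt heq'
    · exact key n m hgt heq'.symm
  choose! kf hkf1 hkf2 using hper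
  classical
  set F := hB.toFinset with hF
  refine ⟨∏ y ∈ F, kf y, ?_, ?_⟩
  · have hpos : ∀ y ∈ F, 0 < kf y := by
      intro y hy
      exact hkf1 y (hB.mem_toFinset.mp hy)
    exact Finset.prod_pos hpos
  · intro y hy
    obtain ⟨t, ht⟩ : kf y ∣ ∏ y ∈ F, kf y :=
      Finset.dvd_prod_of_mem kf (hB.mem_toFinset.mpr hy)
    rw [ht]
    have hiter : ∀ s : ℕ, (g ^ (kf y * s)) • y = y := by
      intro s
      induction s with
      | zero => simp
      | succ i ih =>
        have e1 : kf y * (i + 1) = kf y * i + kf y := by ring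
        rw [e1, pow_add, mul_smul, hkf2 y hy]
        exact ih
    exact hiter t

end Aux

end DefSp

/-- If `Y` is a non-trivial locally finite `G`-tree with finitely generated vertex
stabilizers and `f : X → Y` is a surjective `G`-equivariant simplicial map from a
cocompact `G`-tree `X`, then `X` and `Y` have the same elliptic subgroups (they lie in
the same deformation space). -/
theorem same_deformation_space_of_simplicial_onto_locallyFinite
    (G : Type*) [Group G] (VX VY : Type*) [MulAction G VX] [MulAction G VY]
    (X : SimpleGraph VX) (Y : SimpleGraph VY)
    (hX : IsGTree G X) (hY : IsGTree G Y)
    -- Y is non-trivial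
    (hYnontriv : ¬ ∃ v : VY, ∀ g : G, g • v = v)
    -- Y is locally finite
    (hYlf : ∀ v : VY, (Y.neighborSet v).Finite)
    -- vertex stabilizers of Y are finitely generated
    (hYfg : ∀ v : VY, (MulAction.stabilizer G v).FG)
    -- X is cocompact
    (hXcc : Finite (Quotient (MulAction.orbitRel G VX)))
    (f : VX → VY)
    (hf_equiv : ∀ (g : G) (x : VX), f (g • x) = g • f x)
    (hf_surj : Function.Surjective f)
    (hf_simp : ∀ u v : VX, X.Adj u v → f u = f v ∨ Y.Adj (f u) (f v)) :
    ∀ H : Subgroup G,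
      (∃ v : VX, ∀ h ∈ H, h • v = v) ↔ (∃ w : VY, ∀ h ∈ H, h • w = w) := by
  classical
  intro H
  have hXT := hX.isTree
  have hYT := hY.isTree
  constructor
  · rintro ⟨v, hv⟩
    refine ⟨f v, fun g hg => ?_⟩
    rw [← hf_equiv g v, hv g hg]
  · rintro ⟨w, hw⟩
    suffices hst : ∃ v : VX, ∀ g ∈ MulAction.stabilizer G w, g • v = v by
      obtain ⟨v, hv⟩ := hst
      exact ⟨v, fun g hg => hv g (MulAction.mem_stabilizer_iff.mpr (hw g hg))⟩
    by_contra hnofix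
    obtain ⟨h, hhV, hhyp⟩ := DefSp.exists_hyperbolic hX (MulAction.stabilizer G w)
      (hYfg w) hnofix
    have hhw : h • w = w := MulAction.mem_stabilizer_iff.mp hhV
    obtain ⟨x₀, hx₀⟩ := DefSp.axis_main hX h hhyp
    -- cocompactness constant
    obtain ⟨C, hC⟩ : ∃ C : ℕ, ∀ x : VX, ∃ γ : G, X.dist x (γ • x₀) ≤ C := by
      have hfin : (Set.range (fun q : Quotient (MulAction.orbitRel G VX) =>
          X.dist q.out x₀)).Finite := Set.finite_range _
      obtain ⟨C, hC⟩ := hfin.bddAbove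
      refine ⟨C, fun x => ?_⟩
      have h1 : (Quotient.mk (MulAction.orbitRel G VX) x).out ∈ MulAction.orbit G x := by
        have h2 := Quotient.mk_out (s := MulAction.orbitRel G VX) x
        exact MulAction.orbitRel_apply.mp h2
      obtain ⟨γ, hγ⟩ := MulAction.mem_orbit_iff.mp h1
      refine ⟨γ⁻¹, ?_⟩
      have e1 : X.dist x (γ⁻¹ • x₀) = X.dist (γ • x) x₀ := by
        rw [← DefSp.dist_smul hX γ x (γ⁻¹ • x₀), smul_inv_smul]
      rw [e1, hγ]
      exact hC (Set.mem_range_self _)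
    -- the finite tree K and the cocompact invariant subtree W
    obtain ⟨S, hSgen⟩ := hYfg w
    choose P hP hPl using (fun σ : G => hXT.isConnected.exists_path_of_dist x₀ (σ • x₀))
    set stabw := MulAction.stabilizer G w with hstabw
    set Kset : Set VX := insert x₀ (⋃ σ ∈ S, {y | y ∈ (P σ).support}) with hKset
    have hKfin : Kset.Finite := Set.Finite.insert _
      (Set.Finite.biUnion S.finite_toSet (fun σ _ => (P σ).support.finite_toSet))
    have hx₀K : x₀ ∈ Kset := Set.mem_insert _ _
    set W : Set VX := {v | ∃ g ∈ stabw, ∃ u ∈ Kset, v = g • u} with hWdef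
    have hx₀W : x₀ ∈ W := ⟨1, one_mem _, x₀, hx₀K, (one_smul G x₀).symm⟩
    have hWinv : ∀ g ∈ stabw, ∀ v ∈ W, g • v ∈ W := by
      rintro g hg v ⟨g', hg', u, hu, rfl⟩
      exact ⟨g * g', mul_mem hg hg', u, hu, (mul_smul g g' u).symm⟩
    have hmemW : ∀ g : G, g ∈ Subgroup.closure (S : Set G) → g ∈ stabw := by
      intro g hg
      rw [hSgen] at hg
      exact hg
    have hKwalk : ∀ u ∈ Kset, ∃ p : X.Walk x₀ u, ∀ y ∈ p.support, y ∈ Kset := by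
      intro u hu
      rcases Set.mem_insert_iff.mp hu with rfl | hu'
      · refine ⟨SimpleGraph.Walk.nil, fun y hy => ?_⟩
        simp only [SimpleGraph.Walk.support_nil, List.mem_singleton] at hy
        rw [hy]; exact hx₀K
      · simp only [Set.mem_iUnion] at hu'
        obtain ⟨σ, hσS, hu'⟩ := hu'
        refine ⟨(P σ).takeUntil u hu', fun y hy => ?_⟩
        have hy2 := SimpleGraph.Walk.support_takeUntil_subset _ hu' hy
        exact Set.mem_insert_iff.mpr (Or.inr (Set.mem_biUnion hσS hy2))
    have hgenwalk : ∀ g : G, g ∈ Subgroup.closure (S : Set G) →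
        ∃ p : X.Walk x₀ (g • x₀), ∀ y ∈ p.support, y ∈ W := by
      intro g hg
      induction hg using Subgroup.closure_induction with
      | mem σ hσ =>
        refine ⟨P σ, fun y hy => ?_⟩
        have hyK : y ∈ Kset := Set.mem_insert_iff.mpr (Or.inr (Set.mem_biUnion hσ hy))
        exact ⟨1, one_mem _, y, hyK, (one_smul _ _).symm⟩
      | one =>
        refine ⟨SimpleGraph.Walk.nil.copy rfl (one_smul G x₀).symm, fun y hy => ?_⟩
        rw [SimpleGraph.Walk.support_copy] at hy
        simp only [SimpleGraph.Walk.support_nil, List.mem_singleton] at hy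
        rw [hy]; exact hx₀W
      | mul g₁ g₂ hg₁ hg₂ ih₁ ih₂ =>
        obtain ⟨p₁, hp₁⟩ := ih₁
        obtain ⟨p₂, hp₂⟩ := ih₂
        refine ⟨p₁.append ((p₂.map (DefSp.actHom hX g₁)).copy rfl (mul_smul g₁ g₂ x₀).symm),
          fun y hy => ?_⟩
        rw [SimpleGraph.Walk.mem_support_append_iff] at hy
        rcases hy with hy | hy
        · exact hp₁ y hy
        · erw [SimpleGraph.Walk.support_copy, SimpleGraph.Walk.support_map] at hy
          obtain ⟨y', hy', rfl⟩ := List.mem_map.mp hy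
          exact hWinv g₁ (hmemW g₁ hg₁) _ (hp₂ y' hy')
      | inv g hg ih =>
        obtain ⟨p, hp⟩ := ih
        refine ⟨((p.map (DefSp.actHom hX g⁻¹)).copy rfl (inv_smul_smul g x₀)).reverse,
          fun y hy => ?_⟩
        erw [SimpleGraph.Walk.support_reverse, List.mem_reverse,
          SimpleGraph.Walk.support_copy, SimpleGraph.Walk.support_map] at hy
        obtain ⟨y', hy', rfl⟩ := List.mem_map.mp hy
        exact hWinv g⁻¹ (inv_mem (hmemW g hg)) _ (hp y' hy')
    have hWwalk : ∀ v ∈ W, ∃ p : X.Walk x₀ v, ∀ y ∈ p.support, y ∈ W := by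
      rintro v ⟨g, hg, u, hu, rfl⟩
      obtain ⟨p₁, hp₁⟩ := hgenwalk g (by rw [← hSgen] at hg; exact hg)
      obtain ⟨p₂, hp₂⟩ := hKwalk u hu
      refine ⟨p₁.append (p₂.map (DefSp.actHom hX g)), fun y hy => ?_⟩
      erw [SimpleGraph.Walk.mem_support_append_iff] at hy
      rcases hy with hy | hy
      · exact hp₁ y hy
      · erw [SimpleGraph.Walk.support_map] at hy
        obtain ⟨y', hy', rfl⟩ := List.mem_map.mp hy
        exact ⟨g, hg, y', hp₂ y' hy', rfl⟩
    have hWconv : DefSp.Conv X W := by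
      intro a ha b hb m hm
      obtain ⟨pa, hpa⟩ := hWwalk a ha
      obtain ⟨pb, hpb⟩ := hWwalk b hb
      set pp := pa.reverse.append pb with hpp
      have hsup : ∀ y ∈ pp.support, y ∈ W := by
        intro y hy
        rw [hpp, SimpleGraph.Walk.mem_support_append_iff] at hy
        rcases hy with hy | hy
        · rw [SimpleGraph.Walk.support_reverse, List.mem_reverse] at hy
          exact hpa y hy
        · exact hpb y hy
      have hmsup : m ∈ pp.bypass.support :=
        DefSp.btw_mem_support hXT hm pp.bypass pp.bypass_isPath
      exact hsup m (pp.support_bypass_subset hmsup)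
    -- bound on the image of K
    obtain ⟨R, hR⟩ : ∃ R : ℕ, ∀ u ∈ Kset, Y.dist w (f u) ≤ R := by
      have him : ((fun u => Y.dist w (f u)) '' Kset).Finite := hKfin.image _
      obtain ⟨R, hR⟩ := him.bddAbove
      exact ⟨R, fun u hu => hR (Set.mem_image_of_mem _ hu)⟩
    have hfW : ∀ v ∈ W, Y.dist w (f v) ≤ R := by
      rintro v ⟨g, hg, u, hu, rfl⟩
      have e1 : f (g • u) = g • f u := hf_equiv g u
      have e2 : Y.dist w (g • f u) = Y.dist w (f u) := by
        conv_lhs => rw [show w = g • w from (MulAction.mem_stabilizer_iff.mp hg).symm]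
        rw [DefSp.dist_smul hY]
      rw [e1, e2]
      exact hR u hu
    -- density of W in X
    have hdense : ∀ γ : G, γ • x₀ ∈ W := by
      intro γ
      set B := {y : VY | Y.dist w y ≤ Y.dist w (γ⁻¹ • w)} with hB
      have hBfin := DefSp.ball_finite hYT.isConnected hYlf w (Y.dist w (γ⁻¹ • w))
      have hBinv : ∀ y ∈ B, h • y ∈ B := by
        intro y hy
        have e1 : Y.dist w (h • y) = Y.dist w y := by
          conv_lhs => rw [show w = h • w from hhw.symm]
          rw [DefSp.dist_smul hY]
        simp only [hB, Set.mem_setOf_eq] at hy ⊢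
        omega
      obtain ⟨k, hk1, hkfix⟩ := DefSp.pow_fixes_of_finite B hBfin h hBinv
      have hy'B : (γ⁻¹ • w) ∈ B := by
        simp only [hB, Set.mem_setOf_eq]
        exact le_refl _
      have hsfix : (γ * h ^ k * γ⁻¹) • w = w := by
        rw [mul_smul, mul_smul, hkfix _ hy'B, smul_inv_smul]
      set s := γ * h ^ k * γ⁻¹ with hs
      have hsW : s ∈ stabw := MulAction.mem_stabilizer_iff.mpr hsfix
      set W' : Set VX := {v | γ • v ∈ W} with hW'
      have hW'conv : DefSp.Conv X W' := by
        intro a ha b hb m hm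
        exact hWconv ha hb (DefSp.btw_smul hX hm)
      have hfwd : ∀ x ∈ W', (h ^ k : G) • x ∈ W' := by
        intro x hx
        show γ • ((h ^ k : G) • x) ∈ W
        have e : γ • ((h ^ k : G) • x) = s • (γ • x) := by
          simp only [hs, mul_smul, inv_smul_smul]
        rw [e]
        exact hWinv s hsW _ hx
      have hbwd : ∀ x ∈ W', (h ^ k : G)⁻¹ • x ∈ W' := by
        intro x hx
        show γ • ((h ^ k : G)⁻¹ • x) ∈ W
        have e : γ • ((h ^ k : G)⁻¹ • x) = s⁻¹ • (γ • x) := by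
          simp only [hs, mul_inv_rev, inv_inv, mul_smul, inv_smul_smul]
        rw [e]
        exact hWinv s⁻¹ (inv_mem hsW) _ hx
      have hz' : (γ⁻¹ • x₀) ∈ W' := by
        show γ • (γ⁻¹ • x₀) ∈ W
        rw [smul_inv_smul]
        exact hx₀W
      exact hx₀ k hk1 W' hW'conv hfwd hbwd (γ⁻¹ • x₀) hz'
    -- Y is bounded
    have hbound : ∀ y : VY, Y.dist w y ≤ R + C := by
      intro y
      obtain ⟨x, rfl⟩ := hf_surj y
      obtain ⟨γ, hγ⟩ := hC x
      have h1 : Y.dist (f (γ • x₀)) (f x) ≤ C := by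
        have h1a := DefSp.dist_map_le hXT.isConnected hYT.isConnected f hf_simp (γ • x₀) x
        have e := SimpleGraph.dist_comm (G := X) (u := x) (v := γ • x₀)
        omega
      have h2 : Y.dist w (f (γ • x₀)) ≤ R := hfW _ (hdense γ)
      have h3 := DefSp.tri hYT w (f (γ • x₀)) (f x)
      omega
    -- contradiction with nontriviality
    obtain ⟨v, hv⟩ := DefSp.exists_fixed_of_bounded hY Set.univ ⟨w, trivial⟩ (2 * (R + C))
      (fun a _ b _ => by
        have h1 := hbound a
        have h2 := hbound b
        have h3 := DefSp.tri hYT a w b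
        have e := SimpleGraph.dist_comm (G := Y) (u := a) (v := w)
        omega)
      (fun g x _ => trivial)
    exact hYnontriv ⟨v, hv⟩
end

section
/- Let G be a group and let Y be a G-tree that is non-trivial (no vertex of Y is fixed by every element of G), locally finite, and all of whose vertex stabilizers are finitely generated. Let X be a cocompact G-tree admitting a G-equivariant simplicial map from the vertices of X onto the vertices of Y (surjective, sending adjacent vertices to equal or adjacent vertices). If X is minimal, i.e., the only nonempty G-invariant set of vertices of X whose induced subgraph is connected is the full vertex set, then X is locally finite. -/
namespace GTreeAux
open SimpleGraph

variable {V : Type*} {T : SimpleGraph V}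

noncomputable local instance : DecidableEq V := Classical.decEq _

/-- The unique path between two vertices of a tree. -/
noncomputable def tpath (hT : T.IsTree) (u v : V) : T.Walk u v :=
  (hT.existsUnique_path u v).exists.choose

lemma tpath_isPath (hT : T.IsTree) (u v : V) : (tpath hT u v).IsPath :=
  (hT.existsUnique_path u v).exists.choose_spec

lemma tpath_unique (hT : T.IsTree) {u v : V} (p : T.Walk u v) (hp : p.IsPath) :
    p = tpath hT u v := by
  obtain ⟨q, hq, huniq⟩ := hT.existsUnique_path u v
  rw [huniq p hp, huniq (tpath hT u v) (tpath_isPath hT u v)]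

lemma tpath_length (hT : T.IsTree) (u v : V) : (tpath hT u v).length = T.dist u v := by
  obtain ⟨p, hp, hl⟩ := hT.isConnected.exists_path_of_dist u v
  rw [← tpath_unique hT p hp] at *
  exact hl

/-- In a tree, the support of the unique path is contained in the support of any walk
with the same endpoints. -/
lemma tpath_support_subset (hT : T.IsTree) {u v : V} (W : T.Walk u v) :
    (tpath hT u v).support ⊆ W.support := by
  induction W with
  | nil =>
      rename_i a
      intro z hz
      have : (Walk.nil' a) = tpath hT a a := tpath_unique hT _ (by simp)
      rw [← this] at hz
      simpa using hz
  | @cons a x v h W' ih =>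
      by_cases hmem : a ∈ (tpath hT x v).support
      · have hdrop : ((tpath hT x v).dropUntil a hmem) = tpath hT a v :=
          tpath_unique hT _ ((tpath_isPath hT x v).dropUntil hmem)
        intro z hz
        rw [← hdrop] at hz
        have : z ∈ (tpath hT x v).support := Walk.support_dropUntil_subset _ hmem hz
        exact List.mem_cons_of_mem _ (ih this)
      · have hcons : (Walk.cons h (tpath hT x v)) = tpath hT a v := by
          apply tpath_unique
          exact (tpath_isPath hT x v).cons hmem
        intro z hz
        rw [← hcons] at hz
        rcases (Walk.mem_support_iff _).mp hz with rfl | hz'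
        · exact Walk.start_mem_support _
        · simp only [Walk.support_cons] at hz' ⊢
          exact List.mem_cons_of_mem _ (ih hz')

lemma dist_eq_add_of_mem_tpath (hT : T.IsTree) {u v a : V}
    (ha : a ∈ (tpath hT u v).support) :
    T.dist u a + T.dist a v = T.dist u v := by
  have hsp := Walk.take_spec (tpath hT u v) ha
  have h1 : ((tpath hT u v).takeUntil a ha) = tpath hT u a :=
    tpath_unique hT _ ((tpath_isPath hT u v).takeUntil ha)
  have h2 : ((tpath hT u v).dropUntil a ha) = tpath hT a v :=
    tpath_unique hT _ ((tpath_isPath hT u v).dropUntil ha)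
  have := congrArg Walk.length hsp
  rw [Walk.length_append, h1, h2, tpath_length, tpath_length, tpath_length] at this
  exact this

lemma mem_tpath_of_dist_add (hT : T.IsTree) {u v a : V}
    (h : T.dist u a + T.dist a v = T.dist u v) :
    a ∈ (tpath hT u v).support := by
  have hW : ((tpath hT u a).append (tpath hT a v)).length = T.dist u v := by
    rw [Walk.length_append, tpath_length, tpath_length, h]
  have hP : ((tpath hT u a).append (tpath hT a v)).IsPath :=
    Walk.isPath_of_length_eq_dist _ hW
  have := tpath_unique hT _ hP
  rw [← this, Walk.mem_support_append_iff]
  left; exact Walk.end_mem_support _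

lemma eq_of_mem_tpath_dist_eq (hT : T.IsTree) {u v a b : V}
    (ha : a ∈ (tpath hT u v).support) (hb : b ∈ (tpath hT u v).support)
    (hd : T.dist u a = T.dist u b) : a = b := by
  have hsp := Walk.take_spec (tpath hT u v) ha
  have h1 : ((tpath hT u v).takeUntil a ha) = tpath hT u a :=
    tpath_unique hT _ ((tpath_isPath hT u v).takeUntil ha)
  have h2 : ((tpath hT u v).dropUntil a ha) = tpath hT a v :=
    tpath_unique hT _ ((tpath_isPath hT u v).dropUntil ha)
  rw [← hsp, Walk.mem_support_append_iff] at hb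
  have conn := hT.isConnected
  rcases hb with hb | hb
  · rw [h1] at hb
    have := dist_eq_add_of_mem_tpath hT hb
    have hba : T.dist b a = 0 := by omega
    exact ((conn b a).dist_eq_zero_iff.mp hba).symm
  · rw [h2] at hb
    have h3 := dist_eq_add_of_mem_tpath hT hb
    have h4 := dist_eq_add_of_mem_tpath hT ha
    have h5 : T.dist u v ≤ T.dist u b + T.dist b v := conn.dist_triangle
    have h6 : T.dist a b = 0 := by omega
    exact (conn a b).dist_eq_zero_iff.mp h6

/-- Lift a walk with support in `S` to reachability in the induced graph. -/
lemma reachable_induce_of_walk {S : Set V} :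
    ∀ {u v : V} (W : T.Walk u v) (_ : ∀ a ∈ W.support, a ∈ S)
    (hu : u ∈ S) (hv : v ∈ S), (T.induce S).Reachable ⟨u, hu⟩ ⟨v, hv⟩ := by
  intro u v W
  induction W with
  | nil => intro _ hu hv; rfl
  | @cons a x v h W' ih =>
      intro hsup hu hv
      have hx : x ∈ S := hsup x (by simp)
      have h1 : (T.induce S).Adj ⟨a, hu⟩ ⟨x, hx⟩ := h
      exact (h1.reachable).trans (ih (fun z hz => hsup z (by simp [hz])) hx hv)

/-- From reachability in the induced graph, get a walk in `T` with support in `S`. -/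
lemma exists_walk_of_reachable_induce {S : Set V} {u v : V} (hu : u ∈ S) (hv : v ∈ S)
    (hr : (T.induce S).Reachable ⟨u, hu⟩ ⟨v, hv⟩) :
    ∃ W : T.Walk u v, ∀ a ∈ W.support, a ∈ S := by
  obtain ⟨W⟩ := hr
  let f : (T.induce S) →g T := ⟨Subtype.val, fun {p q} hpq => hpq⟩
  refine ⟨W.map f, ?_⟩
  intro a ha
  rw [Walk.support_map, List.mem_map] at ha
  obtain ⟨⟨b, hb⟩, _, rfl⟩ := ha
  exact hb

/-- In a tree, the unique path between two points of an induced-connected set stays in the set. -/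
lemma tpath_support_mem (hT : T.IsTree) {S : Set V}
    (hconn : (T.induce S).Connected) {u v : V} (hu : u ∈ S) (hv : v ∈ S) :
    ∀ a ∈ (tpath hT u v).support, a ∈ S := by
  obtain ⟨W, hW⟩ := exists_walk_of_reachable_induce hu hv (hconn ⟨u, hu⟩ ⟨v, hv⟩)
  intro a ha
  exact hW a (tpath_support_subset hT W ha)

/-- An appended pair of paths meeting only at the junction is a path. -/
lemma isPath_append_of_inter {u v w : V} {p : T.Walk u v} {q : T.Walk v w}
    (hp : p.IsPath) (hq : q.IsPath)
    (hint : ∀ z, z ∈ p.support → z ∈ q.support → z = v) :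
    (p.append q).IsPath := by
  rw [Walk.isPath_def, Walk.support_append]
  have htail : q.support.tail.Nodup := (List.tail_sublist _).nodup hq.support_nodup
  refine List.Nodup.append hp.support_nodup htail ?_
  intro z hzp hzq
  have hz : z = v := hint z hzp (List.mem_of_mem_tail hzq)
  subst hz
  have hnd := hq.support_nodup
  rw [Walk.support_eq_cons q] at hnd
  exact (List.nodup_cons.mp hnd).1 hzq

/-- Intersection of two induced-connected sets in a tree is induced-connected (if nonempty). -/
lemma induce_connected_inter (hT : T.IsTree) {S₁ S₂ : Set V}
    (h1 : (T.induce S₁).Connected) (h2 : (T.induce S₂).Connected)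
    (hne : (S₁ ∩ S₂).Nonempty) : (T.induce (S₁ ∩ S₂)).Connected := by
  rw [SimpleGraph.connected_iff]
  refine ⟨?_, ⟨⟨hne.choose, hne.choose_spec⟩⟩⟩
  rintro ⟨u, hu1, hu2⟩ ⟨v, hv1, hv2⟩
  have hsub : ∀ a ∈ (tpath hT u v).support, a ∈ S₁ ∩ S₂ := fun a ha =>
    ⟨tpath_support_mem hT h1 hu1 hv1 a ha, tpath_support_mem hT h2 hu2 hv2 a ha⟩
  exact reachable_induce_of_walk _ hsub _ _


lemma list_map_eq_self {α : Type*} {f : α → α} :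
    ∀ {l : List α}, l.map f = l → ∀ a ∈ l, f a = a := by
  intro l
  induction l with
  | nil => simp
  | cons x xs ih =>
      intro h a ha
      simp only [List.map_cons, List.cons.injEq] at h
      rcases List.mem_cons.mp ha with rfl | ha
      · exact h.1
      · exact ih h.2 a ha


lemma take_drop_inter (hT : T.IsTree) {u v w : V} (hw : w ∈ (tpath hT u v).support) :
    ∀ z, z ∈ ((tpath hT u v).takeUntil w hw).support →
      z ∈ ((tpath hT u v).dropUntil w hw).support → z = w := by
  intro z hz1 hz2
  have hnd := (tpath_isPath hT u v).support_nodup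
  rw [← Walk.take_spec (tpath hT u v) hw, Walk.support_append, List.nodup_append] at hnd
  rcases (Walk.mem_support_iff _).mp hz2 with rfl | hz2'
  · rfl
  · exact absurd rfl (hnd.2.2 z hz1 z hz2')

/-- A walk of positive length has a penultimate vertex adjacent to the endpoint. -/
lemma exists_penultimate {u v : V} (p : T.Walk u v) (h : u ≠ v) :
    ∃ z ∈ p.support, T.Adj z v := by
  induction p with
  | nil => exact absurd rfl h
  | @cons a x v hax q ih =>
      cases q with
      | nil => exact ⟨a, by simp, hax⟩
      | cons h' q' =>
          by_cases hxv : x = v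
          · subst hxv; exact ⟨a, by simp, hax⟩
          · obtain ⟨z, hz, hzadj⟩ := ih hxv
            refine ⟨z, ?_, hzadj⟩
            rw [Walk.support_cons]
            exact List.mem_cons_of_mem _ hz


lemma middle_of_length_ge_two {a b : V} (p : T.Walk a b) (hp : p.IsPath) (h2 : 2 ≤ p.length) :
    ∃ v ∈ p.support, ∃ x ∈ p.support, ∃ y ∈ p.support, T.Adj v x ∧ T.Adj v y ∧ x ≠ y := by
  cases p with
  | nil => simp at h2
  | @cons a x b hax q =>
      cases q with
      | nil => simp at h2
      | @cons x y b hxy q' =>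
          rw [Walk.cons_isPath_iff] at hp
          refine ⟨x, by simp, a, by simp, y, ?_, hax.symm, hxy, ?_⟩
          · rw [Walk.support_cons, Walk.support_cons]
            exact List.mem_cons_of_mem _ (List.mem_cons_of_mem _ (Walk.start_mem_support q'))
          · intro hay
            exact hp.2 (by rw [hay, Walk.support_cons]; exact List.mem_cons_of_mem _ (Walk.start_mem_support q'))

lemma interior_two_neighbors (hT : T.IsTree) {u v w : V}
    (hw : w ∈ (tpath hT u v).support) (hwu : w ≠ u) (hwv : w ≠ v) :
    ∃ x ∈ (tpath hT u v).support, ∃ y ∈ (tpath hT u v).support,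
      T.Adj w x ∧ T.Adj w y ∧ x ≠ y := by
  obtain ⟨x, hxmem, hxadj⟩ :=
    exists_penultimate ((tpath hT u v).takeUntil w hw) (Ne.symm hwu)
  obtain ⟨y, hymem, hyadj⟩ :=
    exists_penultimate ((tpath hT u v).dropUntil w hw).reverse (Ne.symm hwv)
  rw [Walk.support_reverse, List.mem_reverse] at hymem
  refine ⟨x, Walk.support_takeUntil_subset _ hw hxmem,
    y, Walk.support_dropUntil_subset _ hw hymem, hxadj.symm, hyadj.symm, ?_⟩
  intro hxy
  subst hxy
  exact T.irrefl (take_drop_inter hT hw x hxmem hymem ▸ hxadj)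

/-- In a finite induced-connected set of size ≥ 2 there is a "leaf": a vertex without
two distinct neighbours inside the set. -/
lemma exists_tree_leaf (hT : T.IsTree) {S : Set V} (hfin : S.Finite)
    (hconn : (T.induce S).Connected) (hcard : 2 ≤ S.ncard) :
    ∃ v ∈ S, ¬∃ x ∈ S, ∃ y ∈ S, T.Adj v x ∧ T.Adj v y ∧ x ≠ y := by
  obtain ⟨a, b, ha, hb, hab⟩ := (Set.one_lt_ncard_iff hfin).mp hcard
  obtain ⟨v, hv, hvmax'⟩ := Set.Finite.exists_maximalFor (fun z => T.dist a z) S hfin ⟨a, ha⟩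
  have hvmax : ∀ z ∈ S, T.dist a v ≤ T.dist a z → T.dist a v = T.dist a z :=
    fun z hz h => le_antisymm h (hvmax' hz h)
  have hconnT := hT.isConnected
  have hva : v ≠ a := by
    rintro rfl
    have h1 : T.dist v v ≤ T.dist v b := by
      rw [SimpleGraph.dist_self]; exact Nat.zero_le _
    have := hvmax b hb h1
    rw [SimpleGraph.dist_self] at this
    exact hab ((hconnT v b).dist_eq_zero_iff.mp this.symm)
  refine ⟨v, hv, ?_⟩
  rintro ⟨x, hx, y, hy, hvx, hvy, hxy⟩
  obtain ⟨z, hzmem, hzadj⟩ := exists_penultimate (tpath hT a v) (Ne.symm hva)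
  -- pick among x y one different from z
  have key : ∀ c, c ∈ S → T.Adj v c → c ≠ z → False := by
    intro c hc hvc hcz
    by_cases hcp : c ∈ (tpath hT a v).support
    · have h1 := dist_eq_add_of_mem_tpath hT hcp
      have h2 := dist_eq_add_of_mem_tpath hT hzmem
      have hc1 : T.dist c v = 1 := SimpleGraph.dist_eq_one_iff_adj.mpr hvc.symm
      have hz1 : T.dist z v = 1 := SimpleGraph.dist_eq_one_iff_adj.mpr hzadj
      exact hcz (eq_of_mem_tpath_dist_eq hT hcp hzmem (by omega))
    · have hPath : ((tpath hT a v).append (Walk.cons hvc Walk.nil)).IsPath := by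
        apply isPath_append_of_inter (tpath_isPath hT a v) (by simp [Walk.isPath_def, hvc.ne])
        intro w hw1 hw2
        simp only [Walk.support_cons, Walk.support_nil, List.mem_cons,
          List.mem_singleton] at hw2
        rcases hw2 with rfl | rfl | h
        · rfl
        · exact absurd hw1 hcp
        · exact absurd h List.not_mem_nil
      have hEq := tpath_unique hT _ hPath
      have hlen := congrArg Walk.length hEq
      rw [Walk.length_append, tpath_length, tpath_length] at hlen
      simp only [Walk.length_cons, Walk.length_nil] at hlen
      have hle : T.dist a v ≤ T.dist a c := by omega
      have := hvmax c hc hle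
      omega
  by_cases hxz : x = z
  · exact key y hy hvy (by rintro rfl; exact hxy hxz)
  · exact key x hx hvx hxz

section Action
variable {G : Type*} [Group G] [MulAction G V]
variable (hadj : ∀ (g : G) (u v : V), T.Adj u v → T.Adj (g • u) (g • v))
include hadj

/-- A group element acting as a graph homomorphism. -/
def actHom (g : G) : T →g T :=
  ⟨fun x => g • x, fun {u v} h => hadj g u v h⟩

/-- Action on walks. -/
noncomputable def wsmul (g : G) {u v : V} (W : T.Walk u v) : T.Walk (g • u) (g • v) :=
  W.map (actHom hadj g)

lemma wsmul_support (g : G) {u v : V} (W : T.Walk u v) :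
    (wsmul hadj g W).support = W.support.map (fun x => g • x) := by
  simp only [wsmul, Walk.support_map]
  exact Walk.support_map _ _

lemma wsmul_isPath (g : G) {u v : V} {W : T.Walk u v} (hW : W.IsPath) :
    (wsmul hadj g W).IsPath := by
  apply Walk.map_isPath_of_injective _ hW
  intro a b hab
  exact MulAction.injective g hab

lemma wsmul_length (g : G) {u v : V} (W : T.Walk u v) :
    (wsmul hadj g W).length = W.length := by
  simp [wsmul]
  exact Walk.length_map _ _

lemma dist_smul (hconn : T.Connected) (g : G) (u v : V) :
    T.dist (g • u) (g • v) = T.dist u v := by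
  have h : ∀ (g : G) (u v : V), T.dist (g • u) (g • v) ≤ T.dist u v := by
    intro g u v
    obtain ⟨W, hW⟩ := hconn.exists_walk_length_eq_dist u v
    calc T.dist (g • u) (g • v) ≤ (wsmul hadj g W).length := dist_le _
    _ = W.length := wsmul_length hadj g W
    _ = T.dist u v := hW
  refine le_antisymm (h g u v) ?_
  have := h g⁻¹ (g • u) (g • v)
  simpa using this

lemma tpath_smul (hT : T.IsTree) (g : G) (u v : V) :
    (wsmul hadj g (tpath hT u v)) = tpath hT (g • u) (g • v) :=
  tpath_unique hT _ (wsmul_isPath hadj g (tpath_isPath hT u v))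

/-- An element fixing both endpoints fixes the path between them pointwise. -/
lemma fix_tpath (hT : T.IsTree) {g : G} {u v : V} (hu : g • u = u) (hv : g • v = v) :
    ∀ a ∈ (tpath hT u v).support, g • a = a := by
  intro a ha
  have h2 : ((wsmul hadj g (tpath hT u v)).copy hu hv) = tpath hT u v := by
    apply tpath_unique
    rw [Walk.isPath_copy]
    exact wsmul_isPath hadj g (tpath_isPath hT u v)
  have hsup := congrArg Walk.support h2
  rw [Walk.support_copy, wsmul_support] at hsup
  exact list_map_eq_self hsup a ha

/-- The image of an induced-connected set under the action is induced-connected. -/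
lemma induce_connected_smul {S : Set V} (hconn : (T.induce S).Connected) (g : G) :
    (T.induce ((fun x => g • x) '' S)).Connected := by
  rw [SimpleGraph.connected_iff] at hconn ⊢
  obtain ⟨hpre, ⟨⟨x₀, hx₀⟩⟩⟩ := hconn
  refine ⟨?_, ⟨⟨g • x₀, ⟨x₀, hx₀, rfl⟩⟩⟩⟩
  rintro ⟨u, xu, hxu, rfl⟩ ⟨v, xv, hxv, rfl⟩
  obtain ⟨W, hW⟩ := exists_walk_of_reachable_induce hxu hxv (hpre ⟨xu, hxu⟩ ⟨xv, hxv⟩)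
  refine reachable_induce_of_walk (wsmul hadj g W) ?_ _ _
  intro a ha
  rw [wsmul_support, List.mem_map] at ha
  obtain ⟨b, hb, rfl⟩ := ha
  exact ⟨b, hW b hb, rfl⟩




variable (hninv : ∀ (g : G) (u v : V), T.Adj u v → ¬(g • u = v ∧ g • v = u))
include hninv

/-- A subgroup acting on a tree with a finite nonempty invariant induced-connected set of
vertices fixes a vertex. -/
lemma exists_fixed_of_finite_invariant (hT : T.IsTree) (K : Subgroup G) :
    ∀ n : ℕ, ∀ S : Set V, S.ncard = n → S.Finite → S.Nonempty →
    (∀ k ∈ K, ∀ x ∈ S, k • x ∈ S) → (T.induce S).Connected →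
    ∃ c : V, ∀ k ∈ K, k • c = c := by
  intro n
  induction n using Nat.strong_induction_on with
  | _ n ih =>
  intro S hcard hfin hne hinv hconn
  rcases Nat.lt_or_ge n 3 with h3 | h3
  · interval_cases n
    · exact absurd ((Set.ncard_eq_zero hfin).mp hcard) hne.ne_empty
    · obtain ⟨c, rfl⟩ := Set.ncard_eq_one.mp hcard
      exact ⟨c, fun k hk => hinv k hk c rfl⟩
    · obtain ⟨a, b, hab, rfl⟩ := Set.ncard_eq_two.mp hcard
      have ha : a ∈ ({a, b} : Set V) := by simp
      have hb : b ∈ ({a, b} : Set V) := by simp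
      -- a and b are adjacent
      have hsup := tpath_support_mem hT hconn ha hb
      have hlen1 : (tpath hT a b).length + 1 ≤ 2 := by
        have hnd := (tpath_isPath hT a b).support_nodup
        have hcardle : (tpath hT a b).support.toFinset.card ≤ 2 := by
          have hsub : (tpath hT a b).support.toFinset ⊆ {a, b} := by
            intro z hz
            rw [List.mem_toFinset] at hz
            have := hsup z hz
            simpa using this
          calc (tpath hT a b).support.toFinset.card ≤ ({a, b} : Finset V).card :=
                Finset.card_le_card hsub
          _ ≤ 2 := by
                apply le_trans (Finset.card_insert_le a {b})
                simp
        rw [List.toFinset_card_of_nodup hnd, Walk.length_support] at hcardle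
        exact hcardle
      have hlenpos : 1 ≤ (tpath hT a b).length := by
        rcases Nat.eq_zero_or_pos (tpath hT a b).length with h0 | h
        · exfalso
          have := tpath_length hT a b
          rw [h0] at this
          exact hab ((hT.isConnected a b).dist_eq_zero_iff.mp this.symm)
        · exact h
      have hadj_ab : T.Adj a b := by
        rw [← SimpleGraph.dist_eq_one_iff_adj, ← tpath_length hT a b]
        omega
      refine ⟨a, fun k hk => ?_⟩
      by_contra hka
      have hka' : k • a ∈ ({a, b} : Set V) := hinv k hk a ha
      have hkab : k • a = b := by
        rcases hka' with h | h
        · exact absurd h hka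
        · exact h
      have hkb : k • b ∈ ({a, b} : Set V) := hinv k hk b hb
      have hkba : k • b = a := by
        rcases hkb with h | h
        · exact h
        · exfalso
          have : k • a = k • b := by rw [hkab, h]
          exact hab (MulAction.injective k this)
      exact hninv k a b hadj_ab ⟨hkab, hkba⟩
  · -- n ≥ 3 : pass to the set of non-leaves
    set S' : Set V := {v | v ∈ S ∧ ∃ x ∈ S, ∃ y ∈ S, T.Adj v x ∧ T.Adj v y ∧ x ≠ y} with hS'def
    have hS'sub : S' ⊆ S := fun v hv => hv.1
    have hconnT := hT.isConnected
    -- S' is nonempty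
    have hS'ne : S'.Nonempty := by
      obtain ⟨a, b, ha, hb, hab⟩ := (Set.one_lt_ncard_iff hfin).mp (by omega)
      by_cases h2 : 2 ≤ (tpath hT a b).length
      · obtain ⟨v, hvmem, x, hxmem, y, hymem, hvx, hvy, hxy⟩ :=
          middle_of_length_ge_two (tpath hT a b) (tpath_isPath hT a b) h2
        have hsup := tpath_support_mem hT hconn ha hb
        exact ⟨v, hsup v hvmem, x, hsup x hxmem, y, hsup y hymem, hvx, hvy, hxy⟩
      · -- all relevant pairs adjacent; get a third point
        have hadj_ab : T.Adj a b := by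
          rw [← SimpleGraph.dist_eq_one_iff_adj, ← tpath_length hT a b]
          have : 1 ≤ (tpath hT a b).length := by
            rcases Nat.eq_zero_or_pos (tpath hT a b).length with h0 | h
            · exfalso
              have := tpath_length hT a b
              rw [h0] at this
              exact hab ((hconnT a b).dist_eq_zero_iff.mp this.symm)
            · exact h
          omega
        obtain ⟨c, hc⟩ : (S \ {a, b}).Nonempty := by
          apply Set.nonempty_of_ncard_ne_zero
          have h1 : S.ncard ≤ (S \ {a, b}).ncard + ({a, b} : Set V).ncard :=
            Set.ncard_le_ncard_diff_add_ncard S {a, b} (Set.toFinite _)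
          have h2 : ({a, b} : Set V).ncard ≤ 2 := by
            apply le_trans (Set.ncard_insert_le a {b})
            simp
          omega
        obtain ⟨hcS, hcab⟩ := hc
        simp only [Set.mem_insert_iff, Set.mem_singleton_iff, not_or] at hcab
        obtain ⟨hca, hcb⟩ := hcab
        -- the path from a to c : if length ≥ 2 middle works, else a has neighbours b, c
        by_cases h2' : 2 ≤ (tpath hT a c).length
        · obtain ⟨v, hvmem, x, hxmem, y, hymem, hvx, hvy, hxy⟩ :=
            middle_of_length_ge_two (tpath hT a c) (tpath_isPath hT a c) h2'
          have hsup := tpath_support_mem hT hconn ha hcS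
          exact ⟨v, hsup v hvmem, x, hsup x hxmem, y, hsup y hymem, hvx, hvy, hxy⟩
        · have hadj_ac : T.Adj a c := by
            rw [← SimpleGraph.dist_eq_one_iff_adj, ← tpath_length hT a c]
            have : 1 ≤ (tpath hT a c).length := by
              rcases Nat.eq_zero_or_pos (tpath hT a c).length with h0 | h
              · exfalso
                have := tpath_length hT a c
                rw [h0] at this
                exact hca ((hconnT a c).dist_eq_zero_iff.mp this.symm).symm
              · exact h
            omega
          exact ⟨a, ha, b, hb, c, hcS, hadj_ab, hadj_ac, fun h => hcb h.symm⟩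
    -- S' is invariant
    have hS'inv : ∀ k ∈ K, ∀ x ∈ S', k • x ∈ S' := by
      rintro k hk v ⟨hvS, x, hx, y, hy, hvx, hvy, hxy⟩
      exact ⟨hinv k hk v hvS, k • x, hinv k hk x hx, k • y, hinv k hk y hy,
        hadj k v x hvx, hadj k v y hvy, fun h => hxy (MulAction.injective k h)⟩
    -- S' is induced-connected
    have hS'conn : (T.induce S').Connected := by
      rw [SimpleGraph.connected_iff]
      refine ⟨?_, ⟨⟨hS'ne.choose, hS'ne.choose_spec⟩⟩⟩
      rintro ⟨u, hu⟩ ⟨v, hv⟩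
      have hsupS := tpath_support_mem hT hconn (hS'sub hu) (hS'sub hv)
      refine reachable_induce_of_walk (tpath hT u v) ?_ _ _
      intro w hw
      by_cases hwu : w = u
      · subst hwu; exact hu
      by_cases hwv : w = v
      · subst hwv; exact hv
      obtain ⟨x, hxmem, y, hymem, hwx, hwy, hxy⟩ := interior_two_neighbors hT hw hwu hwv
      exact ⟨hsupS w hw, x, hsupS x hxmem, y, hsupS y hymem, hwx, hwy, hxy⟩
    -- S' is strictly smaller
    obtain ⟨v, hvS, hvleaf⟩ := exists_tree_leaf hT hfin hconn (by omega)
    have hvnot : v ∉ S' := fun hv => hvleaf hv.2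
    have hss : S' ⊂ S := ⟨hS'sub, fun hcontra => hvnot (hcontra hvS)⟩
    have hlt : S'.ncard < n := hcard ▸ Set.ncard_lt_ncard hss hfin
    exact ih S'.ncard hlt S' rfl (hfin.subset hS'sub) hS'ne hS'inv hS'conn


omit hninv

/-- The convex hull of a set of vertices in a tree. -/
def hull (hT : T.IsTree) (F : Set V) : Set V :=
  {z | ∃ a ∈ F, ∃ b ∈ F, z ∈ (tpath hT a b).support}

omit hadj in
lemma subset_hull (hT : T.IsTree) (F : Set V) : F ⊆ hull hT F :=
  fun a ha => ⟨a, ha, a, ha, Walk.start_mem_support _⟩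

omit hadj in
lemma hull_finite (hT : T.IsTree) {F : Set V} (hF : F.Finite) : (hull hT F).Finite := by
  have : hull hT F = ⋃ (a ∈ F) (b ∈ F), {z | z ∈ (tpath hT a b).support} := by
    ext z
    simp [hull]
  rw [this]
  exact hF.biUnion fun a _ => hF.biUnion fun b _ => (tpath hT a b).support.finite_toSet

omit hadj in
lemma hull_connected (hT : T.IsTree) {F : Set V} (hF : F.Nonempty) :
    (T.induce (hull hT F)).Connected := by
  obtain ⟨a₀, ha₀⟩ := hF
  have ha₀h : a₀ ∈ hull hT F := subset_hull hT F ha₀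
  rw [SimpleGraph.connected_iff]
  refine ⟨?_, ⟨⟨a₀, ha₀h⟩⟩⟩
  have key : ∀ (z : V) (hz : z ∈ hull hT F), (T.induce (hull hT F)).Reachable ⟨z, hz⟩ ⟨a₀, ha₀h⟩ := by
    intro z hz
    obtain ⟨a, ha, b, hb, hzab⟩ := hz
    have hpath_sub : ∀ w ∈ (tpath hT a b).support, w ∈ hull hT F :=
      fun w hw => ⟨a, ha, b, hb, hw⟩
    have h1 : (T.induce (hull hT F)).Reachable ⟨z, ⟨a, ha, b, hb, hzab⟩⟩ ⟨a, subset_hull hT F ha⟩ := by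
      refine reachable_induce_of_walk (((tpath hT a b).takeUntil z hzab).reverse) ?_ _ _
      intro w hw
      rw [Walk.support_reverse, List.mem_reverse] at hw
      exact hpath_sub w (Walk.support_takeUntil_subset _ hzab hw)
    have h2 : (T.induce (hull hT F)).Reachable ⟨a, subset_hull hT F ha⟩ ⟨a₀, ha₀h⟩ := by
      refine reachable_induce_of_walk (tpath hT a a₀) ?_ _ _
      intro w hw
      exact ⟨a, ha, a₀, ha₀, hw⟩
    exact Reachable.trans h1 h2
  rintro ⟨u, hu⟩ ⟨v, hv⟩
  exact (key u hu).trans (key v hv).symm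

lemma hull_invariant (hT : T.IsTree) {F : Set V} (K : Subgroup G)
    (hinv : ∀ k ∈ K, ∀ x ∈ F, k • x ∈ F) :
    ∀ k ∈ K, ∀ z ∈ hull hT F, k • z ∈ hull hT F := by
  rintro k hk z ⟨a, ha, b, hb, hzab⟩
  refine ⟨k • a, hinv k hk a ha, k • b, hinv k hk b hb, ?_⟩
  rw [← tpath_smul hadj hT k a b, wsmul_support]
  exact List.mem_map_of_mem hzab

include hninv

/-- A subgroup with a finite orbit on a tree fixes a vertex. -/
lemma exists_fixed_of_finite_orbit (hT : T.IsTree) (K : Subgroup G) (x : V)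
    (hfin : {y : V | ∃ k ∈ K, k • x = y}.Finite) : ∃ c : V, ∀ k ∈ K, k • c = c := by
  set F : Set V := {y : V | ∃ k ∈ K, k • x = y} with hF
  have hFne : F.Nonempty := ⟨x, 1, K.one_mem, one_smul _ _⟩
  have hFinv : ∀ k ∈ K, ∀ y ∈ F, k • y ∈ F := by
    rintro k hk y ⟨k', hk', rfl⟩
    exact ⟨k * k', K.mul_mem hk hk', mul_smul k k' x⟩
  apply exists_fixed_of_finite_invariant hadj hninv hT K (hull hT F).ncard (hull hT F) rfl
    (hull_finite hT hfin) (hFne.mono (subset_hull hT F)) (hull_invariant hadj hT K hFinv)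
    (hull_connected hT hFne)


omit hninv

omit hadj in
/-- Additivity of distances through the nearest point of an induced-connected set. -/
lemma nearest_additive (hT : T.IsTree) {S : Set V} (hconn : (T.induce S).Connected)
    {b p : V} (hp : p ∈ S) (hmin : ∀ s ∈ S, T.dist b p ≤ T.dist b s) :
    ∀ s ∈ S, T.dist b s = T.dist b p + T.dist p s := by
  intro s hs
  have hP : ((tpath hT b p).append (tpath hT p s)).IsPath := by
    apply isPath_append_of_inter (tpath_isPath hT b p) (tpath_isPath hT p s)
    intro z hz1 hz2
    have hzS : z ∈ S := tpath_support_mem hT hconn hp hs z hz2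
    have hadd := dist_eq_add_of_mem_tpath hT hz1
    have := hmin z hzS
    have hz0 : T.dist z p = 0 := by omega
    exact (hT.isConnected z p).dist_eq_zero_iff.mp hz0
  have hEq := tpath_unique hT _ hP
  have := congrArg Walk.length hEq
  rw [Walk.length_append, tpath_length, tpath_length, tpath_length] at this
  omega

/-- Two disjoint nonempty invariant subtrees force a fixed vertex. -/
lemma exists_fixed_of_disjoint_subtrees (hT : T.IsTree) (K : Subgroup G) {S₁ S₂ : Set V}
    (h1 : (T.induce S₁).Connected) (h2 : (T.induce S₂).Connected)
    (hne1 : S₁.Nonempty) (hne2 : S₂.Nonempty)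
    (hdisj : ∀ z, z ∈ S₁ → z ∈ S₂ → False)
    (hinv1 : ∀ k ∈ K, ∀ x ∈ S₁, k • x ∈ S₁) (hinv2 : ∀ k ∈ K, ∀ x ∈ S₂, k • x ∈ S₂) :
    ∃ c : V, ∀ k ∈ K, k • c = c := by
  classical
  have hconnT := hT.isConnected
  have dcomm : ∀ a b : V, T.dist a b = T.dist b a := fun _ _ => SimpleGraph.dist_comm
  set D : Set ℕ := {n | ∃ a ∈ S₁, ∃ b ∈ S₂, T.dist a b = n} with hD
  have hDne : D.Nonempty := ⟨_, hne1.choose, hne1.choose_spec, hne2.choose, hne2.choose_spec, rfl⟩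
  obtain ⟨p, hp, q, hq, hpq⟩ := Nat.sInf_mem hDne
  set d : ℕ := sInf D with hd
  have hmin : ∀ a ∈ S₁, ∀ b ∈ S₂, d ≤ T.dist a b := fun a ha b hb =>
    Nat.sInf_le ⟨a, ha, b, hb, rfl⟩
  have hdpos : 1 ≤ d := by
    rcases Nat.eq_zero_or_pos d with h0 | h
    · exfalso
      rw [h0] at hpq
      exact hdisj q (((hconnT p q).dist_eq_zero_iff.mp hpq) ▸ hp) hq
    · exact h
  -- the bridge pair is unique
  have huniq : ∀ p₂ ∈ S₁, ∀ q₂ ∈ S₂, T.dist p₂ q₂ = d → p₂ = p ∧ q₂ = q := by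
    intro p₂ hp₂ q₂ hq₂ hpq₂
    have A_p : ∀ t ∈ S₂, T.dist p t = d + T.dist q t := by
      intro t ht
      have := nearest_additive hT h2 hq (fun s hs => by
        rw [hpq]; exact hmin p hp s hs) t ht
      rw [this, hpq]
    have A_q : ∀ a ∈ S₁, T.dist q a = d + T.dist p a := by
      intro a ha
      have := nearest_additive hT h1 hp (fun s hs => by
        rw [dcomm q p, hpq]
        calc d ≤ T.dist s q := hmin s hs q hq
        _ = T.dist q s := (dcomm q s).symm) a ha
      rw [this, dcomm q p, hpq]
    have A_p₂ : ∀ t ∈ S₂, T.dist p₂ t = d + T.dist q₂ t := by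
      intro t ht
      have := nearest_additive hT h2 hq₂ (fun s hs => by
        rw [hpq₂]; exact hmin p₂ hp₂ s hs) t ht
      rw [this, hpq₂]
    have A_q₂ : ∀ a ∈ S₁, T.dist q₂ a = d + T.dist p₂ a := by
      intro a ha
      have := nearest_additive hT h1 hp₂ (fun s hs => by
        rw [dcomm q₂ p₂, hpq₂]
        calc d ≤ T.dist s q₂ := hmin s hs q₂ hq₂
        _ = T.dist q₂ s := (dcomm q₂ s).symm) a ha
      rw [this, dcomm q₂ p₂, hpq₂]
    have h_eq1 : T.dist p q₂ = d + T.dist q q₂ := A_p q₂ hq₂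
    have h_eq2 : T.dist q₂ p = d + T.dist p₂ p := A_q₂ p hp
    have hee : T.dist q q₂ = T.dist p₂ p := by
      rw [dcomm q₂ p] at h_eq2
      omega
    set e : ℕ := T.dist p₂ p with he
    have hqP : q ∈ (tpath hT p q₂).support := by
      apply mem_tpath_of_dist_add hT
      rw [hpq, h_eq1, hee]
    have hp₂P : p₂ ∈ (tpath hT p q₂).support := by
      apply mem_tpath_of_dist_add hT
      rw [dcomm p p₂, hpq₂, h_eq1, hee]
      omega
    have hsplit := Walk.take_spec (tpath hT p q₂) hqP
    have htake : ((tpath hT p q₂).takeUntil q hqP) = tpath hT p q :=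
      tpath_unique hT _ ((tpath_isPath hT p q₂).takeUntil hqP)
    have hdrop : ((tpath hT p q₂).dropUntil q hqP) = tpath hT q q₂ :=
      tpath_unique hT _ ((tpath_isPath hT p q₂).dropUntil hqP)
    have he0 : e = 0 := by
      rw [← hsplit, Walk.mem_support_append_iff] at hp₂P
      rcases hp₂P with hmem | hmem
      · rw [htake] at hmem
        have hadd := dist_eq_add_of_mem_tpath hT hmem
        have h3 : T.dist p p₂ = e := dcomm p p₂
        have h4 : T.dist p₂ q = d + e := by
          rw [A_p₂ q hq, dcomm q₂ q, hee]
        omega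
      · rw [hdrop] at hmem
        have hadd := dist_eq_add_of_mem_tpath hT hmem
        have h4 : T.dist q p₂ = d + e := by
          rw [dcomm q p₂, A_p₂ q hq, dcomm q₂ q, hee]
        have h5 : T.dist q q₂ = e := hee
        omega
    constructor
    · exact (hconnT p₂ p).dist_eq_zero_iff.mp he0
    · have h6 : T.dist q q₂ = 0 := by rw [hee]; exact he0
      exact ((hconnT q q₂).dist_eq_zero_iff.mp h6).symm
  refine ⟨p, fun k hk => ?_⟩
  have h1' : k • p ∈ S₁ := hinv1 k hk p hp
  have h2' : k • q ∈ S₂ := hinv2 k hk q hq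
  have h3' : T.dist (k • p) (k • q) = d := by
    rw [dist_smul hadj hconnT, hpq]
  exact (huniq _ h1' _ h2' h3').1


/-- An invariant subtree for a subgroup. -/
def InvSubtree (T : SimpleGraph V) {G : Type*} [Group G] [MulAction G V]
    (K : Subgroup G) (S : Set V) : Prop :=
  S.Nonempty ∧ (∀ k ∈ K, ∀ x ∈ S, k • x ∈ S) ∧ (T.induce S).Connected

/-- The minimum invariant subtree for a subgroup. -/
def IsMinSubtree (T : SimpleGraph V) {G : Type*} [Group G] [MulAction G V]
    (K : Subgroup G) (S : Set V) : Prop :=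
  InvSubtree T K S ∧ ∀ W, InvSubtree T K W → S ⊆ W

omit hninv

lemma isMinSubtree_unique {K : Subgroup G} {S S' : Set V}
    (h : IsMinSubtree T K S) (h' : IsMinSubtree T K S') : S = S' :=
  le_antisymm (h.2 S' h'.1) (h'.2 S h.1)

/-- Construction of a cocompact invariant subtree for a finitely generated subgroup. -/
lemma exists_cocompact_subtree (hT : T.IsTree) (K : Subgroup G) (hFG : K.FG) (x₀ : V) :
    ∃ P : Finset V, x₀ ∈ P ∧
      InvSubtree T K {z : V | ∃ k ∈ K, ∃ p ∈ P, k • p = z} := by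
  classical
  obtain ⟨Sgen, hSgen⟩ := hFG
  set P : Finset V := insert x₀ (Sgen.biUnion fun s => (tpath hT x₀ (s • x₀)).support.toFinset)
    with hP
  set Z : Set V := {z : V | ∃ k ∈ K, ∃ p ∈ P, k • p = z} with hZdef
  have hx₀P : x₀ ∈ P := Finset.mem_insert_self _ _
  have hPZ : ∀ p ∈ P, (p : V) ∈ Z := fun p hp => ⟨1, K.one_mem, p, hp, one_smul _ _⟩
  have hZinv : ∀ k ∈ K, ∀ x ∈ Z, k • x ∈ Z := by
    rintro k hk x ⟨k', hk', p, hp, rfl⟩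
    exact ⟨k * k', K.mul_mem hk hk', p, hp, mul_smul k k' p⟩
  have hx₀Z : x₀ ∈ Z := hPZ x₀ hx₀P
  -- the path to a generator image is inside P
  have hgenpath : ∀ s ∈ Sgen, ∀ a ∈ (tpath hT x₀ (s • x₀)).support, a ∈ P := by
    intro s hs a ha
    apply Finset.mem_insert_of_mem
    exact Finset.mem_biUnion.mpr ⟨s, hs, List.mem_toFinset.mpr ha⟩
  -- smul transfer for walks with support in Z
  have hsmulW : ∀ k ∈ K, ∀ {a b : V} (W : T.Walk a b), (∀ x ∈ W.support, x ∈ Z) →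
      ∀ x ∈ (wsmul hadj k W).support, x ∈ Z := by
    intro k hk a b W hW x hx
    rw [wsmul_support] at hx
    obtain ⟨y, hy, rfl⟩ := List.mem_map.mp hx
    exact hZinv k hk y (hW y hy)
  -- every element of P reaches x₀ within Z
  have hPreach : ∀ p ∈ P, ∃ W : T.Walk p x₀, ∀ x ∈ W.support, x ∈ Z := by
    intro p hp
    rw [hP, Finset.mem_insert] at hp
    rcases hp with rfl | hp
    · exact ⟨Walk.nil' p, by intro x hx; simp at hx; subst hx; exact hx₀Z⟩
    · obtain ⟨s, hs, hps⟩ := Finset.mem_biUnion.mp hp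
      rw [List.mem_toFinset] at hps
      refine ⟨((tpath hT x₀ (s • x₀)).takeUntil p hps).reverse, ?_⟩
      intro x hx
      rw [Walk.support_reverse, List.mem_reverse] at hx
      exact hPZ x (hgenpath s hs x (Walk.support_takeUntil_subset _ hps hx))
  -- generator elements lie in K
  have hSgenK : ∀ s ∈ Sgen, (s : G) ∈ K := by
    intro s hs
    rw [← hSgen]
    exact Subgroup.subset_closure hs
  -- every k • x₀ reaches x₀ within Z
  have horbit : ∀ k ∈ K, ∃ W : T.Walk (k • x₀) x₀, ∀ x ∈ W.support, x ∈ Z := by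
    intro k hk
    rw [← hSgen] at hk
    induction hk using Subgroup.closure_induction with
    | mem s hs =>
        refine ⟨(tpath hT x₀ (s • x₀)).reverse, ?_⟩
        intro x hx
        rw [Walk.support_reverse, List.mem_reverse] at hx
        exact hPZ x (hgenpath s hs x hx)
    | one =>
        refine ⟨(Walk.nil' x₀).copy (one_smul G x₀).symm rfl, ?_⟩
        intro x hx
        rw [Walk.support_copy] at hx
        simp at hx
        subst hx
        exact hx₀Z
    | mul x y hx hy ihx ihy =>
        obtain ⟨Wx, hWx⟩ := ihx
        obtain ⟨Wy, hWy⟩ := ihy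
        have hxK : x ∈ K := by rw [← hSgen]; exact hx
        refine ⟨((wsmul hadj x Wy).copy (by rw [mul_smul]) rfl).append Wx, ?_⟩
        intro z hz
        rw [Walk.mem_support_append_iff] at hz
        rcases hz with hz | hz
        · rw [Walk.support_copy] at hz
          exact hsmulW x hxK Wy hWy z hz
        · exact hWx z hz
    | inv x hx ihx =>
        obtain ⟨Wx, hWx⟩ := ihx
        have hxK : x⁻¹ ∈ K := by rw [← hSgen]; exact Subgroup.inv_mem _ hx
        refine ⟨((wsmul hadj x⁻¹ Wx).copy (inv_smul_smul x x₀) rfl).reverse, ?_⟩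
        intro z hz
        rw [Walk.support_reverse, List.mem_reverse, Walk.support_copy] at hz
        exact hsmulW x⁻¹ hxK Wx hWx z hz
  -- every element of Z reaches x₀ within Z
  have hreach : ∀ z ∈ Z, ∃ W : T.Walk z x₀, ∀ x ∈ W.support, x ∈ Z := by
    rintro z ⟨k, hk, p, hp, rfl⟩
    obtain ⟨W₁, hW₁⟩ := hPreach p hp
    obtain ⟨W₂, hW₂⟩ := horbit k hk
    refine ⟨(wsmul hadj k W₁).append W₂, ?_⟩
    intro x hx
    rw [Walk.mem_support_append_iff] at hx
    rcases hx with hx | hx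
    · exact hsmulW k hk W₁ hW₁ x hx
    · exact hW₂ x hx
  refine ⟨P, hx₀P, ⟨x₀, hx₀Z⟩, hZinv, ?_⟩
  rw [SimpleGraph.connected_iff]
  refine ⟨?_, ⟨⟨x₀, hx₀Z⟩⟩⟩
  rintro ⟨u, hu⟩ ⟨v, hv⟩
  obtain ⟨Wu, hWu⟩ := hreach u hu
  obtain ⟨Wv, hWv⟩ := hreach v hv
  exact (reachable_induce_of_walk Wu hWu hu hx₀Z).trans
    (reachable_induce_of_walk Wv hWv hv hx₀Z).symm


include hninv

/-- If `K` fixes no vertex, any two invariant subtrees intersect. -/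
lemma invSubtree_inter_nonempty (hT : T.IsTree) {K : Subgroup G}
    (hnofix : ¬∃ c : V, ∀ k ∈ K, k • c = c) {S₁ S₂ : Set V}
    (h1 : InvSubtree T K S₁) (h2 : InvSubtree T K S₂) : (S₁ ∩ S₂).Nonempty := by
  by_contra hemp
  rw [Set.not_nonempty_iff_eq_empty] at hemp
  refine hnofix (exists_fixed_of_disjoint_subtrees hadj hT K h1.2.2 h2.2.2 h1.1 h2.1
    (fun z hz1 hz2 => ?_) h1.2.1 h2.2.1)
  have : z ∈ S₁ ∩ S₂ := ⟨hz1, hz2⟩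
  rw [hemp] at this
  exact this

/-- Existence of the minimum invariant subtree for a finitely generated subgroup
with no fixed vertex. -/
lemma exists_isMinSubtree (hT : T.IsTree) {K : Subgroup G} (hFG : K.FG)
    (hnofix : ¬∃ c : V, ∀ k ∈ K, k • c = c) :
    ∃ S : Set V, IsMinSubtree T K S := by
  classical
  have hne : Nonempty V := hT.isConnected.nonempty
  obtain ⟨x₀⟩ := hne
  obtain ⟨P, hx₀P, hZinv⟩ := exists_cocompact_subtree hadj hT K hFG x₀
  set Z : Set V := {z : V | ∃ k ∈ K, ∃ p ∈ P, k • p = z} with hZdef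
  set F : Set (Set V) := {S | InvSubtree T K S ∧ S ⊆ Z} with hF
  have hZF : Z ∈ F := ⟨hZinv, subset_rfl⟩
  set μ : Set V → ℕ := fun S => (P.filter (fun p => ∃ k ∈ K, k • p ∈ S)).card with hμ
  set I : Set ℕ := μ '' F with hI
  have hIne : I.Nonempty := ⟨μ Z, Z, hZF, rfl⟩
  obtain ⟨S₀, hS₀F, hS₀v⟩ := Nat.sInf_mem hIne
  -- subset together with equal measure forces equality
  have key : ∀ S S' : Set V, S ∈ F → S' ∈ F → S ⊆ S' → μ S = μ S' → S' ⊆ S := by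
    intro S S' hSF hS'F hSS' hμeq x hx
    obtain ⟨k, hk, p, hp, hkp⟩ := hS'F.2 hx
    have hsub : (P.filter (fun p => ∃ k ∈ K, k • p ∈ S)) ⊆
        (P.filter (fun p => ∃ k ∈ K, k • p ∈ S')) := by
      apply Finset.monotone_filter_right
      rintro q _ ⟨k', hk', hq⟩
      exact ⟨k', hk', hSS' hq⟩
    have heq : (P.filter (fun p => ∃ k ∈ K, k • p ∈ S)) =
        (P.filter (fun p => ∃ k ∈ K, k • p ∈ S')) :=
      Finset.eq_of_subset_of_card_le hsub (le_of_eq hμeq.symm)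
    have hpmem : p ∈ P.filter (fun p => ∃ k ∈ K, k • p ∈ S') :=
      Finset.mem_filter.mpr ⟨hp, k, hk, hkp ▸ hx⟩
    rw [← heq, Finset.mem_filter] at hpmem
    obtain ⟨-, k', hk', hk'p⟩ := hpmem
    have : (k * k'⁻¹) • (k' • p) ∈ S := by
      have hmem : k * k'⁻¹ ∈ K := K.mul_mem hk (K.inv_mem hk')
      exact hSF.1.2.1 _ hmem _ hk'p
    rw [smul_smul, mul_assoc, inv_mul_cancel, mul_one, hkp] at this
    exact this
  refine ⟨S₀, hS₀F.1, ?_⟩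
  intro W hW
  have hint_ne : (W ∩ S₀).Nonempty :=
    invSubtree_inter_nonempty hadj hninv hT hnofix hW hS₀F.1
  have hintF : (W ∩ S₀) ∈ F := by
    refine ⟨⟨hint_ne, ?_, ?_⟩, (Set.inter_subset_right).trans hS₀F.2⟩
    · rintro k hk x ⟨hx1, hx2⟩
      exact ⟨hW.2.1 k hk x hx1, hS₀F.1.2.1 k hk x hx2⟩
    · exact induce_connected_inter hT hW.2.2 hS₀F.1.2.2 hint_ne
  have hμle : μ (W ∩ S₀) ≤ μ S₀ := by
    apply Finset.card_le_card
    apply Finset.monotone_filter_right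
    rintro q _ ⟨k', hk', hq⟩
    exact ⟨k', hk', hq.2⟩
  have hμge : sInf I ≤ μ (W ∩ S₀) := Nat.sInf_le ⟨W ∩ S₀, hintF, rfl⟩
  have hμeq : μ (W ∩ S₀) = μ S₀ := by omega
  have := key (W ∩ S₀) S₀ hintF hS₀F Set.inter_subset_right hμeq
  exact fun x hx => (this hx).1

omit hninv

/-- Conjugation carries minimum subtrees to minimum subtrees. -/
lemma isMinSubtree_conj {K K' : Subgroup G} {S : Set V} (h : IsMinSubtree T K S) (g : G)
    (hKK' : ∀ x : G, x ∈ K' ↔ g⁻¹ * x * g ∈ K) :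
    IsMinSubtree T K' ((fun z => g • z) '' S) := by
  have himg : ∀ (g₀ : G) (W : Set V), (∀ k ∈ K, ∀ x ∈ W, k • x ∈ W) → True := fun _ _ _ => trivial
  constructor
  · refine ⟨h.1.1.image _, ?_, induce_connected_smul hadj h.1.2.2 g⟩
    rintro k hk x ⟨y, hy, rfl⟩
    refine ⟨(g⁻¹ * k * g) • y, h.1.2.1 _ ((hKK' k).mp hk) y hy, ?_⟩
    show g • ((g⁻¹ * k * g) • y) = k • (g • y)
    rw [smul_smul, smul_smul]
    congr 1
    group
  · intro W hW
    have hWpre : InvSubtree T K ((fun z => g⁻¹ • z) '' W) := by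
      refine ⟨hW.1.image _, ?_, induce_connected_smul hadj hW.2.2 g⁻¹⟩
      rintro k hk x ⟨y, hy, rfl⟩
      refine ⟨(g * k * g⁻¹) • y, hW.2.1 _ ?_ y hy, ?_⟩
      · rw [hKK']
        simpa [mul_assoc] using hk
      · show g⁻¹ • ((g * k * g⁻¹) • y) = k • (g⁻¹ • y)
        rw [smul_smul, smul_smul]
        congr 1
        group
    have hsub := h.2 _ hWpre
    rintro x ⟨y, hy, rfl⟩
    obtain ⟨w, hw, hww⟩ := hsub hy
    have hww' : g⁻¹ • w = y := hww
    show g • y ∈ W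
    rw [← hww', smul_inv_smul]
    exact hw

/-- A minimum subtree of a subgroup normalized by `Q` is `Q`-invariant. -/
lemma isMinSubtree_invariant_of_normalized {M Q : Subgroup G} {S : Set V}
    (h : IsMinSubtree T M S) (hMQ : M ≤ Q)
    (hnorm : ∀ q ∈ Q, ∀ m ∈ M, q * m * q⁻¹ ∈ M) :
    ∀ q ∈ Q, ∀ x ∈ S, q • x ∈ S := by
  intro q hq x hx
  have hconj : ∀ y : G, y ∈ M ↔ q⁻¹ * y * q ∈ M := by
    intro y
    constructor
    · intro hy
      have := hnorm q⁻¹ (Q.inv_mem hq) y hy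
      simpa using this
    · intro hy
      have := hnorm q hq _ hy
      simpa [mul_assoc] using this
  have himg : IsMinSubtree T M ((fun z => q • z) '' S) := by
    have := isMinSubtree_conj hadj h q hconj
    exact this
  have heq : ((fun z => q • z) '' S) = S := isMinSubtree_unique hadj himg h
  rw [← heq]
  exact ⟨x, hx, rfl⟩

include hninv

/-- No fixed vertex passes to finite-index subgroups. -/
lemma nofix_of_finiteIndex (hT : T.IsTree) {H K : Subgroup G} (hHK : H ≤ K)
    (hidx : H.relIndex K ≠ 0)
    (hnofix : ¬∃ c : V, ∀ k ∈ K, k • c = c) :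
    ¬∃ c : V, ∀ h ∈ H, h • c = c := by
  rintro ⟨c, hc⟩
  apply hnofix
  apply exists_fixed_of_finite_orbit hadj hninv hT K c
  -- the orbit is the image of the finite quotient K / H
  haveI : (H.subgroupOf K).FiniteIndex := ⟨hidx⟩
  haveI : Finite (↥K ⧸ H.subgroupOf K) := inferInstance
  have hcompat : ∀ a b : ↥K, (QuotientGroup.leftRel (H.subgroupOf K)).r a b → ((a : G) • c : V) = (b : G) • c := by
    intro a b hab
    rw [QuotientGroup.leftRel_apply] at hab
    have h1 : ((a⁻¹ * b : ↥K) : G) • c = c := hc _ hab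
    have h2 : ((a : G)⁻¹ * (b : G)) • c = c := by exact_mod_cast h1
    calc (a : G) • c = (a : G) • ((((a : G))⁻¹ * (b : G)) • c) := by rw [h2]
    _ = (b : G) • c := by rw [smul_smul]; congr 1; group
  set f : ↥K ⧸ H.subgroupOf K → V := Quotient.lift (fun k : ↥K => (k : G) • c) hcompat with hf
  apply Set.Finite.subset (Set.finite_range f)
  rintro y ⟨k, hk, rfl⟩
  exact ⟨Quotient.mk _ ⟨k, hk⟩, rfl⟩


omit hninv in
lemma minSubtree_eq_of_normalized {M Q : Subgroup G} {SM SQ : Set V}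
    (hM : IsMinSubtree T M SM) (hQ : IsMinSubtree T Q SQ) (hMQ : M ≤ Q)
    (hnorm : ∀ q ∈ Q, ∀ m ∈ M, q * m * q⁻¹ ∈ M) : SM = SQ := by
  have hinv := isMinSubtree_invariant_of_normalized hadj hM hMQ hnorm
  have h1 : InvSubtree T Q SM := ⟨hM.1.1, hinv, hM.1.2.2⟩
  have h2 : InvSubtree T M SQ := ⟨hQ.1.1, fun m hm => hQ.1.2.1 m (hMQ hm), hQ.1.2.2⟩
  exact le_antisymm (hM.2 SQ h2) (hQ.2 SM h1)

omit hadj hninv in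
lemma fg_of_le_finiteIndex {H K : Subgroup G} (hHK : H ≤ K)
    (hidx : H.relIndex K ≠ 0) (hKfg : K.FG) : H.FG := by
  haveI : Group.FG ↥K := (Group.fg_iff_subgroup_fg K).mpr hKfg
  haveI : (H.subgroupOf K).FiniteIndex := ⟨hidx⟩
  haveI : Group.FG ↥(H.subgroupOf K) := Subgroup.fg_of_index_ne_zero _
  have hsurj : Function.Surjective (Subgroup.subgroupOfEquivOfLe hHK).toMonoidHom :=
    (Subgroup.subgroupOfEquivOfLe hHK).surjective
  haveI : Group.FG ↥H := Group.fg_of_surjective hsurj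
  exact (Group.fg_iff_subgroup_fg H).mp this

/-- Minimum subtrees agree for a finite-index inclusion. -/
lemma minSubtree_eq_of_le_finiteIndex (hT : T.IsTree) {H K : Subgroup G} (hHK : H ≤ K)
    (hidx : H.relIndex K ≠ 0) (hKfg : K.FG)
    (hnfK : ¬∃ c : V, ∀ k ∈ K, k • c = c) {SH SK : Set V}
    (hH : IsMinSubtree T H SH) (hK : IsMinSubtree T K SK) : SH = SK := by
  classical
  haveI hFIH : (H.subgroupOf K).FiniteIndex := ⟨hidx⟩
  set N : Subgroup ↥K := (H.subgroupOf K).normalCore with hN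
  set M : Subgroup G := N.map K.subtype with hM
  have hMH : M ≤ H := by
    have h1 : M ≤ (H.subgroupOf K).map K.subtype :=
      Subgroup.map_mono (Subgroup.normalCore_le _)
    rw [Subgroup.subgroupOf_map_subtype] at h1
    exact h1.trans inf_le_left
  have hMK : M ≤ K := by
    rw [hM]
    exact Subgroup.map_subtype_le N
  have hMN : M.subgroupOf K = N := by
    rw [hM, Subgroup.subgroupOf]
    exact Subgroup.comap_map_eq_self_of_injective K.subtype_injective N
  have hMidx : M.relIndex K ≠ 0 := by
    show (M.subgroupOf K).index ≠ 0
    rw [hMN]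
    exact (Subgroup.finiteIndex_normalCore (H := H.subgroupOf K)).index_ne_zero
  have hMnorm : ∀ q ∈ K, ∀ m ∈ M, q * m * q⁻¹ ∈ M := by
    intro q hq m hm
    obtain ⟨mhat, hmhat, rfl⟩ := hm
    have hconj := (Subgroup.normalCore_normal (H.subgroupOf K)).conj_mem mhat hmhat ⟨q, hq⟩
    exact ⟨_, hconj, rfl⟩
  have hMfg : M.FG := fg_of_le_finiteIndex hMK hMidx hKfg
  have hMnf : ¬∃ c : V, ∀ m ∈ M, m • c = c :=
    nofix_of_finiteIndex hadj hninv hT hMK hMidx hnfK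
  obtain ⟨SM, hSM⟩ := exists_isMinSubtree hadj hninv hT hMfg hMnf
  have e1 : SM = SK := minSubtree_eq_of_normalized hadj hSM hK hMK hMnorm
  have e2 : SM = SH := minSubtree_eq_of_normalized hadj hSM hH hMH
    (fun q hq m hm => hMnorm q (hHK hq) m hm)
  rw [← e2, e1]

/-- Minimum subtrees agree for commensurable subgroups. -/
lemma minSubtree_eq_of_commensurable (hT : T.IsTree) {K₁ K₂ : Subgroup G}
    (hFG1 : K₁.FG) (hFG2 : K₂.FG)
    (hnf1 : ¬∃ c : V, ∀ k ∈ K₁, k • c = c) (hnf2 : ¬∃ c : V, ∀ k ∈ K₂, k • c = c)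
    (hcomm : Subgroup.Commensurable K₁ K₂) {S₁ S₂ : Set V}
    (h1 : IsMinSubtree T K₁ S₁) (h2 : IsMinSubtree T K₂ S₂) : S₁ = S₂ := by
  set H : Subgroup G := K₁ ⊓ K₂ with hH
  have hidx1 : H.relIndex K₁ ≠ 0 := by
    rw [hH, Subgroup.inf_relIndex_left]
    exact hcomm.2
  have hidx2 : H.relIndex K₂ ≠ 0 := by
    rw [hH, Subgroup.inf_relIndex_right]
    exact hcomm.1
  have hHfg : H.FG := fg_of_le_finiteIndex inf_le_left hidx1 hFG1
  have hHnf : ¬∃ c : V, ∀ k ∈ H, k • c = c :=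
    nofix_of_finiteIndex hadj hninv hT inf_le_left hidx1 hnf1
  obtain ⟨SH, hSH⟩ := exists_isMinSubtree hadj hninv hT hHfg hHnf
  have e1 : SH = S₁ :=
    minSubtree_eq_of_le_finiteIndex hadj hninv hT inf_le_left hidx1 hFG1 hnf1 hSH h1
  have e2 : SH = S₂ :=
    minSubtree_eq_of_le_finiteIndex hadj hninv hT inf_le_right hidx2 hFG2 hnf2 hSH h2
  rw [← e1, e2]


end Action

section OrbitIndex
variable {G' : Type*} [Group G'] {W : Type*} [MulAction G' W]

/-- If a subgroup fixing `x` has finite relative index in `K`, the `K`-orbit of `x` is finite. -/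
lemma orbitSet_finite (K : Subgroup G') (x : W) {H : Subgroup G'}
    (hfix : ∀ h ∈ H, h • x = x) (hidx : H.relIndex K ≠ 0) :
    {y : W | ∃ k ∈ K, k • x = y}.Finite := by
  haveI : (H.subgroupOf K).FiniteIndex := ⟨hidx⟩
  haveI : Finite (↥K ⧸ H.subgroupOf K) := inferInstance
  have hcompat : ∀ a b : ↥K, (QuotientGroup.leftRel (H.subgroupOf K)).r a b →
      ((a : G') • x : W) = (b : G') • x := by
    intro a b hab
    rw [QuotientGroup.leftRel_apply] at hab
    have h1 : ((a⁻¹ * b : ↥K) : G') • x = x := hfix _ hab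
    have h2 : ((a : G')⁻¹ * (b : G')) • x = x := by exact_mod_cast h1
    calc (a : G') • x = (a : G') • ((((a : G'))⁻¹ * (b : G')) • x) := by rw [h2]
    _ = (b : G') • x := by rw [smul_smul]; congr 1; group
  set q : ↥K ⧸ H.subgroupOf K → W := Quotient.lift (fun k : ↥K => (k : G') • x) hcompat with hq
  apply Set.Finite.subset (Set.finite_range q)
  rintro y ⟨k, hk, rfl⟩
  exact ⟨Quotient.mk _ ⟨k, hk⟩, rfl⟩

/-- Conversely, a finite `K`-orbit means the stabilizer has finite relative index in `K`. -/
lemma stab_relIndex_ne_zero_of_orbit_finite (K : Subgroup G') (x : W)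
    (hfin : {y : W | ∃ k ∈ K, k • x = y}.Finite) :
    (MulAction.stabilizer G' x).relIndex K ≠ 0 := by
  show ((MulAction.stabilizer G' x).subgroupOf K).index ≠ 0
  haveI : Finite {y : W | ∃ k ∈ K, k • x = y} := hfin.to_subtype
  have hcompat : ∀ a b : ↥K,
      (QuotientGroup.leftRel ((MulAction.stabilizer G' x).subgroupOf K)).r a b →
      (⟨(a : G') • x, a, a.2, rfl⟩ : {y : W | ∃ k ∈ K, k • x = y}) = ⟨(b : G') • x, b, b.2, rfl⟩ := by
    intro a b hab
    rw [QuotientGroup.leftRel_apply] at hab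
    have h1 : ((a⁻¹ * b : ↥K) : G') • x = x := hab
    have h2 : ((a : G')⁻¹ * (b : G')) • x = x := by exact_mod_cast h1
    apply Subtype.ext
    show (a : G') • x = (b : G') • x
    calc (a : G') • x = (a : G') • ((((a : G'))⁻¹ * (b : G')) • x) := by rw [h2]
    _ = (b : G') • x := by rw [smul_smul]; congr 1; group
  set q : ↥K ⧸ (MulAction.stabilizer G' x).subgroupOf K → {y : W | ∃ k ∈ K, k • x = y} :=
    Quotient.lift (fun k : ↥K => ⟨(k : G') • x, k, k.2, rfl⟩) hcompat with hq
  have hinj : Function.Injective q := by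
    intro a b
    induction a using Quotient.ind with | _ a =>
    induction b using Quotient.ind with | _ b =>
    intro hab
    apply Quotient.sound
    have h1 : ((a : G') • x : W) = (b : G') • x := congrArg Subtype.val hab
    show (QuotientGroup.leftRel ((MulAction.stabilizer G' x).subgroupOf K)).r a b
    rw [QuotientGroup.leftRel_apply]
    show ((a⁻¹ * b : ↥K) : G') ∈ MulAction.stabilizer G' x
    rw [MulAction.mem_stabilizer_iff]
    push_cast
    rw [mul_smul, ← h1, smul_smul]
    simp
  haveI : Finite (↥K ⧸ (MulAction.stabilizer G' x).subgroupOf K) := Finite.of_injective q hinj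
  exact Subgroup.index_ne_zero_of_finite

open Pointwise in
lemma conjAct_smul_eq_map (g : G') (H : Subgroup G') :
    (ConjAct.toConjAct g) • H = H.map (MulAut.conj g).toMonoidHom := by
  ext x
  rw [Subgroup.mem_pointwise_smul_iff_inv_smul_mem, Subgroup.mem_map_equiv]
  have h1 : (ConjAct.toConjAct g)⁻¹ • x = g⁻¹ * x * g := by
    rw [← ConjAct.toConjAct_inv, ConjAct.smul_def, ConjAct.ofConjAct_toConjAct]
    group
  have h2 : (MulAut.conj g).symm x = g⁻¹ * x * g := by
    simp [MulAut.conj_symm_apply]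
  rw [h1, h2]

end OrbitIndex
end GTreeAux


open GTreeAux

/-- If `Y` is a non-trivial locally finite `G`-tree with finitely generated vertex
stabilizers, `X` is a cocompact `G`-tree admitting a surjective `G`-equivariant
simplicial map onto `Y`, and `X` is minimal, then `X` is locally finite. -/
theorem locallyFinite_of_minimal_of_simplicial_onto_locallyFinite
    (G : Type*) [Group G] (VX VY : Type*) [MulAction G VX] [MulAction G VY]
    (X : SimpleGraph VX) (Y : SimpleGraph VY)
    (hX : IsGTree G X) (hY : IsGTree G Y)
    -- Y is non-trivial
    (hYnontriv : ¬ ∃ v : VY, ∀ g : G, g • v = v)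
    -- Y is locally finite
    (hYlf : ∀ v : VY, (Y.neighborSet v).Finite)
    -- vertex stabilizers of Y are finitely generated
    (hYfg : ∀ v : VY, (MulAction.stabilizer G v).FG)
    -- X is cocompact
    (hXcc : Finite (Quotient (MulAction.orbitRel G VX)))
    -- a surjective G-equivariant simplicial map X → Y exists
    (hmap : ∃ f : VX → VY, (∀ (g : G) (x : VX), f (g • x) = g • f x) ∧
      Function.Surjective f ∧
      (∀ u v : VX, X.Adj u v → f u = f v ∨ Y.Adj (f u) (f v)))
    -- X is minimal
    (hXmin : ∀ S : Set VX, S.Nonempty → (∀ (g : G), ∀ v ∈ S, g • v ∈ S) →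
      (X.induce S).Connected → S = Set.univ) :
    ∀ v : VX, (X.neighborSet v).Finite := by
  classical
  obtain ⟨f, hfequi, hfsurj, hfsimp⟩ := hmap
  obtain ⟨hXtree, hXadj, hXninv⟩ := hX
  obtain ⟨hYtree, hYadj, hYninv⟩ := hY
  have hstab_le : ∀ x : VX, MulAction.stabilizer G x ≤ MulAction.stabilizer G (f x) := by
    intro x g hg
    rw [MulAction.mem_stabilizer_iff] at hg ⊢
    rw [← hfequi g x, hg]
  -- Step 1 : all vertex stabilizers of Y are commensurable
  have hadjcomm : ∀ w w' : VY, Y.Adj w w' →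
      (MulAction.stabilizer G w').relIndex (MulAction.stabilizer G w) ≠ 0 := by
    intro w w' hadj
    apply stab_relIndex_ne_zero_of_orbit_finite
    apply Set.Finite.subset (hYlf w)
    rintro y ⟨k, hk, rfl⟩
    have h1 : Y.Adj (k • w) (k • w') := hYadj k w w' hadj
    rw [MulAction.mem_stabilizer_iff.mp hk] at h1
    exact h1
  have hcomm : ∀ w w' : VY, Subgroup.Commensurable (MulAction.stabilizer G w)
      (MulAction.stabilizer G w') := by
    intro w w'
    obtain ⟨p⟩ := hYtree.isConnected w w'
    induction p with
    | nil => exact Subgroup.Commensurable.refl _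
    | @cons a b c hab q ih =>
        exact Subgroup.Commensurable.trans ⟨hadjcomm b a hab.symm, hadjcomm a b hab⟩ ih
  -- Step 2 : every vertex stabilizer of Y fixes a vertex of X
  have hellip : ∀ w : VY, ∃ c : VX, ∀ k ∈ MulAction.stabilizer G w, k • c = c := by
    intro w
    by_contra hnofix
    -- all stabilizers have no fixed vertex
    have hallnofix : ∀ w' : VY, ¬∃ c : VX, ∀ k ∈ MulAction.stabilizer G w', k • c = c := by
      rintro w' ⟨c, hc⟩
      apply hnofix
      apply exists_fixed_of_finite_orbit hXadj hXninv hXtree (MulAction.stabilizer G w) c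
      apply orbitSet_finite (MulAction.stabilizer G w) c
        (H := MulAction.stabilizer G w' ⊓ MulAction.stabilizer G w)
        (fun h hh => hc h hh.1)
      rw [Subgroup.inf_relIndex_right]
      exact (hcomm w' w).1
    -- canonical minimal subtrees, independent of the vertex
    choose Sfun hSfun using fun w' : VY =>
      exists_isMinSubtree hXadj hXninv hXtree (hYfg w') (hallnofix w')
    have hSeq : ∀ w' w'' : VY, Sfun w' = Sfun w'' := fun w' w'' =>
      minSubtree_eq_of_commensurable hXadj hXninv hXtree (hYfg _) (hYfg _)
        (hallnofix _) (hallnofix _) (hcomm _ _) (hSfun _) (hSfun _)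
    have hGinv : ∀ g : G, ∀ x ∈ Sfun w, g • x ∈ Sfun w := by
      intro g x hx
      have hconj : ∀ y : G, y ∈ MulAction.stabilizer G (g • w) ↔
          g⁻¹ * y * g ∈ MulAction.stabilizer G w := by
        intro y
        rw [MulAction.mem_stabilizer_iff, MulAction.mem_stabilizer_iff, mul_smul, mul_smul]
        constructor
        · intro h
          rw [h, inv_smul_smul]
        · intro h
          calc y • g • w = g • (g⁻¹ • y • g • w) := by rw [smul_inv_smul]
          _ = g • w := by rw [h]
      have himg : IsMinSubtree X (MulAction.stabilizer G (g • w))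
          ((fun z => g • z) '' (Sfun w)) := isMinSubtree_conj hXadj (hSfun w) g hconj
      have heq : ((fun z => g • z) '' (Sfun w)) = Sfun w := by
        rw [isMinSubtree_unique hXadj himg (hSfun (g • w)), hSeq (g • w) w]
      rw [← heq]
      exact ⟨x, hx, rfl⟩
    have huniv : Sfun w = Set.univ :=
      hXmin _ (hSfun w).1.1 (fun g v hv => hGinv g v hv) (hSfun w).1.2.2
    -- the cocompact subtree is everything, so VY is finite
    obtain ⟨x₀⟩ : Nonempty VX := hXtree.isConnected.nonempty
    obtain ⟨P, hx₀P, hZ⟩ :=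
      exists_cocompact_subtree hXadj hXtree (MulAction.stabilizer G w) (hYfg w) x₀
    have hZuniv : ∀ z : VX, ∃ k ∈ MulAction.stabilizer G w, ∃ p ∈ P, k • p = z := by
      have hsub := (hSfun w).2 _ hZ
      intro z
      have hz : z ∈ Sfun w := by rw [huniv]; trivial
      exact hsub hz
    have hVYfin : (Set.univ : Set VY).Finite := by
      have hsub2 : (Set.univ : Set VY) ⊆
          ⋃ p ∈ (P : Set VX), {y : VY | ∃ k ∈ MulAction.stabilizer G w, k • (f p) = y} := by
        intro y _
        obtain ⟨x, rfl⟩ := hfsurj y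
        obtain ⟨k, hk, p, hp, hkp⟩ := hZuniv x
        apply Set.mem_biUnion hp
        refine ⟨k, hk, ?_⟩
        rw [← hkp, hfequi]
      apply Set.Finite.subset _ hsub2
      apply Set.Finite.biUnion P.finite_toSet
      intro p _
      apply orbitSet_finite (MulAction.stabilizer G w) (f p)
        (H := MulAction.stabilizer G (f p) ⊓ MulAction.stabilizer G w)
        (fun h hh => hh.1)
      rw [Subgroup.inf_relIndex_right]
      exact (hcomm (f p) w).1
    haveI : Finite VY := Set.finite_univ_iff.mp hVYfin
    haveI : Nonempty VY := hYtree.isConnected.nonempty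
    obtain ⟨c, hc⟩ := exists_fixed_of_finite_orbit hYadj hYninv hYtree ⊤
      (Classical.arbitrary VY) (Set.toFinite _)
    exact hYnontriv ⟨c, fun g => hc g trivial⟩
  -- Step 3 : the set of vertices with almost-full stabilizer is everything
  set Sstar : Set VX :=
    {x : VX | Subgroup.Commensurable (MulAction.stabilizer G x) (MulAction.stabilizer G (f x))}
    with hSstar
  have hmemS : ∀ x : VX, x ∈ Sstar ↔
      (MulAction.stabilizer G x).relIndex (MulAction.stabilizer G (f x)) ≠ 0 := by
    intro x
    constructor
    · exact fun h => h.1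
    · intro h
      refine ⟨h, ?_⟩
      rw [Subgroup.relIndex_eq_one.mpr (hstab_le x)]
      exact one_ne_zero
  obtain ⟨w1⟩ : Nonempty VY := hYtree.isConnected.nonempty
  obtain ⟨c, hc⟩ := hellip w1
  have hcS : c ∈ Sstar := by
    rw [hmemS]
    have h1 : (MulAction.stabilizer G w1).relIndex (MulAction.stabilizer G (f c)) ≠ 0 :=
      (hcomm w1 (f c)).1
    have h2 : MulAction.stabilizer G w1 ≤ MulAction.stabilizer G c := fun k hk => hc k hk
    intro h0
    have hd := Subgroup.relIndex_dvd_of_le_left (MulAction.stabilizer G (f c)) h2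
    rw [h0] at hd
    exact h1 (zero_dvd_iff.mp hd)
  have hSinv : ∀ g : G, ∀ x ∈ Sstar, g • x ∈ Sstar := by
    intro g x hx
    have e1 : MulAction.stabilizer G (g • x) =
        (MulAction.stabilizer G x).map (MulAut.conj g).toMonoidHom :=
      MulAction.stabilizer_smul_eq_stabilizer_map_conj g x
    have e2 : MulAction.stabilizer G (f (g • x)) =
        (MulAction.stabilizer G (f x)).map (MulAut.conj g).toMonoidHom := by
      rw [hfequi]
      exact MulAction.stabilizer_smul_eq_stabilizer_map_conj g (f x)
    show Subgroup.Commensurable _ _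
    rw [e1, e2, ← conjAct_smul_eq_map, ← conjAct_smul_eq_map,
      ← Subgroup.Commensurable.commensurable_conj]
    exact hx
  have hSconn : (X.induce Sstar).Connected := by
    rw [SimpleGraph.connected_iff]
    refine ⟨?_, ⟨⟨c, hcS⟩⟩⟩
    rintro ⟨x, hx⟩ ⟨x', hx'⟩
    refine reachable_induce_of_walk (tpath hXtree x x') ?_ _ _
    intro z hz
    have hfix : MulAction.stabilizer G x ⊓ MulAction.stabilizer G x' ≤
        MulAction.stabilizer G z := by
      rintro g ⟨hg1, hg2⟩
      exact fix_tpath hXadj hXtree hg1 hg2 z hz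
    have c1 : Subgroup.Commensurable (MulAction.stabilizer G x) (MulAction.stabilizer G (f z)) :=
      hx.trans (hcomm (f x) (f z))
    have c2 : Subgroup.Commensurable (MulAction.stabilizer G x') (MulAction.stabilizer G (f z)) :=
      hx'.trans (hcomm (f x') (f z))
    have c3 : Subgroup.Commensurable (MulAction.stabilizer G x ⊓ MulAction.stabilizer G x')
        (MulAction.stabilizer G x) := by
      constructor
      · rw [Subgroup.inf_relIndex_left]
        exact (c1.trans c2.symm).2
      · rw [Subgroup.relIndex_eq_one.mpr inf_le_left]
        exact one_ne_zero
    have c4 : Subgroup.Commensurable (MulAction.stabilizer G x ⊓ MulAction.stabilizer G x')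
        (MulAction.stabilizer G (f z)) := c3.trans c1
    rw [hmemS]
    intro h0
    have hd := Subgroup.relIndex_dvd_of_le_left (MulAction.stabilizer G (f z)) hfix
    rw [h0] at hd
    exact c4.1 (zero_dvd_iff.mp hd)
  have hSuniv : Sstar = Set.univ := hXmin Sstar ⟨c, hcS⟩ hSinv hSconn
  -- Step 4 : all fibers of f are finite
  have hfib : ∀ w : VY, (f ⁻¹' {w}).Finite := by
    intro w
    have hdecomp : (f ⁻¹' {w}) ⊆ ⋃ q : Quotient (MulAction.orbitRel G VX),
        {x : VX | f x = w ∧ Quotient.mk (MulAction.orbitRel G VX) x = q} := by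
      intro x hx
      exact Set.mem_iUnion.mpr ⟨Quotient.mk _ x, hx, rfl⟩
    apply Set.Finite.subset _ hdecomp
    apply Set.finite_iUnion
    intro q
    by_cases hne : {x : VX | f x = w ∧ Quotient.mk (MulAction.orbitRel G VX) x = q}.Nonempty
    · obtain ⟨x₀, hx₀w, hx₀q⟩ := hne
      have hsub : {x : VX | f x = w ∧ Quotient.mk (MulAction.orbitRel G VX) x = q} ⊆
          {y : VX | ∃ k ∈ MulAction.stabilizer G w, k • x₀ = y} := by
        rintro x ⟨hxw, hxq⟩
        have hrel : (MulAction.orbitRel G VX).r x x₀ := Quotient.exact (hxq.trans hx₀q.symm)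
        rw [MulAction.orbitRel_apply, MulAction.mem_orbit_iff] at hrel
        obtain ⟨g, rfl⟩ := hrel
        refine ⟨g, ?_, rfl⟩
        rw [MulAction.mem_stabilizer_iff]
        have := hfequi g x₀
        rw [hx₀w] at this
        rw [← this, hxw]
      apply Set.Finite.subset _ hsub
      apply orbitSet_finite (MulAction.stabilizer G w) x₀
        (H := MulAction.stabilizer G x₀) (fun h hh => hh)
      have hx₀S : x₀ ∈ Sstar := by rw [hSuniv]; trivial
      rw [hmemS] at hx₀S
      rw [hx₀w] at hx₀S
      exact hx₀S
    · rw [Set.not_nonempty_iff_eq_empty] at hne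
      rw [hne]
      exact Set.finite_empty
  -- Step 5 : local finiteness
  intro v
  have hsub : X.neighborSet v ⊆
      ⋃ w ∈ insert (f v) (Y.neighborSet (f v)), f ⁻¹' {w} := by
    intro u hu
    have := hfsimp v u hu
    rcases this with h | h
    · exact Set.mem_biUnion (Set.mem_insert _ _) (by simp [h.symm])
    · exact Set.mem_biUnion (Set.mem_insert_of_mem _ h) (by simp)
  apply Set.Finite.subset _ hsub
  apply Set.Finite.biUnion ((hYlf (f v)).insert (f v))
  intro w _
  exact hfib w
end

section
/- Let X be a G-tree and let S be a G-invariant subtree of X. Suppose every element of G is elliptic (fixes some vertex) but no vertex of X is fixed by every element of G (G is elliptic at infinity). Then S contains a ray representing the fixed end of G: there exists an injective sequence r : ℕ → V of vertices, all lying in S, with r(n) adjacent to r(n+1) for all n, such that for every g ∈ G there exists N with g • r(n) = r(n) for all n ≥ N. -/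
namespace GTreeProof
open SimpleGraph Walk

variable {V : Type*} {X : SimpleGraph V}

noncomputable def geo (hT : X.IsTree) (u v : V) : X.Walk u v :=
  (hT.existsUnique_path u v).exists.choose

lemma geo_isPath (hT : X.IsTree) (u v : V) : (geo hT u v).IsPath :=
  (hT.existsUnique_path u v).exists.choose_spec

lemma geo_unique (hT : X.IsTree) {u v : V} {p : X.Walk u v} (hp : p.IsPath) :
    p = geo hT u v :=
  (hT.existsUnique_path u v).unique hp (geo_isPath hT u v)

lemma path_length (hT : X.IsTree) {u v : V} {p : X.Walk u v} (hp : p.IsPath) :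
    p.length = X.dist u v := by
  obtain ⟨q, hq, hl⟩ := hT.isConnected.exists_path_of_dist u v
  rw [geo_unique hT hp, ← geo_unique hT hq]; exact hl

lemma geo_length (hT : X.IsTree) (u v : V) : (geo hT u v).length = X.dist u v :=
  path_length hT (geo_isPath hT u v)

/-- `m` lies on the geodesic between `u` and `v`. -/
def Btw (X : SimpleGraph V) (u m v : V) : Prop :=
  X.dist u m + X.dist m v = X.dist u v

lemma btw_self_left (hT : X.IsTree) (u v : V) : Btw X u u v := by
  simp [Btw]

lemma btw_self_right (hT : X.IsTree) (u v : V) : Btw X u v v := by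
  simp [Btw]

lemma Btw.symm (h : Btw X u m v) : Btw X v m u := by
  unfold Btw at *
  rw [dist_comm (u := v) (v := m), dist_comm (u := m) (v := u), dist_comm (u := v) (v := u)]
  omega

lemma btw_of_mem_support (hT : X.IsTree) {u v m : V} (hm : m ∈ (geo hT u v).support) :
    Btw X u m v := by
  classical
  have hsp := (geo hT u v).take_spec hm
  have h1 : ((geo hT u v).takeUntil m hm).IsPath := (geo_isPath hT u v).takeUntil hm
  have h2 : ((geo hT u v).dropUntil m hm).IsPath := (geo_isPath hT u v).dropUntil hm
  have := congrArg Walk.length hsp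
  rw [Walk.length_append, path_length hT h1, path_length hT h2, geo_length hT] at this
  exact this

lemma geo_append_of_btw (hT : X.IsTree) {u m v : V} (h : Btw X u m v) :
    (geo hT u m).append (geo hT m v) = geo hT u v := by
  apply geo_unique
  apply Walk.isPath_of_length_eq_dist
  rw [Walk.length_append, geo_length hT, geo_length hT]
  exact h

lemma mem_support_of_btw (hT : X.IsTree) {u m v : V} (h : Btw X u m v) :
    m ∈ (geo hT u v).support := by
  rw [← geo_append_of_btw hT h]
  exact (Walk.mem_support_append_iff _ _).2 (Or.inl (Walk.end_mem_support _))

lemma eq_of_dist_eq_zero (hT : X.IsTree) {u v : V} (h : X.dist u v = 0) : u = v :=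
  (hT.isConnected.dist_eq_zero_iff).1 h

lemma eq_of_btw_dist (hT : X.IsTree) {u v x y : V} (hx : Btw X u x v) (hy : Btw X u y v)
    (hd : X.dist u x = X.dist u y) : x = y := by
  have hmem : y ∈ (geo hT u v).support := mem_support_of_btw hT hy
  rw [← geo_append_of_btw hT hx] at hmem
  rw [Walk.mem_support_append_iff] at hmem
  rcases hmem with h | h
  · have hb := btw_of_mem_support hT h
    have : X.dist y x = 0 := by unfold Btw at hb; omega
    exact (eq_of_dist_eq_zero hT this).symm
  · have hb := btw_of_mem_support hT h
    unfold Btw at hx hy hb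
    have : X.dist x y = 0 := by omega
    exact eq_of_dist_eq_zero hT this

lemma geo_reverse (hT : X.IsTree) (u v : V) : (geo hT u v).reverse = geo hT v u :=
  geo_unique hT ((geo_isPath hT u v).reverse)

lemma btw_of_support_inter (hT : X.IsTree) {u m v : V}
    (h : ∀ x ∈ (geo hT u m).support, x ∈ (geo hT m v).support → x = m) :
    Btw X u m v := by
  have hpath : ((geo hT u m).append (geo hT m v)).IsPath := by
    rw [Walk.isPath_def, Walk.support_append]
    have h1 : (geo hT u m).support.Nodup := (geo_isPath hT u m).2
    have h2 : ((geo hT m v).support).Nodup := (geo_isPath hT m v).2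
    have hcons : (geo hT m v).support = m :: (geo hT m v).support.tail :=
      Walk.support_eq_cons _
    have h2' : ((geo hT m v).support.tail).Nodup ∧ m ∉ (geo hT m v).support.tail := by
      rw [hcons, List.nodup_cons] at h2
      exact ⟨h2.2, h2.1⟩
    refine List.Nodup.append h1 h2'.1 ?_
    intro x hx hx'
    have : x ∈ (geo hT m v).support := by rw [hcons]; exact List.mem_cons_of_mem _ hx'
    have := h x hx this
    subst this
    exact h2'.2 hx'
  have := geo_unique hT hpath
  have hlen := congrArg Walk.length this
  rw [Walk.length_append, geo_length hT, geo_length hT, geo_length hT] at hlen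
  exact hlen


lemma dist_getVert_le (hT : X.IsTree) {u v : V} (p : X.Walk u v) (i : ℕ) :
    X.dist u (p.getVert i) ≤ i := by
  induction p generalizing i with
  | nil => simp [Walk.getVert, SimpleGraph.dist_self]
  | @cons a b c hadj q ih =>
    cases i with
    | zero => simp [Walk.getVert]
    | succ j =>
      rw [Walk.getVert_cons_succ]
      calc X.dist a (q.getVert j) ≤ X.dist a b + X.dist b (q.getVert j) :=
            hT.isConnected.dist_triangle
        _ ≤ 1 + j := by
            have : X.dist a b ≤ 1 := by
              simpa using X.dist_le (Walk.cons hadj Walk.nil)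
            have := ih j
            omega
        _ = j + 1 := by omega

lemma dist_getVert_le' (hT : X.IsTree) {u v : V} (p : X.Walk u v) {i : ℕ}
    (hi : i ≤ p.length) : X.dist (p.getVert i) v ≤ p.length - i := by
  have h1 : p.reverse.getVert (p.length - i) = p.getVert i := by
    rw [Walk.getVert_reverse, Nat.sub_sub_self hi]
  rw [SimpleGraph.dist_comm, ← h1]
  exact dist_getVert_le hT p.reverse _

lemma geo_getVert_dist (hT : X.IsTree) {u v : V} {i : ℕ} (hi : i ≤ X.dist u v) :
    X.dist u ((geo hT u v).getVert i) = i ∧ Btw X u ((geo hT u v).getVert i) v := by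
  set x := (geo hT u v).getVert i with hx
  have hL : (geo hT u v).length = X.dist u v := geo_length hT u v
  have h1 : X.dist u x ≤ i := dist_getVert_le hT _ i
  have h2 : X.dist x v ≤ X.dist u v - i := by
    have := dist_getVert_le' hT (geo hT u v) (i := i) (by omega)
    rwa [hL] at this
  have h3 : X.dist u v ≤ X.dist u x + X.dist x v := hT.isConnected.dist_triangle
  constructor
  · omega
  · unfold Btw; omega

section Hom

variable (f : X →g X)

lemma dist_hom (hT : X.IsTree) (hf : Function.Injective f) (u v : V) :
    X.dist (f u) (f v) = X.dist u v := by
  have hp : ((geo hT u v).map f).IsPath :=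
    Walk.map_isPath_of_injective hf (geo_isPath hT u v)
  have := path_length hT hp
  rw [Walk.length_map, geo_length hT] at this
  exact this.symm

lemma geo_hom (hT : X.IsTree) (hf : Function.Injective f) (u v : V) :
    (geo hT u v).map f = geo hT (f u) (f v) :=
  geo_unique hT (Walk.map_isPath_of_injective hf (geo_isPath hT u v))

lemma btw_hom (hT : X.IsTree) (hf : Function.Injective f) {u m v : V} (h : Btw X u m v) :
    Btw X (f u) (f m) (f v) := by
  unfold Btw at *
  rw [dist_hom f hT hf, dist_hom f hT hf, dist_hom f hT hf]
  exact h

end Hom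

/-- Convex subset of the tree. -/
def Conv (X : SimpleGraph V) (C : Set V) : Prop :=
  ∀ ⦃a⦄, a ∈ C → ∀ ⦃b⦄, b ∈ C → ∀ ⦃x⦄, Btw X a x b → x ∈ C

lemma Conv.inter {C D : Set V} (hC : Conv X C) (hD : Conv X D) : Conv X (C ∩ D) :=
  fun _ ha _ hb _ hx => ⟨hC ha.1 hb.1 hx, hD ha.2 hb.2 hx⟩

lemma conv_fix (hT : X.IsTree) (f : X →g X) (hf : Function.Injective f) :
    Conv X {v | f v = v} := by
  intro a ha b hb x hx
  have hb1 : Btw X a (f x) b := by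
    have := btw_hom f hT hf hx
    rwa [ha, hb] at this
  have hd : X.dist a (f x) = X.dist a x := by
    conv_lhs => rw [← ha]
    exact dist_hom f hT hf a x
  exact eq_of_btw_dist hT hb1 hx hd

/-- Gate / projection onto a convex nonempty set. -/
lemma exists_proj (hT : X.IsTree) {C : Set V} (hC : Conv X C) (hne : C.Nonempty) (s : V) :
    ∃ p ∈ C, ∀ c ∈ C, Btw X s p c := by
  classical
  have hA : ((fun c => X.dist s c) '' C).Nonempty := hne.image _
  obtain ⟨p, hpC, hpd⟩ := Nat.sInf_mem hA
  refine ⟨p, hpC, fun c hc => ?_⟩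
  apply btw_of_support_inter hT
  intro x hx1 hx2
  have hb1 : Btw X s x p := btw_of_mem_support hT hx1
  have hb2 : Btw X p x c := btw_of_mem_support hT hx2
  have hxC : x ∈ C := hC hpC hc hb2
  have hpd' : X.dist s p = sInf ((fun c => X.dist s c) '' C) := hpd
  have hmin : X.dist s p ≤ X.dist s x := by
    rw [hpd']; exact Nat.sInf_le ⟨x, hxC, rfl⟩
  have : X.dist x p = 0 := by unfold Btw at hb1; omega
  exact eq_of_dist_eq_zero hT this


lemma btw_trans (hT : X.IsTree) {u x q e : V} (h1 : Btw X u x q) (h2 : Btw X u q e) :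
    Btw X u x e := by
  have t1 : X.dist x e ≤ X.dist x q + X.dist q e := hT.isConnected.dist_triangle
  have t2 : X.dist u e ≤ X.dist u x + X.dist x e := hT.isConnected.dist_triangle
  unfold Btw at *
  omega

lemma btw_order (hT : X.IsTree) {v0 a b e : V} (ha : Btw X v0 a e) (hb : Btw X v0 b e)
    (hd : X.dist v0 a ≤ X.dist v0 b) : Btw X a b e := by
  have hmem : a ∈ (geo hT v0 e).support := mem_support_of_btw hT ha
  rw [← geo_append_of_btw hT hb, Walk.mem_support_append_iff] at hmem
  rcases hmem with h | h
  · have h1 : Btw X v0 a b := btw_of_mem_support hT h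
    have t1 : X.dist a e ≤ X.dist a b + X.dist b e := hT.isConnected.dist_triangle
    have t2 : X.dist v0 e ≤ X.dist v0 a + X.dist a e := hT.isConnected.dist_triangle
    unfold Btw at *
    omega
  · have h1 : Btw X b a e := btw_of_mem_support hT h
    have : X.dist b a = 0 := by unfold Btw at *; omega
    have hab : b = a := eq_of_dist_eq_zero hT this
    subst hab
    have : X.dist b b = 0 := by simp [SimpleGraph.dist_self]
    unfold Btw; omega

/-- Midpoint lemma: the projection of `s` onto the fixed-point set of an automorphism `f`
lies between `s` and `f s`. -/
lemma midpt (hT : X.IsTree) (f : X →g X) (hf : Function.Injective f) {p s : V}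
    (hp : f p = p) (hmin : ∀ x, f x = x → X.dist s p ≤ X.dist s x) :
    Btw X s p (f s) := by
  apply btw_of_support_inter hT
  intro x hx1 hx2
  -- geo p (f s) is the image of geo p s under f
  have hgeo : (geo hT p (f s)) = ((geo hT p s).map f).copy hp rfl := by
    symm
    apply geo_unique
    rw [Walk.isPath_copy]
    exact Walk.map_isPath_of_injective hf (geo_isPath hT p s)
  rw [hgeo, Walk.support_copy, Walk.support_map] at hx2
  obtain ⟨y, hy, hxy⟩ := List.mem_map.1 hx2
  have hy' : y ∈ (geo hT s p).support := by
    have h0 : y ∈ ((geo hT p s).reverse).support := by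
      rw [Walk.support_reverse]; exact List.mem_reverse.2 hy
    rwa [geo_reverse] at h0
  have hbx : Btw X s x p := btw_of_mem_support hT hx1
  have hby : Btw X s y p := btw_of_mem_support hT hy'
  have hdx : X.dist p x = X.dist p y := by
    calc X.dist p x = X.dist (f p) (f y) := by rw [hxy, hp]
      _ = X.dist p y := dist_hom f hT hf p y
  have hdsx : X.dist s x = X.dist s y := by
    unfold Btw at hbx hby
    rw [SimpleGraph.dist_comm (v := x), SimpleGraph.dist_comm (v := y)] at hdx
    omega
  have hxeqy : x = y := eq_of_btw_dist hT hbx hby hdsx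
  have hfix : f x = x := by rw [hxeqy] at hxy ⊢; exact hxy
  have hmin' := hmin x hfix
  have : X.dist x p = 0 := by unfold Btw at hbx; omega
  exact eq_of_dist_eq_zero hT this


lemma gate_min (hT : X.IsTree) {s p c : V} (h : Btw X s p c) : X.dist s p ≤ X.dist s c := by
  unfold Btw at h; omega

/-- Two automorphisms with fixed points whose composite also has a fixed point
have a common fixed point. -/
lemma fix_inter (hT : X.IsTree) (f f' : X →g X) (hf : Function.Injective f)
    (hf' : Function.Injective f') (hfix : ∃ v, f v = v) (hfix' : ∃ v, f' v = v)
    (hmix : ∃ v, f (f' v) = v) : ∃ p, f p = p ∧ f' p = p := by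
  classical
  set A : Set ℕ := {n | ∃ p q, f p = p ∧ f' q = q ∧ X.dist p q = n} with hA
  have hAne : A.Nonempty := ⟨_, hfix.choose, hfix'.choose, hfix.choose_spec,
    hfix'.choose_spec, rfl⟩
  obtain ⟨p, q, hp, hq, hk⟩ := Nat.sInf_mem hAne
  have hpairmin : ∀ x y, f x = x → f' y = y → X.dist p q ≤ X.dist x y := by
    intro x y hx hy
    rw [hk]; exact Nat.sInf_le ⟨x, y, hx, hy, rfl⟩
  -- p is between q and f q
  have hb1 : Btw X q p (f q) := by
    apply midpt hT f hf hp
    intro x hx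
    rw [SimpleGraph.dist_comm, SimpleGraph.dist_comm (u := q)]
    exact hpairmin x q hx hq
  have hdpq : X.dist p (f q) = X.dist p q := by
    calc X.dist p (f q) = X.dist (f p) (f q) := by rw [hp]
      _ = X.dist p q := dist_hom f hT hf p q
  -- the composite
  set c : X →g X := f.comp f' with hc
  have hcinj : Function.Injective c := hf.comp hf'
  have hcq : c q = f q := by show f (f' q) = f q; rw [hq]
  have hCc : Conv X {v | c v = v} := conv_fix hT c hcinj
  obtain ⟨m, hm, hgate⟩ := exists_proj hT hCc hmix q
  have hm' : c m = m := hm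
  have hmmin : ∀ x, c x = x → X.dist q m ≤ X.dist q x := fun x hx => gate_min hT (hgate x hx)
  have hb2 : Btw X q m (c q) := midpt hT c hcinj hm' hmmin
  rw [hcq] at hb2
  have hdm : X.dist m (f q) = X.dist q m := by
    calc X.dist m (f q) = X.dist (c m) (c q) := by rw [hm', hcq]
      _ = X.dist m q := dist_hom c hT hcinj m q
      _ = X.dist q m := SimpleGraph.dist_comm
  have hcomm : X.dist p q = X.dist q p := SimpleGraph.dist_comm
  have hdq : X.dist q m = X.dist q p := by unfold Btw at hb1 hb2; omega
  have hmp : m = p := eq_of_btw_dist hT hb2 hb1 hdq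
  rw [hmp] at hm'
  refine ⟨p, hp, hf ?_⟩
  show f (f' p) = f p
  rw [hp]
  exact hm'


lemma exists_median (hT : X.IsTree) (u v w : V) :
    ∃ m, Btw X u m v ∧ Btw X u m w ∧ Btw X v m w := by
  classical
  have hAne : ((fun x => X.dist u x) '' {x | x ∈ (geo hT v w).support}).Nonempty :=
    ⟨X.dist u v, v, Walk.start_mem_support _, rfl⟩
  obtain ⟨m, hmS, hmd⟩ := Nat.sInf_mem hAne
  have hmd' : X.dist u m = sInf ((fun x => X.dist u x) '' {x | x ∈ (geo hT v w).support}) := hmd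
  have hmS' : m ∈ (geo hT v w).support := hmS
  have hbvw : Btw X v m w := btw_of_mem_support hT hmS'
  have hmin : ∀ x ∈ (geo hT v w).support, X.dist u m ≤ X.dist u x := by
    intro x hx
    rw [hmd']; exact Nat.sInf_le ⟨x, hx, rfl⟩
  have key : ∀ z : V, m ∈ (geo hT z w).support ∨ m ∈ (geo hT v z).support →
      True := fun _ _ => trivial
  have hmv : Btw X u m v := by
    apply btw_of_support_inter hT
    intro x hx1 hx2
    have hb1 : Btw X u x m := btw_of_mem_support hT hx1
    have hxvw : x ∈ (geo hT v w).support := by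
      rw [← geo_append_of_btw hT hbvw]
      apply (Walk.mem_support_append_iff _ _).2
      left
      have h0 : x ∈ ((geo hT m v).reverse).support := by
        rw [Walk.support_reverse]; exact List.mem_reverse.2 hx2
      rwa [geo_reverse] at h0
    have := hmin x hxvw
    have : X.dist x m = 0 := by unfold Btw at hb1; omega
    exact eq_of_dist_eq_zero hT this
  have hmw : Btw X u m w := by
    apply btw_of_support_inter hT
    intro x hx1 hx2
    have hb1 : Btw X u x m := btw_of_mem_support hT hx1
    have hxvw : x ∈ (geo hT v w).support := by
      rw [← geo_append_of_btw hT hbvw]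
      exact (Walk.mem_support_append_iff _ _).2 (Or.inr hx2)
    have := hmin x hxvw
    have : X.dist x m = 0 := by unfold Btw at hb1; omega
    exact eq_of_dist_eq_zero hT this
  exact ⟨m, hmv, hmw, hbvw⟩


end GTreeProof

open GTreeProof

/-- If every element of `G` is elliptic on the `G`-tree `X` but no vertex is fixed by all
of `G` (i.e. `G` is elliptic at infinity), then any `G`-invariant subtree `S` contains a
ray representing the fixed end of `G`: a ray all of whose vertices lie in `S` such that
every `g ∈ G` fixes a tail of the ray pointwise. -/
theorem invariant_subtree_contains_fixed_end
    (G : Type*) [Group G] (V : Type*) [MulAction G V] (X : SimpleGraph V)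
    (hX : IsGTree G X)
    (S : Set V) (hSne : S.Nonempty)
    (hSinv : ∀ (g : G), ∀ v ∈ S, g • v ∈ S)
    (hSconn : (X.induce S).Connected)
    -- every element of G is elliptic
    (hell : ∀ g : G, ∃ v : V, g • v = v)
    -- no vertex of X is fixed by every element of G
    (hnofix : ¬ ∃ v : V, ∀ g : G, g • v = v) :
    ∃ r : ℕ → V, Function.Injective r ∧ (∀ n : ℕ, X.Adj (r n) (r (n + 1))) ∧
      (∀ n : ℕ, r n ∈ S) ∧
      (∀ g : G, ∃ N : ℕ, ∀ n ≥ N, g • r n = r n) := by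
  classical
  have hT : X.IsTree := hX.isTree
  -- the automorphism associated to a group element
  set fg : G → (X →g X) := fun g => ⟨fun v => g • v, fun {a b} h => hX.adj_smul g a b h⟩
    with hfg
  have hinj : ∀ g : G, Function.Injective ⇑(fg g) := fun g => MulAction.injective g
  -- S is convex
  have hConvS : Conv X S := by
    intro u hu v hv x hx
    obtain ⟨w'⟩ := hSconn.preconnected ⟨u, hu⟩ ⟨v, hv⟩
    let w : X.Walk u v := w'.map (SimpleGraph.Embedding.induce S).toHom
    have hsupp : ∀ y ∈ w.support, y ∈ S := by
      intro y hy
      replace hy : y ∈ w'.support.map (SimpleGraph.Embedding.induce (G := X) S).toHom := by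
        rw [← SimpleGraph.Walk.support_map]; exact hy
      obtain ⟨a, _, rfl⟩ := List.mem_map.1 hy
      exact a.2
    have hgeo : geo hT u v = w.bypass := (geo_unique hT w.bypass_isPath).symm
    have hxmem : x ∈ (geo hT u v).support := mem_support_of_btw hT hx
    rw [hgeo] at hxmem
    exact hsupp x (w.support_bypass_subset hxmem)
  have hConvFix : ∀ g : G, Conv X {v | g • v = v} := fun g => conv_fix hT (fg g) (hinj g)
  -- S meets every fixed-point set
  have hbase : ∀ g : G, (S ∩ {v | g • v = v}).Nonempty := by
    intro g
    obtain ⟨s0, hs0⟩ := hSne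
    obtain ⟨p, hp, hgate⟩ := exists_proj hT (hConvFix g) (hell g) s0
    have hp' : g • p = p := hp
    have hbtw : Btw X s0 p (g • s0) := by
      apply midpt hT (fg g) (hinj g) hp'
      exact fun x hx => gate_min hT (hgate x hx)
    exact ⟨p, hConvS hs0 (hSinv g s0 hs0) hbtw, hp'⟩
  -- the 3-Helly step
  have step : ∀ C : Set V, Conv X C → (∀ h : G, (C ∩ {v | h • v = v}).Nonempty) →
      ∀ g h : G, ((C ∩ {v | g • v = v}) ∩ {v | h • v = v}).Nonempty := by
    intro C hC hCfix g h
    obtain ⟨a, haC, hag⟩ := hCfix g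
    obtain ⟨b, hbC, hbh⟩ := hCfix h
    obtain ⟨c, hcg, hch⟩ := fix_inter hT (fg g) (fg h) (hinj g) (hinj h) (hell g) (hell h)
      (by obtain ⟨v, hv⟩ := hell (g * h); exact ⟨v, by
            show g • h • v = v; rw [← mul_smul]; exact hv⟩)
    obtain ⟨m, hmab, hmac, hmbc⟩ := exists_median hT a b c
    exact ⟨m, ⟨hC haC hbC hmab, hConvFix g hag hcg hmac⟩, hConvFix h hbh hch hmbc⟩
  -- the fixed-point sets of finite subsets, intersected with S
  set CF : Finset G → Set V := fun F => S ∩ {v | ∀ g ∈ F, g • v = v} with hCF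
  have hCFprop : ∀ F : Finset G, Conv X (CF F) ∧ (CF F).Nonempty ∧
      (∀ h : G, (CF F ∩ {v | h • v = v}).Nonempty) := by
    intro F
    induction F using Finset.induction_on with
    | empty =>
      have hE : CF ∅ = S := by ext x; simp [hCF]
      rw [hE]
      exact ⟨hConvS, hSne, hbase⟩
    | @insert a F ha ih =>
      have hI : CF (insert a F) = CF F ∩ {v | a • v = v} := by
        ext x; simp only [hCF, Set.mem_inter_iff, Set.mem_setOf_eq, Finset.mem_insert]
        constructor
        · rintro ⟨h1, h2⟩; exact ⟨⟨h1, fun g hg => h2 g (Or.inr hg)⟩, h2 a (Or.inl rfl)⟩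
        · rintro ⟨⟨h1, h2⟩, h3⟩
          exact ⟨h1, fun g hg => hg.elim (fun e => e ▸ h3) (h2 g)⟩
      rw [hI]
      exact ⟨ih.1.inter (hConvFix a), ih.2.2 a, step (CF F) ih.1 ih.2.2 a⟩
  have hCFanti : ∀ {F F' : Finset G}, F ⊆ F' → CF F' ⊆ CF F := by
    intro F F' hFF x hx
    exact ⟨hx.1, fun g hg => hx.2 g (hFF hg)⟩
  -- the basepoint
  obtain ⟨v0, hv0⟩ := hSne
  -- projections of v0 onto the CF F
  have hPex : ∀ F : Finset G, ∃ p, p ∈ CF F ∧ ∀ c ∈ CF F, Btw X v0 p c :=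
    fun F => exists_proj hT (hCFprop F).1 (hCFprop F).2.1 v0
  choose P hPmem hPgate using hPex
  -- distances are unbounded
  have hub : ∀ n : ℕ, ∃ F : Finset G, n ≤ X.dist v0 (P F) := by
    by_contra hcon
    push_neg at hcon
    obtain ⟨n, hn⟩ := hcon
    set A : Set ℕ := Set.range (fun F => X.dist v0 (P F)) with hA
    have hAne : A.Nonempty := ⟨_, ∅, rfl⟩
    have hAbdd : BddAbove A := ⟨n, by rintro _ ⟨F, rfl⟩; exact (hn F).le⟩
    obtain ⟨F0, hF0⟩ := Nat.sSup_mem hAne hAbdd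
    apply hnofix
    refine ⟨P F0, fun g => ?_⟩
    set F1 := insert g F0 with hF1
    have hsub : CF F1 ⊆ CF F0 := hCFanti (Finset.subset_insert g F0)
    have hbtw : Btw X v0 (P F0) (P F1) := hPgate F0 (P F1) (hsub (hPmem F1))
    have hF0' : X.dist v0 (P F0) = sSup A := hF0
    have hle : X.dist v0 (P F1) ≤ X.dist v0 (P F0) := by
      rw [hF0']
      exact le_csSup hAbdd ⟨F1, rfl⟩
    have h0 : X.dist (P F0) (P F1) = 0 := by unfold GTreeProof.Btw at hbtw; omega
    have heq : P F0 = P F1 := eq_of_dist_eq_zero hT h0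
    have : g • P F1 = P F1 := (hPmem F1).2 g (Finset.mem_insert_self g F0)
    rw [heq]; exact this
  choose F hF using hub
  set Gn : ℕ → Finset G := fun n => (Finset.range (n + 1)).biUnion F with hGn
  have hGnmono : ∀ {m n : ℕ}, m ≤ n → Gn m ⊆ Gn n := by
    intro m n hmn
    exact Finset.biUnion_subset_biUnion_of_subset_left F
      (Finset.range_subset_range.2 (by omega))
  set q : ℕ → V := fun n => P (Gn n) with hq
  have hbtwq : ∀ {m n : ℕ}, m ≤ n → Btw X v0 (q m) (q n) := by
    intro m n hmn
    exact hPgate (Gn m) (q n) (hCFanti (hGnmono hmn) (hPmem (Gn n)))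
  have hLn : ∀ n : ℕ, n ≤ X.dist v0 (q n) := by
    intro n
    have h1 : F n ⊆ Gn n := Finset.subset_biUnion_of_mem F (Finset.mem_range.2 (by omega))
    have h2 : Btw X v0 (P (F n)) (q n) := hPgate (F n) (q n) (hCFanti h1 (hPmem (Gn n)))
    have := gate_min hT h2
    have := hF n
    omega
  -- the ray
  set r : ℕ → V := fun n => (geo hT v0 (q n)).getVert n with hr
  have hdr : ∀ n : ℕ, X.dist v0 (r n) = n ∧ Btw X v0 (r n) (q n) :=
    fun n => geo_getVert_dist hT (hLn n)
  have hstab : ∀ {n m : ℕ}, n ≤ m → (geo hT v0 (q m)).getVert n = r n := by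
    intro n m hnm
    rw [← geo_append_of_btw hT (hbtwq hnm), SimpleGraph.Walk.getVert_append]
    have hlen : (geo hT v0 (q n)).length = X.dist v0 (q n) := geo_length hT v0 (q n)
    rcases Nat.lt_or_ge n (geo hT v0 (q n)).length with h | h
    · simp [h, hr]
    · have hn : n = (geo hT v0 (q n)).length := by have := hLn n; omega
      rw [if_neg (by omega)]
      have h1 : n - (geo hT v0 (q n)).length = 0 := by omega
      rw [h1, SimpleGraph.Walk.getVert_zero]
      exact (SimpleGraph.Walk.getVert_of_length_le _ h).symm
  refine ⟨r, ?_, ?_, ?_, ?_⟩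
  · intro a b hab
    have h1 := (hdr a).1
    have h2 := (hdr b).1
    rw [hab] at h1
    omega
  · intro n
    have h1 : r n = (geo hT v0 (q (n + 1))).getVert n := (hstab (by omega)).symm
    have h2 : r (n + 1) = (geo hT v0 (q (n + 1))).getVert (n + 1) :=
      (hstab (le_refl (n + 1))).symm
    rw [h1, h2]
    apply SimpleGraph.Walk.adj_getVert_succ
    have := hLn (n + 1)
    have hlen : (geo hT v0 (q (n + 1))).length = X.dist v0 (q (n + 1)) :=
      geo_length hT v0 (q (n + 1))
    omega
  · intro n
    exact hConvS hv0 (hPmem (Gn n)).1 (hdr n).2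
  · intro g
    obtain ⟨pg, hpgmem, hpggate⟩ := exists_proj hT (hConvS.inter (hConvFix g)) (hbase g) v0
    refine ⟨X.dist v0 pg, fun n hn => ?_⟩
    set e : V := P (insert g (Gn n)) with he
    have he1 : e ∈ CF (Gn n) := hCFanti (Finset.subset_insert g (Gn n))
      (hPmem (insert g (Gn n)))
    have he2 : e ∈ S ∩ {v | g • v = v} :=
      ⟨(hPmem (insert g (Gn n))).1,
        (hPmem (insert g (Gn n))).2 g (Finset.mem_insert_self g (Gn n))⟩
    have hbe1 : Btw X v0 (q n) e := hPgate (Gn n) e he1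
    have hbe2 : Btw X v0 pg e := hpggate e he2
    have hbre : Btw X v0 (r n) e := btw_trans hT (hdr n).2 hbe1
    have hord : Btw X pg (r n) e := by
      apply btw_order hT hbe2 hbre
      rw [(hdr n).1]
      exact hn
    exact ((hConvS.inter (hConvFix g)) hpgmem he2 hord).2
end

section
/- Let X be a G-tree and let S be a G-invariant subtree of X. If g ∈ G is hyperbolic (fixes no vertex of X), then the axis of g is contained in S: every vertex v such that dist(v, g • v) ≤ dist(w, g • w) for all vertices w belongs to S. In particular, S contains the union of the axes of all hyperbolic elements of G. -/
open SimpleGraph Walk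

section TreeLemmas

variable {V : Type*} {X : SimpleGraph V}

private lemma dist_getVert_add_le (hconn : X.Connected) {a b : V} (p : X.Walk a b) (i n : ℕ) :
    X.dist (p.getVert i) (p.getVert (i + n)) ≤ n := by
  induction n with
  | zero => simp
  | succ n ih =>
    have tri := hconn.dist_triangle (u := p.getVert i) (v := p.getVert (i + n))
      (w := p.getVert (i + n + 1))
    have hle : X.dist (p.getVert (i + n)) (p.getVert (i + n + 1)) ≤ 1 := by
      rcases lt_or_ge (i + n) p.length with h | h
      · exact le_of_eq (dist_eq_one_iff_adj.2 (p.adj_getVert_succ h))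
      · rw [p.getVert_of_length_le h, p.getVert_of_length_le (by omega)]
        simp [SimpleGraph.dist_self]
    show X.dist (p.getVert i) (p.getVert (i + n + 1)) ≤ n + 1
    omega

private lemma exists_concat_of_length_pos {u v : V} (q : X.Walk u v) (h : 0 < q.length) :
    ∃ (x : V) (r : X.Walk u x) (hadj : X.Adj x v), q = r.concat hadj := by
  cases q with
  | nil => simp at h
  | cons h' q' =>
    obtain ⟨x, r, h2, he⟩ := exists_cons_eq_concat h' q'
    exact ⟨x, r, h2, he⟩

private lemma isPath_concat_rev {u x v : V} {r : X.Walk u x} {h : X.Adj x v}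
    (hp : (r.concat h).IsPath) : r.IsPath ∧ v ∉ r.support := by
  rw [← isPath_reverse_iff, reverse_concat, cons_isPath_iff, isPath_reverse_iff] at hp
  simpa [support_reverse] using hp

private lemma dist_ne_of_adj (ht : X.IsTree) (v : V) {a b : V} (hab : X.Adj a b) :
    X.dist v a ≠ X.dist v b := by
  classical
  have hconn := ht.isConnected
  intro h
  obtain ⟨P, hP⟩ := (hconn v a).exists_walk_length_eq_dist
  have hPp : P.IsPath := P.isPath_of_length_eq_dist hP
  by_cases hb : b ∈ P.support
  · have hsplit := congrArg Walk.length (P.take_spec hb)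
    rw [length_append] at hsplit
    have h1 : X.dist v b ≤ (P.takeUntil b hb).length := X.dist_le _
    have h2 : X.dist b a ≤ (P.dropUntil b hb).length := X.dist_le _
    have h3 : X.dist b a = 1 := dist_eq_one_iff_adj.2 hab.symm
    omega
  · have hQ : (P.concat hab).IsPath := by
      rw [← isPath_reverse_iff, reverse_concat, cons_isPath_iff, isPath_reverse_iff]
      refine ⟨hPp, ?_⟩
      simpa [support_reverse] using hb
    obtain ⟨R, hR⟩ := (hconn v b).exists_walk_length_eq_dist
    have hRp : R.IsPath := R.isPath_of_length_eq_dist hR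
    have heq := ht.IsAcyclic.path_unique ⟨P.concat hab, hQ⟩ ⟨R, hRp⟩
    have hlen : (P.concat hab).length = R.length := by
      rw [Subtype.ext_iff] at heq
      exact congrArg Walk.length heq
    rw [length_concat] at hlen
    omega

private lemma eq_getVert_of_between (ht : X.IsTree) {a b x : V} (p : X.Walk a b) (hp : p.IsPath)
    (hx : X.dist a x + X.dist x b = X.dist a b) : x = p.getVert (X.dist a x) := by
  have hconn := ht.isConnected
  obtain ⟨q1, h1⟩ := (hconn a x).exists_walk_length_eq_dist
  obtain ⟨q2, h2⟩ := (hconn x b).exists_walk_length_eq_dist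
  have hlen : (q1.append q2).length = X.dist a b := by rw [length_append, h1, h2, hx]
  have hq : (q1.append q2).IsPath := (q1.append q2).isPath_of_length_eq_dist hlen
  have hpq : p = q1.append q2 := by
    have heq := ht.IsAcyclic.path_unique ⟨p, hp⟩ ⟨q1.append q2, hq⟩
    rw [Subtype.ext_iff] at heq
    exact heq
  rw [hpq, getVert_append, if_neg (by omega : ¬ X.dist a x < q1.length)]
  have hz : X.dist a x - q1.length = 0 := by omega
  rw [hz, getVert_zero]

private lemma between_unique (ht : X.IsTree) {a b x y : V}
    (hx : X.dist a x + X.dist x b = X.dist a b)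
    (hy : X.dist a y + X.dist y b = X.dist a b)
    (hxy : X.dist a x = X.dist a y) : x = y := by
  obtain ⟨p, hp⟩ := (ht.isConnected a b).exists_walk_length_eq_dist
  have hpp := p.isPath_of_length_eq_dist hp
  rw [eq_getVert_of_between ht p hpp hx, eq_getVert_of_between ht p hpp hy, hxy]

private lemma gate_aux (ht : X.IsTree) {S : Set V} (v w : V)
    (hmin : ∀ s ∈ S, X.dist v w ≤ X.dist v s) :
    ∀ (n : ℕ) (s : V), s ∈ S → ∀ (q : X.Walk w s), q.length = n → q.IsPath →
      (∀ u ∈ q.support, u ∈ S) → X.dist v s = X.dist v w + q.length := by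
  have hconn := ht.isConnected
  intro n
  induction n using Nat.strong_induction_on with
  | _ n IH =>
  intro s hsS q hql hqp hqsup
  rcases Nat.eq_zero_or_pos n with rfl | hn
  · have hws : w = s := q.eq_of_length_eq_zero hql
    subst hws
    rw [hql]
    omega
  · obtain ⟨x, r, hadj, rfl⟩ := exists_concat_of_length_pos q (by omega)
    obtain ⟨hrp, hsr⟩ := isPath_concat_rev hqp
    have hrsup : ∀ u ∈ r.support, u ∈ S := fun u hu => hqsup u (by
      rw [support_concat]
      exact List.mem_append_left _ hu)
    have hxS : x ∈ S := hrsup x r.end_mem_support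
    rw [length_concat] at hql
    have hx : X.dist v x = X.dist v w + r.length :=
      IH r.length (by omega) x hxS r rfl hrp hrsup
    have hxs1 : X.dist x s = 1 := dist_eq_one_iff_adj.2 hadj
    have hsx1 : X.dist s x = 1 := by rw [X.dist_comm]; exact hxs1
    have hne := dist_ne_of_adj ht v hadj
    have tri1 : X.dist v s ≤ X.dist v x + X.dist x s := hconn.dist_triangle
    have tri2 : X.dist v x ≤ X.dist v s + X.dist s x := hconn.dist_triangle
    have hcases : X.dist v s = X.dist v x + 1 ∨ X.dist v s + 1 = X.dist v x := by omega
    rcases hcases with hcase | hcase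
    · rw [length_concat]
      omega
    · rcases Nat.eq_zero_or_pos r.length with hr0 | hrpos
      · have hwx : w = x := r.eq_of_length_eq_zero hr0
        subst hwx
        have := hmin s hsS
        omega
      · obtain ⟨y, r2, hadj2, rfl⟩ := exists_concat_of_length_pos r hrpos
        rw [length_concat] at hql
        obtain ⟨hr2p, hxr2⟩ := isPath_concat_rev hrp
        have hr2sup : ∀ u ∈ r2.support, u ∈ S := fun u hu => hrsup u (by
          rw [support_concat]
          exact List.mem_append_left _ hu)
        have hyS : y ∈ S := hr2sup y r2.end_mem_support
        rw [length_concat] at hx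
        have hy : X.dist v y = X.dist v w + r2.length :=
          IH r2.length (by omega) y hyS r2 rfl hr2p hr2sup
        have hyx1 : X.dist y x = 1 := dist_eq_one_iff_adj.2 hadj2
        have hsy : s = y := between_unique ht (a := v) (b := x)
          (by omega : X.dist v s + X.dist s x = X.dist v x)
          (by omega : X.dist v y + X.dist y x = X.dist v x)
          (by omega : X.dist v s = X.dist v y)
        subst hsy
        exact absurd (by
          rw [support_concat]
          exact List.mem_append_left _ r2.end_mem_support) hsr

private lemma exists_gate (ht : X.IsTree) {S : Set V} (hSne : S.Nonempty)
    (hSconn : (X.induce S).Connected) (v : V) :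
    ∃ w ∈ S, ∀ s ∈ S, X.dist v s = X.dist v w + X.dist w s := by
  classical
  have hconn := ht.isConnected
  obtain ⟨s0, hs0⟩ := hSne
  have hDne : {n | ∃ s ∈ S, X.dist v s = n}.Nonempty := ⟨X.dist v s0, s0, hs0, rfl⟩
  obtain ⟨w, hwS, hwd⟩ := Nat.sInf_mem hDne
  have hmin : ∀ s ∈ S, X.dist v w ≤ X.dist v s := by
    intro s hs
    rw [hwd]
    exact Nat.sInf_le ⟨s, hs, rfl⟩
  refine ⟨w, hwS, fun s hs => ?_⟩
  obtain ⟨p0⟩ := hSconn.preconnected ⟨w, hwS⟩ ⟨s, hs⟩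
  have hp1 : p0.bypass.IsPath := p0.bypass_isPath
  let p : X.Walk w s := p0.bypass.map (Embedding.induce S).toHom
  have hp : p.IsPath :=
    Walk.map_isPath_of_injective (by exact Subtype.val_injective) hp1
  have hsup : ∀ u ∈ p.support, u ∈ S := by
    intro u hu
    rw [show p.support = _ from Walk.support_map _ _] at hu
    obtain ⟨⟨u', hu'⟩, _, rfl⟩ := List.mem_map.1 hu
    exact hu'
  have key := gate_aux ht v w hmin p.length s hs p rfl hp hsup
  have h1 : X.dist w s ≤ p.length := X.dist_le p
  have h2 : X.dist v s ≤ X.dist v w + X.dist w s := hconn.dist_triangle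
  omega

end TreeLemmas

/-- If `g ∈ G` is hyperbolic on the `G`-tree `X` (fixes no vertex), then any `G`-invariant
subtree `S` contains the axis of `g`: every vertex minimizing `v ↦ dist(v, g • v)` lies
in `S`. In particular, `S` contains the union of the axes of all hyperbolic elements. -/
theorem invariant_subtree_contains_axes
    (G : Type*) [Group G] (V : Type*) [MulAction G V] (X : SimpleGraph V)
    (hX : IsGTree G X)
    (S : Set V) (hSne : S.Nonempty)
    (hSinv : ∀ (g : G), ∀ v ∈ S, g • v ∈ S)
    (hSconn : (X.induce S).Connected)
    (g : G) (hg : ∀ v : V, g • v ≠ v) :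
    ∀ v : V, (∀ w : V, X.dist v (g • v) ≤ X.dist w (g • w)) → v ∈ S := by
  intro v hmin
  by_contra hv
  have ht := hX.isTree
  have hconn := ht.isConnected
  have hiso : ∀ (h : G) (a b : V), X.dist (h • a) (h • b) = X.dist a b := by
    have hle : ∀ (h : G) (a b : V), X.dist (h • a) (h • b) ≤ X.dist a b := by
      intro h a b
      obtain ⟨p, hp⟩ := (hconn a b).exists_walk_length_eq_dist
      have := X.dist_le (p.map ⟨(h • ·), fun hadj => hX.adj_smul h _ _ hadj⟩)
      rwa [Walk.length_map, hp] at this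
    intro h a b
    refine le_antisymm (hle h a b) ?_
    have := hle h⁻¹ (h • a) (h • b)
    simpa [inv_smul_smul] using this
  obtain ⟨w, hwS, hgate⟩ := exists_gate ht hSne hSconn v
  have hvw : v ≠ w := fun h => hv (h ▸ hwS)
  have hdpos : 0 < X.dist v w := hconn.pos_dist_of_ne hvw
  have hLpos : 0 < X.dist v (g • v) := hconn.pos_dist_of_ne (Ne.symm (hg v))
  have hgwS : g • w ∈ S := hSinv g w hwS
  have e1 : X.dist v (g • w) = X.dist v w + X.dist w (g • w) := hgate _ hgwS
  have hML : X.dist w (g • w) = X.dist v (g • v) := by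
    have h1 := hmin w
    have tri : X.dist v (g • w) ≤ X.dist v (g • v) + X.dist (g • v) (g • w) :=
      hconn.dist_triangle
    have h2 : X.dist (g • v) (g • w) = X.dist v w := hiso g v w
    omega
  have e2 : X.dist (g • v) w = X.dist v w + X.dist v (g • v) := by
    have h1 : g⁻¹ • w ∈ S := hSinv g⁻¹ w hwS
    have h2 : X.dist v (g⁻¹ • w) = X.dist v w + X.dist w (g⁻¹ • w) := hgate _ h1
    have h3 : X.dist (g • v) w = X.dist v (g⁻¹ • w) := by
      have := hiso g⁻¹ (g • v) w
      simpa [inv_smul_smul] using this.symm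
    have h4 : X.dist (g • w) (g • (g⁻¹ • w)) = X.dist w (g⁻¹ • w) := hiso g w (g⁻¹ • w)
    rw [smul_inv_smul] at h4
    have h5 : X.dist (g • w) w = X.dist w (g • w) := X.dist_comm
    omega
  have hwgv : X.dist w (g • v) = X.dist v w + X.dist v (g • v) := by
    rw [X.dist_comm]; exact e2
  obtain ⟨P, hP⟩ := (hconn w (g • v)).exists_walk_length_eq_dist
  have hPp := P.isPath_of_length_eq_dist hP
  have hdw : X.dist w v = X.dist v w := X.dist_comm
  have hbv : X.dist w v + X.dist v (g • v) = X.dist w (g • v) := by omega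
  have hgwgv : X.dist (g • w) (g • v) = X.dist v w := by
    rw [hiso g w v]; exact X.dist_comm
  have hbgw : X.dist w (g • w) + X.dist (g • w) (g • v) = X.dist w (g • v) := by omega
  have hv_eq : v = P.getVert (X.dist v w) := by
    have := eq_getVert_of_between ht P hPp hbv
    rwa [hdw] at this
  have hgw_eq : g • w = P.getVert (X.dist v (g • v)) := by
    have := eq_getVert_of_between ht P hPp hbgw
    rwa [hML] at this
  rcases le_total (X.dist v w) (X.dist v (g • v)) with hdl | hld
  · have hb := dist_getVert_add_le hconn P (X.dist v w) (X.dist v (g • v) - X.dist v w)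
    rw [Nat.add_sub_cancel' hdl, ← hv_eq, ← hgw_eq] at hb
    omega
  · have hb := dist_getVert_add_le hconn P (X.dist v (g • v)) (X.dist v w - X.dist v (g • v))
    rw [Nat.add_sub_cancel' hld, ← hgw_eq, ← hv_eq] at hb
    rw [X.dist_comm] at hb
    omega
end
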